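/- arXiv:2212.10757 — 5 statements merged into one kernel-verified Lean document; each statement's English description precedes it below -/
import Mathlib

section
/- Two signed graphs (G, σ) and (G, σ') on the same underlying graph G are inversing equivalent if and only if they have the same set of negative edge-cuts. -/
open Finset

attribute [local instance] Classical.propDecidable

/-- A finite multigraph without loops: each edge has an unordered pair of
distinct endpoints. -/
structure Multigraph (V : Type) (E : Type) where
  ends : E → Sym2 V
  noLoop : ∀ e, ¬ (ends e).IsDiag

variable {V E : Type}

/-- `D` is an orientation of `G`: each edge `e` is directed from `(D e).1` to
`(D e).2`, and these are the two endpoints of `e`. -/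
def IsOrientation (G : Multigraph V E) (D : E → V × V) : Prop :=
  ∀ e, s((D e).1, (D e).2) = G.ends e

/-- Sum of `f` over the arcs leaving `v` (out-arcs at `v`). -/
noncomputable def outSum [Fintype E] {R : Type} [AddCommMonoid R]
    (D : E → V × V) (f : E → R) (v : V) : R :=
  ∑ e ∈ univ.filter (fun e => (D e).1 = v), f e

/-- Sum of `f` over the arcs entering `v` (in-arcs at `v`). -/
noncomputable def inSum [Fintype E] {R : Type} [AddCommMonoid R]
    (D : E → V × V) (f : E → R) (v : V) : R :=
  ∑ e ∈ univ.filter (fun e => (D e).2 = v), f e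

/-- A circular `r`-flow in the signed graph `(G, σ)` (positive edges are those
with `σ e = true`). -/
def IsCircularFlow [Fintype E] (G : Multigraph V E) (σ : E → Bool) (r : ℝ)
    (D : E → V × V) (f : E → ℝ) : Prop :=
  IsOrientation G D ∧
  (∀ e, |f e| < r) ∧
  (∀ e, σ e = true → 1 ≤ |f e| ∧ |f e| ≤ r - 1) ∧
  (∀ e, σ e = false → |f e| ≤ r / 2 - 1 ∨ r / 2 + 1 ≤ |f e|) ∧
  (∀ v, outSum D f v = inSum D f v)

/-- The number of edges of `F` incident to `v` (the degree of `v` in the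
subgraph with edge set `F`). -/
noncomputable def degIn [Fintype E] (G : Multigraph V E) (F : Finset E) (v : V) : ℕ :=
  (F.filter (fun e => v ∈ G.ends e)).card

/-- The set of negative edges of the signature `σ`. -/
noncomputable def negEdges (E : Type) [Fintype E] (σ : E → Bool) : Finset E :=
  univ.filter (fun e => σ e = false)

/-- The set of positive edges of the signature `σ`. -/
noncomputable def posEdges (E : Type) [Fintype E] (σ : E → Bool) : Finset E :=
  univ.filter (fun e => σ e = true)

/-- Two signatures on `G` are inversing equivalent iff one is obtained from the
other by inversing on a sequence of cycles; equivalently, the symmetric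
difference of their negative edge sets induces an even-degree subgraph. -/
def InversingEquiv [Fintype E] (G : Multigraph V E) (σ σ' : E → Bool) : Prop :=
  ∀ v, Even (degIn G (symmDiff (negEdges E σ) (negEdges E σ')) v)

/-- The edge-cut determined by `X` is negative in `(G, σ)`: it contains an odd
number of negative edges. -/
def IsNegativeCut [Fintype E] (G : Multigraph V E) (σ : E → Bool) (X : Set V) : Prop :=
  Odd ((univ.filter (fun e =>
    σ e = false ∧ ∃ u w : V, G.ends e = s(u, w) ∧ u ∈ X ∧ w ∉ X)).card)


section Aux

variable [Fintype E]

lemma exists_ends (z : Sym2 V) : ∃ a b : V, z = s(a, b) := by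
  induction z using Sym2.ind with
  | _ a b => exact ⟨a, b, rfl⟩

lemma ends_ne {G : Multigraph V E} {e : E} {a b : V} (hab : G.ends e = s(a, b)) : a ≠ b := by
  intro h
  exact G.noLoop e (by rw [hab, h]; exact Sym2.isDiag_iff_proj_eq.mpr rfl)

/-- The set of edges crossing the cut determined by `X`. -/
noncomputable def crossE (G : Multigraph V E) (X : Set V) : Finset E :=
  univ.filter (fun e => ∃ u w : V, G.ends e = s(u, w) ∧ u ∈ X ∧ w ∉ X)

lemma mem_crossE_iff {G : Multigraph V E} {X : Set V} {e : E} {a b : V}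
    (hab : G.ends e = s(a, b)) :
    e ∈ crossE G X ↔ ((a ∈ X ∧ b ∉ X) ∨ (b ∈ X ∧ a ∉ X)) := by
  simp only [crossE, mem_filter, mem_univ, true_and, hab]
  constructor
  · rintro ⟨u, w, huw, hu, hw⟩
    rw [Sym2.eq_iff] at huw
    rcases huw with ⟨rfl, rfl⟩ | ⟨rfl, rfl⟩
    · exact Or.inl ⟨hu, hw⟩
    · exact Or.inr ⟨hu, hw⟩
  · rintro (⟨ha, hb⟩ | ⟨hb, ha⟩)
    · exact ⟨a, b, rfl, ha, hb⟩
    · exact ⟨b, a, Sym2.eq_swap, hb, ha⟩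

lemma isNegativeCut_iff (G : Multigraph V E) (σ : E → Bool) (X : Set V) :
    IsNegativeCut G σ X ↔ Odd ((negEdges E σ ∩ crossE G X).card) := by
  unfold IsNegativeCut negEdges crossE
  rw [← filter_and]

lemma natCast_zmod_two (n : ℕ) : (n : ZMod 2) = 0 ↔ Even n :=
  (ZMod.natCast_eq_zero_iff n 2).trans even_iff_two_dvd.symm

lemma card_symmDiff_parity (A B : Finset E) :
    (symmDiff A B).card + 2 * (A ∩ B).card = A.card + B.card := by
  have h2 : Disjoint (symmDiff A B) (A ∩ B) := disjoint_symmDiff_inf A B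
  have h1 : ((symmDiff A B) ∪ (A ∩ B)).card = (symmDiff A B).card + (A ∩ B).card :=
    card_union_of_disjoint h2
  have h4 : (symmDiff A B) ∪ (A ∩ B) = A ∪ B := symmDiff_sup_inf A B
  rw [h4] at h1
  have h3 := Finset.card_union_add_card_inter A B
  omega

lemma even_symmDiff_card_iff (A B : Finset E) :
    Even ((symmDiff A B).card) ↔ (Odd A.card ↔ Odd B.card) := by
  have h := card_symmDiff_parity A B
  rw [Nat.even_iff, Nat.odd_iff, Nat.odd_iff]
  omega

/-- per-edge counting lemma -/
lemma card_endpoints_in (G : Multigraph V E) (S : Finset V) (e : E) :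
    ((S.filter (· ∈ G.ends e)).card : ZMod 2)
      = if e ∈ crossE G (↑S : Set V) then 1 else 0 := by
  obtain ⟨a, b, hab⟩ := exists_ends (G.ends e)
  have hne : a ≠ b := ends_ne hab
  have hmem : ∀ v : V, v ∈ G.ends e ↔ v = a ∨ v = b := by
    intro v; rw [hab]; exact Sym2.mem_iff
  have hcross : e ∈ crossE G (↑S : Set V) ↔ ((a ∈ S ∧ b ∉ S) ∨ (b ∈ S ∧ a ∉ S)) := by
    rw [mem_crossE_iff hab]; simp
  by_cases ha : a ∈ S <;> by_cases hb : b ∈ S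
  · have hf : S.filter (· ∈ G.ends e) = {a, b} := by
      ext v
      simp only [mem_filter, hmem, mem_insert, mem_singleton]
      constructor
      · rintro ⟨_, h⟩; exact h
      · rintro (rfl | rfl)
        · exact ⟨ha, Or.inl rfl⟩
        · exact ⟨hb, Or.inr rfl⟩
    rw [hf, card_pair hne, if_neg (by rw [hcross]; tauto)]
    decide
  · have hf : S.filter (· ∈ G.ends e) = {a} := by
      ext v
      simp only [mem_filter, hmem, mem_singleton]
      constructor
      · rintro ⟨hv, rfl | rfl⟩
        · rfl
        · exact absurd hv hb
      · rintro rfl; exact ⟨ha, Or.inl rfl⟩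
    rw [hf, card_singleton, if_pos (by rw [hcross]; tauto)]
    rfl
  · have hf : S.filter (· ∈ G.ends e) = {b} := by
      ext v
      simp only [mem_filter, hmem, mem_singleton]
      constructor
      · rintro ⟨hv, rfl | rfl⟩
        · exact absurd hv ha
        · rfl
      · rintro rfl; exact ⟨hb, Or.inr rfl⟩
    rw [hf, card_singleton, if_pos (by rw [hcross]; tauto)]
    rfl
  · have hf : S.filter (· ∈ G.ends e) = ∅ := by
      ext v
      simp only [mem_filter, hmem, notMem_empty, iff_false]
      rintro ⟨hv, rfl | rfl⟩ <;> tauto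
    rw [hf, card_empty, if_neg (by rw [hcross]; tauto)]
    rfl

lemma even_card_inter_crossE (G : Multigraph V E) (F : Finset E)
    (hEven : ∀ v, Even (degIn G F v)) (X : Set V) :
    Even ((F ∩ crossE G X).card) := by
  classical
  have hrep : ∀ e : E, ∃ p : V × V, G.ends e = s(p.1, p.2) := by
    intro e
    obtain ⟨a, b, hab⟩ := exists_ends (G.ends e)
    exact ⟨(a, b), hab⟩
  choose p hp using hrep
  set S : Finset V :=
    ((F.image (fun e => (p e).1)) ∪ (F.image (fun e => (p e).2))).filter (fun v => v ∈ X)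
    with hS
  have hSmem : ∀ e ∈ F, ∀ v ∈ G.ends e, (v ∈ S ↔ v ∈ X) := by
    intro e he v hv
    rw [hp e, Sym2.mem_iff] at hv
    simp only [hS, mem_filter, mem_union, mem_image]
    refine ⟨fun h => h.2, fun h => ⟨?_, h⟩⟩
    rcases hv with rfl | rfl
    · exact Or.inl ⟨e, he, rfl⟩
    · exact Or.inr ⟨e, he, rfl⟩
  have hXS : F ∩ crossE G X = F ∩ crossE G (↑S : Set V) := by
    ext e
    simp only [mem_inter]
    constructor <;> rintro ⟨he, hc⟩ <;> refine ⟨he, ?_⟩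
    all_goals {
      obtain ⟨a, b, hab⟩ := exists_ends (G.ends e)
      have haX := hSmem e he a (by rw [hab]; exact Sym2.mem_mk_left a b)
      have hbX := hSmem e he b (by rw [hab]; exact Sym2.mem_mk_right a b)
      rw [mem_crossE_iff hab] at hc ⊢
      simp only [Finset.mem_coe] at hc ⊢
      tauto }
  rw [hXS, ← natCast_zmod_two]
  have key : ((F ∩ crossE G (↑S : Set V)).card : ZMod 2)
      = ∑ v ∈ S, ((degIn G F v : ℕ) : ZMod 2) := by
    rw [← Finset.filter_mem_eq_inter, Finset.card_filter]
    push_cast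
    calc (∑ e ∈ F, if e ∈ crossE G (↑S : Set V) then (1 : ZMod 2) else 0)
        = ∑ e ∈ F, ((S.filter (· ∈ G.ends e)).card : ZMod 2) := by
          refine Finset.sum_congr rfl fun e _ => ?_
          rw [card_endpoints_in]
      _ = ∑ e ∈ F, ∑ v ∈ S, (if v ∈ G.ends e then (1 : ZMod 2) else 0) := by
          refine Finset.sum_congr rfl fun e _ => ?_
          rw [Finset.card_filter]; push_cast; rfl
      _ = ∑ v ∈ S, ∑ e ∈ F, (if v ∈ G.ends e then (1 : ZMod 2) else 0) :=
          Finset.sum_comm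
      _ = ∑ v ∈ S, ((degIn G F v : ℕ) : ZMod 2) := by
          refine Finset.sum_congr rfl fun v _ => ?_
          rw [degIn, Finset.card_filter]; push_cast; rfl
  rw [key]
  exact Finset.sum_eq_zero fun v _ => (natCast_zmod_two _).mpr (hEven v)

lemma mem_cross_singleton (G : Multigraph V E) (e : E) (v : V) :
    e ∈ crossE G ({v} : Set V) ↔ v ∈ G.ends e := by
  obtain ⟨a, b, hab⟩ := exists_ends (G.ends e)
  have hne : a ≠ b := ends_ne hab
  rw [mem_crossE_iff hab, hab, Sym2.mem_iff]
  simp only [Set.mem_singleton_iff]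
  constructor
  · rintro (⟨rfl, -⟩ | ⟨rfl, -⟩)
    · exact Or.inl rfl
    · exact Or.inr rfl
  · rintro (rfl | rfl)
    · exact Or.inl ⟨rfl, fun h => hne h.symm⟩
    · exact Or.inr ⟨rfl, hne⟩
  
lemma degIn_eq_card_cross (G : Multigraph V E) (F : Finset E) (v : V) :
    degIn G F v = (F ∩ crossE G ({v} : Set V)).card := by
  unfold degIn
  rw [← Finset.filter_mem_eq_inter]
  refine congrArg Finset.card ?_
  ext e
  simp only [mem_filter, mem_cross_singleton]

end Aux

/-- Two signed graphs on the same underlying graph are inversing equivalent iff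
they have the same set of negative edge-cuts. -/
theorem inversingEquiv_iff_same_negative_cuts [Fintype E] (G : Multigraph V E)
    (σ σ' : E → Bool) :
    InversingEquiv G σ σ' ↔
      ∀ X : Set V, (IsNegativeCut G σ X ↔ IsNegativeCut G σ' X) := by
  have hdist : ∀ X : Set V,
      symmDiff (negEdges E σ) (negEdges E σ') ∩ crossE G X
        = symmDiff (negEdges E σ ∩ crossE G X) (negEdges E σ' ∩ crossE G X) :=
    fun X => inf_symmDiff_distrib_right _ _ _
  constructor
  · intro h X
    rw [isNegativeCut_iff, isNegativeCut_iff, ← even_symmDiff_card_iff, ← hdist]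
    exact even_card_inter_crossE G _ h X
  · intro h v
    have h1 := h ({v} : Set V)
    rw [isNegativeCut_iff, isNegativeCut_iff] at h1
    rw [degIn_eq_card_cross, hdist, even_symmDiff_card_iff]
    exact h1
end

section
/- Let (G, σ) be a signed graph and suppose (D, f) is a circular modulo r-flow in (G, σ). Let (G, σ') be obtained from (G, σ) by inversing on a cycle C, and define f'(e) = f(e) - r/2 (mod r) for e ∈ E(C), f'(e) = f(e) otherwise. Then (D, f') is a circular modulo r-flow in (G, σ'). In particular, the circular flow index is invariant under the inversing operation. -/
open Finset

attribute [local instance] Classical.propDecidable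

variable {V E : Type}

/-- A circular modulo `r`-flow in `(G, σ)`: values in `[0, r)`, in `[1, r-1]`
on positive edges, in `[0, r/2-1] ∪ [r/2+1, r)` on negative edges, and
conservation modulo `r` (the net flow at every vertex is an integer multiple
of `r`). -/
def IsCircModFlow [Fintype E] (G : Multigraph V E) (σ : E → Bool) (r : ℝ)
    (D : E → V × V) (f : E → ℝ) : Prop :=
  IsOrientation G D ∧
  (∀ e, 0 ≤ f e ∧ f e < r) ∧
  (∀ e, σ e = true → 1 ≤ f e ∧ f e ≤ r - 1) ∧
  (∀ e, σ e = false → f e ≤ r / 2 - 1 ∨ r / 2 + 1 ≤ f e) ∧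
  (∀ v, ∃ n : ℤ, outSum D f v - inSum D f v = n * r)

/-- `C` is (the edge set of) a cycle of `G`: nonempty, every vertex has degree
`0` or `2` in it, and the vertices it meets are pairwise connected through it. -/
def IsCycleSet [Fintype E] (G : Multigraph V E) (C : Finset E) : Prop :=
  C.Nonempty ∧
  (∀ v, (C.filter (fun e => v ∈ G.ends e)).card = 0 ∨
        (C.filter (fun e => v ∈ G.ends e)).card = 2) ∧
  (∀ u v : V, 0 < (C.filter (fun e => u ∈ G.ends e)).card →
      0 < (C.filter (fun e => v ∈ G.ends e)).card →
      Relation.ReflTransGen (fun a b => ∃ e ∈ C, G.ends e = s(a, b)) u v)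

/-- Inversing on a cycle `C` and shifting the flow values on `C` by `r/2`
(modulo `r`) preserves the circular modulo `r`-flow property. -/
theorem circModFlow_inversing_cycle [Fintype E] (G : Multigraph V E)
    (σ : E → Bool) (r : ℝ) (D : E → V × V) (f : E → ℝ)
    (hf : IsCircModFlow G σ r D f) (C : Finset E) (hC : IsCycleSet G C) :
    IsCircModFlow G (fun e => if e ∈ C then !σ e else σ e) r D
      (fun e => if e ∈ C then
          (if r / 2 ≤ f e then f e - r / 2 else f e + r / 2)
        else f e) := by
  obtain ⟨hD, hrange, hpos, hneg, hcons⟩ := hf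
  refine ⟨hD, ?_, ?_, ?_, ?_⟩
  · intro e
    have h := hrange e
    by_cases hc : e ∈ C
    · simp only [hc, if_true]
      split_ifs with h2 <;> exact ⟨by linarith, by linarith⟩
    · simpa [hc] using h
  · intro e he
    by_cases hc : e ∈ C
    · simp only [hc, if_true] at he ⊢
      have hσ : σ e = false := by
        cases hσ : σ e <;> simp [hσ] at he ⊢
      have h := hneg e hσ
      have hr := hrange e
      split_ifs with h2 <;> rcases h with h | h <;> exact ⟨by linarith, by linarith⟩
    · simp only [hc, if_false] at he ⊢
      exact hpos e he
  · intro e he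
    by_cases hc : e ∈ C
    · simp only [hc, if_true] at he ⊢
      have hσ : σ e = true := by
        cases hσ : σ e <;> simp [hσ] at he ⊢
      obtain ⟨h1, h2⟩ := hpos e hσ
      have hr := hrange e
      split_ifs with h3
      · left; linarith
      · right; linarith
    · simp only [hc, if_false] at he ⊢
      exact hneg e he
  · intro v
    obtain ⟨n, hn⟩ := hcons v
    set g : E → ℤ := fun e => if e ∈ C then (if r / 2 ≤ f e then -1 else 1) else 0 with hg
    have hpt : ∀ e, (if e ∈ C then (if r / 2 ≤ f e then f e - r / 2 else f e + r / 2) else f e)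
        = f e + (g e : ℝ) * (r / 2) := by
      intro e
      simp only [hg]
      split_ifs <;> push_cast <;> ring
    set A : Finset E := univ.filter (fun e => (D e).1 = v) with hA
    set B : Finset E := univ.filter (fun e => (D e).2 = v) with hB
    have hout : outSum D (fun e => if e ∈ C then (if r / 2 ≤ f e then f e - r / 2 else f e + r / 2) else f e) v
        = outSum D f v + ((∑ e ∈ A, g e : ℤ) : ℝ) * (r / 2) := by
      unfold outSum
      push_cast
      rw [Finset.sum_mul, ← Finset.sum_add_distrib]
      exact Finset.sum_congr rfl (fun e _ => hpt e)
    have hin : inSum D (fun e => if e ∈ C then (if r / 2 ≤ f e then f e - r / 2 else f e + r / 2) else f e) v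
        = inSum D f v + ((∑ e ∈ B, g e : ℤ) : ℝ) * (r / 2) := by
      unfold inSum
      push_cast
      rw [Finset.sum_mul, ← Finset.sum_add_distrib]
      exact Finset.sum_congr rfl (fun e _ => hpt e)
    set k : ℤ := (∑ e ∈ A, g e) - ∑ e ∈ B, g e with hk
    have hcast : ∀ s : Finset E, ((∑ e ∈ s, g e : ℤ) : ZMod 2)
        = ((s.filter (fun e => e ∈ C)).card : ZMod 2) := by
      intro s
      push_cast
      rw [← Finset.sum_boole]
      refine Finset.sum_congr rfl (fun e _ => ?_)
      simp only [hg]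
      split_ifs <;> push_cast <;> decide
    have hdisj : Disjoint (A.filter (fun e => e ∈ C)) (B.filter (fun e => e ∈ C)) := by
      rw [Finset.disjoint_left]
      intro e he1 he2
      simp only [hA, hB, Finset.mem_filter, Finset.mem_univ, true_and] at he1 he2
      apply G.noLoop e
      rw [← hD e, he1.1, he2.1]
      exact Sym2.mk_isDiag_iff.mpr rfl
    have hunion : A.filter (fun e => e ∈ C) ∪ B.filter (fun e => e ∈ C)
        = C.filter (fun e => v ∈ G.ends e) := by
      ext e
      simp only [Finset.mem_union, Finset.mem_filter, hA, hB, Finset.mem_univ, true_and]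
      constructor
      · rintro (⟨h1, hc⟩ | ⟨h1, hc⟩) <;> refine ⟨hc, ?_⟩ <;> rw [← hD e] <;>
          simp [Sym2.mem_iff, h1]
      · rintro ⟨hc, hv⟩
        rw [← hD e, Sym2.mem_iff] at hv
        rcases hv with hv | hv
        · exact Or.inl ⟨hv.symm, hc⟩
        · exact Or.inr ⟨hv.symm, hc⟩
    have hcards : (A.filter (fun e => e ∈ C)).card + (B.filter (fun e => e ∈ C)).card
        = (C.filter (fun e => v ∈ G.ends e)).card := by
      rw [← Finset.card_union_of_disjoint hdisj, hunion]
    have hk2 : (k : ZMod 2) = 0 := by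
      have : (k : ZMod 2) = ((∑ e ∈ A, g e : ℤ) : ZMod 2) - ((∑ e ∈ B, g e : ℤ) : ZMod 2) := by
        rw [hk]; push_cast; ring
      rw [this, hcast A, hcast B, CharTwo.sub_eq_add, ← Nat.cast_add, hcards]
      rcases hC.2.1 v with h | h <;> rw [h] <;> decide
    have hdvd : (2 : ℤ) ∣ k := (ZMod.intCast_zmod_eq_zero_iff_dvd k 2).mp hk2
    obtain ⟨m, hm⟩ := hdvd
    refine ⟨n + m, ?_⟩
    rw [hout, hin]
    have h3 : ((∑ e ∈ A, g e : ℤ) : ℝ) - ((∑ e ∈ B, g e : ℤ) : ℝ) = 2 * (m : ℝ) := by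
      have : (∑ e ∈ A, g e) - (∑ e ∈ B, g e) = 2 * m := by rw [← hk]; exact hm
      exact_mod_cast this
    push_cast at h3 hn ⊢
    linear_combination hn + (r / 2) * h3
end

section
/- For every finite signed graph (G, σ) with no positive bridge, the circular flow index Φ_c(G, σ) equals the minimum of p/q over all pairs (p, q) with 1 ≤ 2q ≤ p ≤ 2|E(G)| such that (G, σ) admits a circular (p/q)-flow. In particular, Φ_c(G, σ) is a rational number. -/
open Finset

attribute [local instance] Classical.propDecidable

variable {V E : Type}

/-- `e₀` is a bridge of `G`: its endpoints are not connected in `G - e₀`. -/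
def IsBridge (G : Multigraph V E) (e₀ : E) : Prop :=
  ∀ u v : V, G.ends e₀ = s(u, v) →
    ¬ Relation.ReflTransGen (fun a b => ∃ e, e ≠ e₀ ∧ G.ends e = s(a, b)) u v

/-- The circular flow index of a signed graph: the infimum of the `r ≥ 2` for
which `(G, σ)` admits a circular `r`-flow. -/
noncomputable def circFlowIndex [Fintype E] (G : Multigraph V E)
    (σ : E → Bool) : ℝ :=
  sInf {r : ℝ | 2 ≤ r ∧ ∃ (D : E → V × V) (f : E → ℝ), IsCircularFlow G σ r D f}

namespace CFI
set_option linter.unusedSectionVars false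

variable {V E : Type} [Fintype E]

/-- canonical tail of an edge -/
noncomputable def tl (G : Multigraph V E) (e : E) : V := (Quot.out (G.ends e)).1
/-- canonical head of an edge -/
noncomputable def hd (G : Multigraph V E) (e : E) : V := (Quot.out (G.ends e)).2

lemma ends_eq (G : Multigraph V E) (e : E) : s(tl G e, hd G e) = G.ends e := by
  rw [tl, hd]
  exact Quot.out_eq (G.ends e)

lemma tl_ne_hd (G : Multigraph V E) (e : E) : tl G e ≠ hd G e := by
  intro h
  apply G.noLoop e
  rw [← ends_eq G e]
  rw [Sym2.mk_isDiag_iff]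
  exact h

/-- boundary operator: in-sum minus out-sum -/
noncomputable def bd {R : Type} [AddCommGroup R] (G : Multigraph V E) (g : E → R) (v : V) : R :=
  (∑ e ∈ univ.filter (fun e => hd G e = v), g e)
    - ∑ e ∈ univ.filter (fun e => tl G e = v), g e

variable {R : Type} [AddCommGroup R] (G : Multigraph V E)

lemma bd_add (g g' : E → R) (v : V) :
    bd G (g + g') v = bd G g v + bd G g' v := by
  simp only [bd, Pi.add_apply, Finset.sum_add_distrib]; abel

lemma bd_neg (g : E → R) (v : V) : bd G (-g) v = - bd G g v := by
  simp only [bd, Pi.neg_apply, Finset.sum_neg_distrib]; abel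

lemma bd_sub (g g' : E → R) (v : V) :
    bd G (g - g') v = bd G g v - bd G g' v := by
  simp only [bd, Pi.sub_apply, Finset.sum_sub_distrib]; abel

lemma bd_smul (n : ℤ) (g : E → ℤ) (v : V) :
    bd G (fun e => n * g e) v = n * bd G g v := by
  simp only [bd, mul_sub, Finset.mul_sum]

lemma bd_cast (g : E → ℤ) (v : V) :
    bd G (fun e => (g e : ℝ)) v = ((bd G g v : ℤ) : ℝ) := by
  simp only [bd]
  push_cast
  ring

/-- unit flow along one edge -/
noncomputable def unit (e₀ : E) : E → ℤ := fun e => if e = e₀ then 1 else 0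

lemma sum_filter_unit (e₀ : E) (P : E → Prop) :
    ∑ e ∈ univ.filter (fun e => P e), unit e₀ e = if P e₀ then 1 else 0 := by
  rw [Finset.sum_filter]
  rw [Finset.sum_eq_single e₀]
  · simp [unit]
  · intro b _ hb
    simp [unit, hb]
  · intro h; exact absurd (Finset.mem_univ e₀) h

lemma bd_unit (e₀ : E) (v : V) :
    bd G (unit e₀) v = (if hd G e₀ = v then 1 else 0) - (if tl G e₀ = v then 1 else 0) := by
  rw [bd, sum_filter_unit, sum_filter_unit]

/-- cut-sum identity -/
lemma cut_sum (g : E → R) (U : Finset V) :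
    ∑ v ∈ U, bd G g v =
      (∑ e ∈ univ.filter (fun e => hd G e ∈ U ∧ tl G e ∉ U), g e)
        - ∑ e ∈ univ.filter (fun e => tl G e ∈ U ∧ hd G e ∉ U), g e := by
  have key : ∀ t : E → V,
      ∑ v ∈ U, ∑ e ∈ univ.filter (fun e => t e = v), g e
        = ∑ e ∈ univ.filter (fun e => t e ∈ U), g e := by
    intro t
    simp only [Finset.sum_filter]
    rw [Finset.sum_comm]
    congr 1
    ext e
    rw [Finset.sum_ite_eq U (t e) (fun _ => g e)]
  have h1 : ∑ v ∈ U, bd G g v =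
      (∑ e ∈ univ.filter (fun e => hd G e ∈ U), g e)
        - ∑ e ∈ univ.filter (fun e => tl G e ∈ U), g e := by
    simp only [bd, Finset.sum_sub_distrib, key]
  rw [h1]
  have split : ∀ t s : E → V,
      ∑ e ∈ univ.filter (fun e => t e ∈ U), g e
        = (∑ e ∈ univ.filter (fun e => t e ∈ U ∧ s e ∈ U), g e)
          + ∑ e ∈ univ.filter (fun e => t e ∈ U ∧ s e ∉ U), g e := by
    intro t s
    rw [← Finset.sum_union]
    · congr 1
      ext e
      simp only [Finset.mem_filter, Finset.mem_union, Finset.mem_univ, true_and]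
      tauto
    · rw [Finset.disjoint_left]
      intro e he he'
      simp only [Finset.mem_filter, Finset.mem_univ, true_and] at he he'
      exact he'.2 he.2
  rw [split (hd G) (tl G), split (tl G) (hd G)]
  have comm : (univ.filter (fun e => hd G e ∈ U ∧ tl G e ∈ U))
      = univ.filter (fun e => tl G e ∈ U ∧ hd G e ∈ U) := by
    ext e; simp only [Finset.mem_filter]; tauto
  rw [comm]
  abel


/-! ### Path flows -/

/-- adjacency via available edges, with separate forward/backward usability -/
def adj (G : Multigraph V E) (Fwd Bwd : E → Prop) (s : Finset E) (a b : V) : Prop :=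
  ∃ e ∈ s, (Fwd e ∧ tl G e = a ∧ hd G e = b) ∨ (Bwd e ∧ hd G e = a ∧ tl G e = b)

lemma adj_mono (Fwd Bwd : E → Prop) {s t : Finset E} (hst : s ⊆ t) {a b : V}
    (h : adj G Fwd Bwd s a b) : adj G Fwd Bwd t a b := by
  obtain ⟨e, he, h'⟩ := h
  exact ⟨e, hst he, h'⟩

lemma reach_erase (Fwd Bwd : E → Prop) (s : Finset E) (e₁ : E) {x v : V}
    (h : Relation.ReflTransGen (adj G Fwd Bwd s) x v) :
    Relation.ReflTransGen (adj G Fwd Bwd (s.erase e₁)) x v ∨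
    Relation.ReflTransGen (adj G Fwd Bwd (s.erase e₁)) (tl G e₁) v ∨
    Relation.ReflTransGen (adj G Fwd Bwd (s.erase e₁)) (hd G e₁) v := by
  induction h using Relation.ReflTransGen.head_induction_on with
  | refl => exact Or.inl Relation.ReflTransGen.refl
  | head hstep _ ih =>
    rcases ih with ih | ih | ih
    · rename_i a c hac
      obtain ⟨e, he, hcase⟩ := hstep
      by_cases hee : e = e₁
      · subst hee
        rcases hcase with ⟨_, _, hcd⟩ | ⟨_, _, hcd⟩
        · right; right; rw [hcd]; exact ih
        · right; left; rw [hcd]; exact ih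
      · left
        exact Relation.ReflTransGen.head ⟨e, Finset.mem_erase.2 ⟨hee, he⟩, hcase⟩ ih
    · right; left; exact ih
    · right; right; exact ih

/-- From reachability, extract a unit path flow with boundary `δ_v - δ_u`. -/
lemma exists_path_flow (Fwd Bwd : E → Prop) (s : Finset E) :
    ∀ u v : V, Relation.ReflTransGen (adj G Fwd Bwd s) u v →
    ∃ χ : E → ℤ,
      (∀ e, χ e = 0 ∨ (χ e = 1 ∧ Fwd e ∧ e ∈ s) ∨ (χ e = -1 ∧ Bwd e ∧ e ∈ s)) ∧
      ∀ w : V, bd G χ w = (if v = w then 1 else 0) - (if u = w then 1 else 0) := by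
  induction s using Finset.strongInduction with
  | _ s ih =>
    intro u v h
    rcases (Relation.ReflTransGen.cases_head h) with rfl | ⟨w, hadj, hwv⟩
    · refine ⟨0, fun e => Or.inl rfl, fun w => by simp [bd]⟩
    · obtain ⟨e₁, he₁, hcase⟩ := hadj
      have hss : s.erase e₁ ⊂ s := Finset.erase_ssubset he₁
      have hsub : s.erase e₁ ⊆ s := Finset.erase_subset e₁ s
      have hnotmem : e₁ ∉ s.erase e₁ := Finset.notMem_erase e₁ s
      -- combine a path flow on the erased set from w to v with a ±unit on e₁
      have combine : ∀ other : V,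
          ((Fwd e₁ ∧ tl G e₁ = u ∧ hd G e₁ = other) ∨
            (Bwd e₁ ∧ hd G e₁ = u ∧ tl G e₁ = other)) →
          Relation.ReflTransGen (adj G Fwd Bwd (s.erase e₁)) other v →
          ∃ χ : E → ℤ,
            (∀ e, χ e = 0 ∨ (χ e = 1 ∧ Fwd e ∧ e ∈ s) ∨ (χ e = -1 ∧ Bwd e ∧ e ∈ s)) ∧
            ∀ w' : V, bd G χ w' = (if v = w' then 1 else 0) - (if u = w' then 1 else 0) := by
        intro other hdir hr
        obtain ⟨χ, hχ1, hχ2⟩ := ih (s.erase e₁) hss other v hr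
        have hz : χ e₁ = 0 := by
          rcases hχ1 e₁ with h0 | ⟨_, _, h3⟩ | ⟨_, _, h3⟩
          · exact h0
          · exact absurd h3 hnotmem
          · exact absurd h3 hnotmem
        rcases hdir with ⟨hF, htl, hhd⟩ | ⟨hB, hhd, htl⟩
        · refine ⟨unit e₁ + χ, ?_, ?_⟩
          · intro e
            by_cases hee : e = e₁
            · subst hee
              refine Or.inr (Or.inl ?_)
              simp only [Pi.add_apply, unit, if_pos rfl, hz]
              exact ⟨by norm_num, hF, he₁⟩
            · have : unit e₁ e = 0 := by simp [unit, hee]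
              rcases hχ1 e with h0 | ⟨h1, h2, h3⟩ | ⟨h1, h2, h3⟩
              · exact Or.inl (by simp only [Pi.add_apply, this, h0]; ring)
              · exact Or.inr (Or.inl ⟨by simp only [Pi.add_apply, this, h1]; ring,
                  h2, hsub h3⟩)
              · exact Or.inr (Or.inr ⟨by simp only [Pi.add_apply, this, h1]; ring,
                  h2, hsub h3⟩)
          · intro w'
            rw [bd_add, bd_unit, hχ2 w', htl, hhd]
            by_cases h1 : other = w' <;> by_cases h2 : u = w' <;> by_cases h3 : v = w' <;>
              simp [h1, h2, h3] <;> omega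
        · refine ⟨(-unit e₁) + χ, ?_, ?_⟩
          · intro e
            by_cases hee : e = e₁
            · subst hee
              refine Or.inr (Or.inr ?_)
              simp only [Pi.add_apply, Pi.neg_apply, unit, if_pos rfl, hz]
              exact ⟨by norm_num, hB, he₁⟩
            · have : unit e₁ e = 0 := by simp [unit, hee]
              rcases hχ1 e with h0 | ⟨h1, h2, h3⟩ | ⟨h1, h2, h3⟩
              · exact Or.inl (by simp only [Pi.add_apply, Pi.neg_apply, this, h0]; ring)
              · exact Or.inr (Or.inl ⟨by simp only [Pi.add_apply, Pi.neg_apply, this, h1]; ring,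
                  h2, hsub h3⟩)
              · exact Or.inr (Or.inr ⟨by simp only [Pi.add_apply, Pi.neg_apply, this, h1]; ring,
                  h2, hsub h3⟩)
          · intro w'
            rw [bd_add, bd_neg, bd_unit, hχ2 w', htl, hhd]
            by_cases h1 : other = w' <;> by_cases h2 : u = w' <;> by_cases h3 : v = w' <;>
              simp [h1, h2, h3] <;> omega
      have weaken : ∀ x : V, Relation.ReflTransGen (adj G Fwd Bwd (s.erase e₁)) x v →
          x = u →
          ∃ χ : E → ℤ,
            (∀ e, χ e = 0 ∨ (χ e = 1 ∧ Fwd e ∧ e ∈ s) ∨ (χ e = -1 ∧ Bwd e ∧ e ∈ s)) ∧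
            ∀ w' : V, bd G χ w' = (if v = w' then 1 else 0) - (if u = w' then 1 else 0) := by
        rintro x hr rfl
        obtain ⟨χ, hχ1, hχ2⟩ := ih (s.erase e₁) hss x v hr
        refine ⟨χ, fun e => ?_, hχ2⟩
        rcases hχ1 e with h0 | ⟨h1, h2, h3⟩ | ⟨h1, h2, h3⟩
        · exact Or.inl h0
        · exact Or.inr (Or.inl ⟨h1, h2, hsub h3⟩)
        · exact Or.inr (Or.inr ⟨h1, h2, hsub h3⟩)
      rcases hcase with ⟨hF, htl, hhd⟩ | ⟨hB, hhd, htl⟩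
      · rcases reach_erase G Fwd Bwd s e₁ hwv with hr | hr | hr
        · rw [← hhd] at hr
          exact combine (hd G e₁) (Or.inl ⟨hF, htl, rfl⟩) hr
        · exact weaken (tl G e₁) hr htl
        · exact combine (hd G e₁) (Or.inl ⟨hF, htl, rfl⟩) hr
      · rcases reach_erase G Fwd Bwd s e₁ hwv with hr | hr | hr
        · rw [← htl] at hr
          exact combine (tl G e₁) (Or.inr ⟨hB, hhd, rfl⟩) hr
        · exact combine (tl G e₁) (Or.inr ⟨hB, hhd, rfl⟩) hr
        · exact weaken (hd G e₁) hr hhd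

/-! ### Reachable sets -/

/-- the set of vertices incident to an edge -/
noncomputable def vset (G : Multigraph V E) : Finset V :=
  univ.image (tl G) ∪ univ.image (hd G)

lemma tl_mem_vset (e : E) : tl G e ∈ vset G := by
  simp only [vset, Finset.mem_union, Finset.mem_image]
  exact Or.inl ⟨e, Finset.mem_univ e, rfl⟩

lemma hd_mem_vset (e : E) : hd G e ∈ vset G := by
  simp only [vset, Finset.mem_union, Finset.mem_image]
  exact Or.inr ⟨e, Finset.mem_univ e, rfl⟩

lemma bd_eq_zero_of_not_mem_vset (g : E → R) (v : V) (h : v ∉ vset G) :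
    bd G g v = 0 := by
  have h1 : univ.filter (fun e => hd G e = v) = ∅ := by
    rw [Finset.filter_eq_empty_iff]
    intro e _ he
    exact h (he ▸ hd_mem_vset G e)
  have h2 : univ.filter (fun e => tl G e = v) = ∅ := by
    rw [Finset.filter_eq_empty_iff]
    intro e _ he
    exact h (he ▸ tl_mem_vset G e)
  rw [bd, h1, h2]
  simp

/-- the set of vertices reachable from `a` -/
noncomputable def reachSet (G : Multigraph V E) (Fwd Bwd : E → Prop) (a : V) : Finset V :=
  insert a ((vset G).filter
    (fun x => Relation.ReflTransGen (adj G Fwd Bwd Finset.univ) a x))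

lemma self_mem_reachSet (Fwd Bwd : E → Prop) (a : V) : a ∈ reachSet G Fwd Bwd a :=
  Finset.mem_insert_self a _

lemma reach_mem_reachSet (Fwd Bwd : E → Prop) {a x : V}
    (h : Relation.ReflTransGen (adj G Fwd Bwd Finset.univ) a x) :
    x ∈ reachSet G Fwd Bwd a := by
  rcases Relation.ReflTransGen.cases_tail h with rfl | ⟨y, _, hyx⟩
  · exact self_mem_reachSet G Fwd Bwd _
  · obtain ⟨e, _, hcase⟩ := hyx
    have hx : x ∈ vset G := by
      rcases hcase with ⟨_, _, hh⟩ | ⟨_, _, hh⟩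
      · exact hh ▸ hd_mem_vset G e
      · exact hh ▸ tl_mem_vset G e
    exact Finset.mem_insert_of_mem (Finset.mem_filter.2 ⟨hx, h⟩)

lemma reachSet_reach (Fwd Bwd : E → Prop) {a x : V}
    (h : x ∈ reachSet G Fwd Bwd a) :
    Relation.ReflTransGen (adj G Fwd Bwd Finset.univ) a x := by
  rcases Finset.mem_insert.1 h with rfl | h'
  · exact Relation.ReflTransGen.refl
  · exact (Finset.mem_filter.1 h').2

lemma reachSet_closed_fwd (Fwd Bwd : E → Prop) (a : V) (e : E)
    (hF : Fwd e) (h : tl G e ∈ reachSet G Fwd Bwd a) :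
    hd G e ∈ reachSet G Fwd Bwd a := by
  apply reach_mem_reachSet
  exact Relation.ReflTransGen.tail (reachSet_reach G Fwd Bwd h)
    ⟨e, Finset.mem_univ e, Or.inl ⟨hF, rfl, rfl⟩⟩

lemma reachSet_closed_bwd (Fwd Bwd : E → Prop) (a : V) (e : E)
    (hB : Bwd e) (h : hd G e ∈ reachSet G Fwd Bwd a) :
    tl G e ∈ reachSet G Fwd Bwd a := by
  apply reach_mem_reachSet
  exact Relation.ReflTransGen.tail (reachSet_reach G Fwd Bwd h)
    ⟨e, Finset.mem_univ e, Or.inr ⟨hB, rfl, rfl⟩⟩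

/-! ### Integer Hoffman circulation theorem -/

/-- total positive excess -/
noncomputable def excess (G : Multigraph V E) (h : E → ℤ) : ℕ :=
  ∑ v ∈ vset G, (bd G h v).toNat

lemma circulation_of_excess_zero (h : E → ℤ)
    (hnp : ∀ v ∈ vset G, bd G h v ≤ 0) : ∀ v, bd G h v = 0 := by
  have htot : ∑ v ∈ vset G, bd G h v = 0 := by
    rw [cut_sum]
    have h1 : univ.filter (fun e => hd G e ∈ vset G ∧ tl G e ∉ vset G) = ∅ := by
      rw [Finset.filter_eq_empty_iff]
      intro e _ he
      exact he.2 (tl_mem_vset G e)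
    have h2 : univ.filter (fun e => tl G e ∈ vset G ∧ hd G e ∉ vset G) = ∅ := by
      rw [Finset.filter_eq_empty_iff]
      intro e _ he
      exact he.2 (hd_mem_vset G e)
    rw [h1, h2]
    simp
  intro v
  by_cases hv : v ∈ vset G
  · have := (Finset.sum_eq_zero_iff_of_nonpos hnp).1 htot
    exact this v hv
  · exact bd_eq_zero_of_not_mem_vset G h v hv

theorem int_hoffman (l u : E → ℤ) (hlu : ∀ e, l e ≤ u e)
    (hcut : ∀ U : Finset V,
      (∑ e ∈ univ.filter (fun e => hd G e ∈ U ∧ tl G e ∉ U), l e)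
        ≤ ∑ e ∈ univ.filter (fun e => tl G e ∈ U ∧ hd G e ∉ U), u e) :
    ∃ h : E → ℤ, (∀ v, bd G h v = 0) ∧ ∀ e, l e ≤ h e ∧ h e ≤ u e := by
  suffices key : ∀ (n : ℕ) (h : E → ℤ), (∀ e, l e ≤ h e ∧ h e ≤ u e) →
      excess G h ≤ n →
      ∃ h' : E → ℤ, (∀ v, bd G h' v = 0) ∧ ∀ e, l e ≤ h' e ∧ h' e ≤ u e by
    exact key (excess G l) l (fun e => ⟨le_refl _, hlu e⟩) (le_refl _)
  intro n
  induction n using Nat.strong_induction_on with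
  | _ n ih =>
    intro h hbox hn
    by_cases hall : ∀ v ∈ vset G, bd G h v ≤ 0
    · exact ⟨h, circulation_of_excess_zero G h hall, hbox⟩
    · push_neg at hall
      obtain ⟨a, ha, hpos⟩ := hall
      set Fwd : E → Prop := fun e => h e < u e with hFwd
      set Bwd : E → Prop := fun e => l e < h e with hBwd
      set U := reachSet G Fwd Bwd a with hU
      by_cases hdef : ∃ b ∈ U, bd G h b < 0
      · -- augment along a path from a to b
        obtain ⟨b, hbU, hbneg⟩ := hdef
        obtain ⟨χ, hχ1, hχ2⟩ := exists_path_flow G Fwd Bwd Finset.univ a b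
          (reachSet_reach G Fwd Bwd hbU)
        have hab : a ≠ b := by
          intro hab
          rw [hab] at hpos
          omega
        set h2 : E → ℤ := h + χ with hh2
        have hbox2 : ∀ e, l e ≤ h2 e ∧ h2 e ≤ u e := by
          intro e
          rcases hχ1 e with h0 | ⟨h1, hF, _⟩ | ⟨h1, hB, _⟩
          · simp only [hh2, Pi.add_apply, h0, add_zero]
            exact hbox e
          · simp only [hh2, Pi.add_apply, h1]
            constructor
            · linarith [(hbox e).1]
            · have := hF; simp only [hFwd] at this; omega
          · simp only [hh2, Pi.add_apply, h1]
            constructor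
            · have := hB; simp only [hBwd] at this; omega
            · linarith [(hbox e).2]
        have hbd2 : ∀ v, bd G h2 v = bd G h v + ((if b = v then 1 else 0)
            - (if a = v then 1 else 0)) := by
          intro v
          rw [hh2, bd_add, hχ2 v]
        have hexlt : excess G h2 < excess G h := by
          apply Finset.sum_lt_sum
          · intro v hv
            rw [hbd2 v]
            by_cases h1 : b = v
            · have hne : ¬ (a = v) := fun hc => hab (hc.trans h1.symm)
              rw [if_pos h1, if_neg hne]
              have : bd G h v < 0 := h1 ▸ hbneg
              omega
            · by_cases h2 : a = v
              · rw [if_neg h1, if_pos h2]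
                omega
              · rw [if_neg h1, if_neg h2]
                omega
          · refine ⟨a, ha, ?_⟩
            have : ¬ (b = a) := fun hc => hab hc.symm
            have hba : bd G h2 a = bd G h a - 1 := by
              rw [hbd2 a, if_neg this, if_pos rfl]; omega
            rw [hba]
            omega
        have hlt : excess G h2 < n := lt_of_lt_of_le hexlt hn
        exact ih (excess G h2) hlt h2 hbox2 (le_refl _)
      · -- blocked: contradiction with the cut condition at U
        push_neg at hdef
        exfalso
        have hsum : 0 < ∑ v ∈ U, bd G h v := by
          have hle : ∀ v ∈ U, 0 ≤ bd G h v := hdef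
          have haU : a ∈ U := self_mem_reachSet G Fwd Bwd a
          calc 0 < bd G h a := hpos
          _ ≤ ∑ v ∈ U, bd G h v := Finset.single_le_sum hle haU
        rw [cut_sum] at hsum
        have hin : ∀ e ∈ univ.filter (fun e => hd G e ∈ U ∧ tl G e ∉ U), h e = l e := by
          intro e he
          rw [Finset.mem_filter] at he
          have : ¬ Bwd e := fun hB => he.2.2 (reachSet_closed_bwd G Fwd Bwd a e hB he.2.1)
          simp only [hBwd, not_lt] at this
          exact le_antisymm this (hbox e).1
        have hout : ∀ e ∈ univ.filter (fun e => tl G e ∈ U ∧ hd G e ∉ U), h e = u e := by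
          intro e he
          rw [Finset.mem_filter] at he
          have : ¬ Fwd e := fun hF => he.2.2 (reachSet_closed_fwd G Fwd Bwd a e hF he.2.1)
          simp only [hFwd, not_lt] at this
          exact le_antisymm (hbox e).2 this
        rw [Finset.sum_congr rfl hin, Finset.sum_congr rfl hout] at hsum
        linarith [hcut U]

/-! ### Aligned cycles and descent -/

lemma exists_aligned_cycle (h : E → ℤ) (hcirc : ∀ v, bd G h v = 0) (e₀ : E)
    (hpos : 0 < h e₀) :
    ∃ χ : E → ℤ, (∀ v, bd G χ v = 0) ∧ χ e₀ = 1 ∧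
      (∀ e, χ e = 0 ∨ (χ e = 1 ∧ 0 < h e) ∨ (χ e = -1 ∧ h e < 0)) := by
  set Fwd : E → Prop := fun e => 0 < h e ∧ e ≠ e₀ with hFwd
  set Bwd : E → Prop := fun e => h e < 0 ∧ e ≠ e₀ with hBwd
  set a := hd G e₀ with ha
  have hreach : tl G e₀ ∈ reachSet G Fwd Bwd a := by
    by_contra hnr
    set U := reachSet G Fwd Bwd a with hU
    have hcut : ∑ v ∈ U, bd G h v = 0 := Finset.sum_eq_zero (fun v _ => hcirc v)
    rw [cut_sum] at hcut
    set Sin := univ.filter (fun e => hd G e ∈ U ∧ tl G e ∉ U) with hSin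
    set Sout := univ.filter (fun e => tl G e ∈ U ∧ hd G e ∉ U) with hSout
    have he₀in : e₀ ∈ Sin := by
      rw [hSin, Finset.mem_filter]
      exact ⟨Finset.mem_univ e₀, self_mem_reachSet G Fwd Bwd a, hnr⟩
    have hinpos : ∀ e ∈ Sin.erase e₀, 0 ≤ h e := by
      intro e he
      rw [Finset.mem_erase, hSin, Finset.mem_filter] at he
      by_contra hneg
      push_neg at hneg
      exact he.2.2.2 (reachSet_closed_bwd G Fwd Bwd a e ⟨hneg, he.1⟩ he.2.2.1)
    have houtneg : ∀ e ∈ Sout, h e ≤ 0 := by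
      intro e he
      rw [hSout, Finset.mem_filter] at he
      by_contra hgt
      push_neg at hgt
      have hne : e ≠ e₀ := by
        intro hc
        subst hc
        exact he.2.2 (self_mem_reachSet G Fwd Bwd a)
      exact he.2.2 (reachSet_closed_fwd G Fwd Bwd a e ⟨hgt, hne⟩ he.2.1)
    have hin : 0 < ∑ e ∈ Sin, h e := by
      rw [← Finset.add_sum_erase _ _ he₀in]
      have : 0 ≤ ∑ e ∈ Sin.erase e₀, h e := Finset.sum_nonneg hinpos
      omega
    have hout : ∑ e ∈ Sout, h e ≤ 0 := Finset.sum_nonpos houtneg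
    omega
  obtain ⟨χ', hχ1, hχ2⟩ := exists_path_flow G Fwd Bwd Finset.univ a (tl G e₀)
    (reachSet_reach G Fwd Bwd hreach)
  have hz : χ' e₀ = 0 := by
    rcases hχ1 e₀ with h0 | ⟨_, ⟨_, hne⟩, _⟩ | ⟨_, ⟨_, hne⟩, _⟩
    · exact h0
    · exact absurd rfl hne
    · exact absurd rfl hne
  refine ⟨χ' + unit e₀, ?_, ?_, ?_⟩
  · intro v
    rw [bd_add, hχ2 v, bd_unit]
    by_cases h1 : tl G e₀ = v <;> by_cases h2 : a = v <;>
      rw [ha] at * <;> simp [h1, h2] <;> omega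
  · simp only [Pi.add_apply, hz, unit, if_pos rfl]
    norm_num
  · intro e
    by_cases hee : e = e₀
    · subst hee
      refine Or.inr (Or.inl ⟨?_, hpos⟩)
      simp only [Pi.add_apply, hz, unit, if_pos rfl]
      norm_num
    · have hu : unit e₀ e = 0 := by simp [unit, hee]
      rcases hχ1 e with h0 | ⟨h1, hF, _⟩ | ⟨h1, hB, _⟩
      · exact Or.inl (by simp only [Pi.add_apply, h0, hu]; ring)
      · exact Or.inr (Or.inl ⟨by simp only [Pi.add_apply, h1, hu]; ring, hF.1⟩)
      · exact Or.inr (Or.inr ⟨by simp only [Pi.add_apply, h1, hu]; ring, hB.1⟩)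

/-- shift-descent: from a circulation bounded by `2p` obtain one bounded by
`2p - 1`, congruent mod `2p` edgewise. -/
lemma descent (p : ℤ) (hp : 0 < p) (h : E → ℤ) (hcirc : ∀ v, bd G h v = 0)
    (hbound : ∀ e, |h e| ≤ 2*p) :
    ∃ h' : E → ℤ, (∀ v, bd G h' v = 0) ∧ (∀ e, |h' e| ≤ 2*p - 1) ∧
      ∀ e, (2*p) ∣ (h' e - h e) := by
  suffices key : ∀ (n : ℕ) (h : E → ℤ), (∀ v, bd G h v = 0) → (∀ e, |h e| ≤ 2*p) →
      (∑ e : E, (|h e| - (2*p-1)).toNat) ≤ n →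
      ∃ h' : E → ℤ, (∀ v, bd G h' v = 0) ∧ (∀ e, |h' e| ≤ 2*p - 1) ∧
        ∀ e, (2*p) ∣ (h' e - h e) by
    exact key _ h hcirc hbound (le_refl _)
  intro n
  induction n using Nat.strong_induction_on with
  | _ n ih =>
    intro h hcirc hbound hn
    by_cases hgood : ∀ e : E, |h e| ≤ 2*p - 1
    · exact ⟨h, hcirc, hgood, fun e => by simp⟩
    · push_neg at hgood
      obtain ⟨e₀, hbad⟩ := hgood
      have hbad' : |h e₀| = 2*p := by
        have := hbound e₀
        omega
      -- by symmetry get an aligned cycle with sign matching h e₀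
      have hsgn : 0 < h e₀ ∨ h e₀ < 0 := by
        rcases lt_trichotomy (h e₀) 0 with hlt | heq | hgt
        · exact Or.inr hlt
        · rw [heq] at hbad'; simp at hbad'; omega
        · exact Or.inl hgt
      obtain ⟨χ, hχcirc, hχe₀, hχal⟩ :
          ∃ χ : E → ℤ, (∀ v, bd G χ v = 0) ∧ (χ e₀ = 1 ∨ χ e₀ = -1) ∧
            (∀ e, χ e = 0 ∨ (χ e = 1 ∧ 0 < h e) ∨ (χ e = -1 ∧ h e < 0)) := by
        rcases hsgn with hgt | hlt
        · obtain ⟨χ, h1, h2, h3⟩ := exists_aligned_cycle G h hcirc e₀ hgt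
          exact ⟨χ, h1, Or.inl h2, h3⟩
        · have hneg : 0 < (-h) e₀ := by simp only [Pi.neg_apply]; omega
          have hnegcirc : ∀ v, bd G (-h) v = 0 := by
            intro v; rw [bd_neg, hcirc v]; ring
          obtain ⟨χ, h1, h2, h3⟩ := exists_aligned_cycle G (-h) hnegcirc e₀ hneg
          refine ⟨-χ, fun v => by rw [bd_neg, h1 v]; ring, Or.inr (by simp [h2]), ?_⟩
          intro e
          rcases h3 e with h0 | ⟨ha, hb⟩ | ⟨ha, hb⟩
          · exact Or.inl (by simp [h0])
          · exact Or.inr (Or.inr ⟨by simp [ha], by simpa using hb⟩)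
          · exact Or.inr (Or.inl ⟨by simp [ha], by simpa using hb⟩)
      set h2 : E → ℤ := fun e => h e - 2*p * χ e with hh2
      have hkey : ∀ e, (h2 e = h e ∧ χ e = 0) ∨ (|h2 e| ≤ 2*p - 1 ∧ χ e ≠ 0) := by
        intro e
        rcases hχal e with h0 | ⟨ha, hb⟩ | ⟨ha, hb⟩
        · exact Or.inl ⟨by simp [hh2, h0], h0 ▸ (by simp [h0])⟩
        · refine Or.inr ⟨?_, by rw [ha]; omega⟩
          have hb2 := hbound e
          rw [hh2]
          simp only [ha]
          rw [abs_le] at hb2 ⊢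
          omega
        · refine Or.inr ⟨?_, by rw [ha]; omega⟩
          have hb2 := hbound e
          rw [hh2]
          simp only [ha]
          rw [abs_le] at hb2 ⊢
          omega
      have hcirc2 : ∀ v, bd G h2 v = 0 := by
        intro v
        have : h2 = h - (fun e => (2*p) * χ e) := by
          funext e; simp [hh2]
        rw [this, bd_sub, hcirc v, bd_smul, hχcirc v]
        ring
      have hbound2 : ∀ e, |h2 e| ≤ 2*p := by
        intro e
        rcases hkey e with ⟨he, _⟩ | ⟨he, _⟩
        · rw [he]; exact hbound e
        · omega
      have hdvd2 : ∀ e, (2*p) ∣ (h2 e - h e) := by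
        intro e
        rw [hh2]
        exact ⟨-χ e, by ring⟩
      have hmeasure : (∑ e : E, (|h2 e| - (2*p-1)).toNat) < ∑ e : E, (|h e| - (2*p-1)).toNat := by
        apply Finset.sum_lt_sum
        · intro e _
          rcases hkey e with ⟨he, _⟩ | ⟨he, _⟩
          · rw [he]
          · have := hbound e
            omega
        · refine ⟨e₀, Finset.mem_univ e₀, ?_⟩
          have hne : χ e₀ ≠ 0 := by rcases hχe₀ with h1 | h1 <;> rw [h1] <;> omega
          rcases hkey e₀ with ⟨_, hc⟩ | ⟨he, _⟩
          · exact absurd hc hne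
          · omega
      obtain ⟨h', hc', hb', hd'⟩ := ih _ (lt_of_lt_of_le hmeasure hn) h2 hcirc2 hbound2 (le_refl _)
      refine ⟨h', hc', hb', fun e => ?_⟩
      have : h' e - h e = (h' e - h2 e) + (h2 e - h e) := by ring
      rw [this]
      exact dvd_add (hd' e) (hdvd2 e)

/-! ### Branches and boxes -/

/-- doubled slope of lower box bound -/
def alF (σ : E → Bool) (β : E → Fin 3) (e : E) : ℤ :=
  if σ e = true then (if β e = 0 then 0 else -2)
  else (if β e = 0 then -1 else if β e = 1 then 1 else -2)

/-- constant of lower box bound -/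
def blF (σ : E → Bool) (β : E → Fin 3) (e : E) : ℤ :=
  if σ e = true then 1 else (if β e = 2 then 0 else 1)

/-- doubled slope of upper box bound -/
def auF (σ : E → Bool) (β : E → Fin 3) (e : E) : ℤ :=
  if σ e = true then (if β e = 0 then 2 else 0)
  else (if β e = 0 then 1 else if β e = 1 then 2 else -1)

/-- constant of upper box bound -/
def buF (σ : E → Bool) (β : E → Fin 3) (e : E) : ℤ :=
  if σ e = true then -1 else (if β e = 1 then 0 else -1)

/-- `f` lies in the (doubled) boxes of branch `β` at value `r` -/
def boxed (σ : E → Bool) (β : E → Fin 3) (r : ℝ) (f : E → ℝ) : Prop :=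
  ∀ e, (alF σ β e : ℝ) * r + 2*(blF σ β e : ℝ) ≤ 2 * f e ∧
    2 * f e ≤ (auF σ β e : ℝ) * r + 2*(buF σ β e : ℝ)

lemma exists_branch (σ : E → Bool) (r : ℝ) (hr : 2 ≤ r) (f : E → ℝ)
    (hb : ∀ e, |f e| < r)
    (hpos : ∀ e, σ e = true → 1 ≤ |f e| ∧ |f e| ≤ r - 1)
    (hneg : ∀ e, σ e = false → |f e| ≤ r/2 - 1 ∨ r/2 + 1 ≤ |f e|) :
    ∃ β : E → Fin 3, boxed σ β r f := by
  have hexists : ∀ e, ∃ b : Fin 3,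
      (alF σ (fun _ => b) e : ℝ) * r + 2*(blF σ (fun _ => b) e : ℝ) ≤ 2 * f e ∧
      2 * f e ≤ (auF σ (fun _ => b) e : ℝ) * r + 2*(buF σ (fun _ => b) e : ℝ) := by
    intro e
    have hbe := hb e
    by_cases hσ : σ e = true
    · obtain ⟨h1, h2⟩ := hpos e hσ
      by_cases hf : 0 ≤ f e
      · refine ⟨0, ?_⟩
        have habs : |f e| = f e := abs_of_nonneg hf
        rw [habs] at h1 h2
        simp only [alF, blF, auF, buF, hσ, if_true, if_pos rfl]
        push_cast
        constructor <;> linarith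
      · refine ⟨1, ?_⟩
        push_neg at hf
        have habs : |f e| = -(f e) := abs_of_neg hf
        rw [habs] at h1 h2
        have hne : (1 : Fin 3) ≠ 0 := by decide
        simp only [alF, blF, auF, buF, hσ, if_true, if_neg hne]
        push_cast
        constructor <;> linarith
    · have hσ' : σ e = false := by
        cases hc : σ e
        · rfl
        · exact absurd hc hσ
      have hσ2 : ¬ (σ e = true) := hσ
      rcases hneg e hσ' with hlow | hhigh
      · refine ⟨0, ?_⟩
        have h1 : -(r/2 - 1) ≤ f e := neg_le_of_abs_le hlow
        have h2 : f e ≤ r/2 - 1 := le_of_abs_le hlow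
        have hne : (0 : Fin 3) ≠ 2 := by decide
        simp only [alF, blF, auF, buF, hσ2, if_false, if_pos rfl, if_neg hne]
        push_cast
        constructor <;> linarith
      · by_cases hup : r/2 < f e
        · refine ⟨1, ?_⟩
          have hf0 : 0 ≤ f e := by linarith
          have habs : |f e| = f e := abs_of_nonneg hf0
          rw [habs] at hhigh hbe
          have hne : (1 : Fin 3) ≠ 0 := by decide
          have he1 : ((1:Fin 3) = 1) := rfl
          simp only [alF, blF, auF, buF, hσ2, if_false, if_neg hne, if_pos he1]
          push_cast
          constructor <;> linarith
        · refine ⟨2, ?_⟩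
          push_neg at hup
          have hf0 : f e < 0 := by
            by_contra hge
            push_neg at hge
            rw [abs_of_nonneg hge] at hhigh
            linarith
          have habs : |f e| = -(f e) := abs_of_neg hf0
          rw [habs] at hhigh hbe
          have hne0 : (2 : Fin 3) ≠ 0 := by decide
          have hne1 : (2 : Fin 3) ≠ 1 := by decide
          have he2 : ((2:Fin 3) = 2) := rfl
          simp only [alF, blF, auF, buF, hσ2, if_false, if_neg hne0, if_neg hne1, if_pos he2]
          push_cast
          constructor <;> linarith
  choose β hβ using hexists
  exact ⟨β, fun e => hβ e⟩

/-- doubled slope of the cut inequality -/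
noncomputable def sU (G : Multigraph V E) (σ : E → Bool) (β : E → Fin 3) (U : Finset V) : ℤ :=
  (∑ e ∈ univ.filter (fun e => tl G e ∈ U ∧ hd G e ∉ U), auF σ β e)
    - ∑ e ∈ univ.filter (fun e => hd G e ∈ U ∧ tl G e ∉ U), alF σ β e

/-- constant of the cut inequality -/
noncomputable def kU (G : Multigraph V E) (σ : E → Bool) (β : E → Fin 3) (U : Finset V) : ℤ :=
  (∑ e ∈ univ.filter (fun e => hd G e ∈ U ∧ tl G e ∉ U), 2 * blF σ β e)
    - ∑ e ∈ univ.filter (fun e => tl G e ∈ U ∧ hd G e ∉ U), 2 * buF σ β e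

/-- the cut conditions for a branch at value `r` -/
def CutConds (G : Multigraph V E) (σ : E → Bool) (β : E → Fin 3) (r : ℝ) : Prop :=
  ∀ U : Finset V, (kU G σ β U : ℝ) ≤ (sU G σ β U : ℝ) * r

/-- boxed circulations satisfy the cut conditions -/
lemma cutConds_of_boxed (σ : E → Bool) (β : E → Fin 3) (r : ℝ) (f : E → ℝ)
    (hcirc : ∀ v, bd G f v = 0) (hbox : boxed σ β r f) :
    CutConds G σ β r := by
  intro U
  have hcut : (∑ e ∈ univ.filter (fun e => hd G e ∈ U ∧ tl G e ∉ U), 2 * f e)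
      - ∑ e ∈ univ.filter (fun e => tl G e ∈ U ∧ hd G e ∉ U), 2 * f e = 0 := by
    have h0 : ∑ v ∈ U, bd G f v = 0 := Finset.sum_eq_zero (fun v _ => hcirc v)
    rw [cut_sum] at h0
    rw [← Finset.mul_sum, ← Finset.mul_sum]
    linarith
  have hlow : (∑ e ∈ univ.filter (fun e => hd G e ∈ U ∧ tl G e ∉ U),
      ((alF σ β e : ℝ) * r + 2*(blF σ β e : ℝ)))
      ≤ ∑ e ∈ univ.filter (fun e => hd G e ∈ U ∧ tl G e ∉ U), 2 * f e :=
    Finset.sum_le_sum (fun e _ => (hbox e).1)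
  have hup : (∑ e ∈ univ.filter (fun e => tl G e ∈ U ∧ hd G e ∉ U), 2 * f e)
      ≤ ∑ e ∈ univ.filter (fun e => tl G e ∈ U ∧ hd G e ∉ U),
        ((auF σ β e : ℝ) * r + 2*(buF σ β e : ℝ)) :=
    Finset.sum_le_sum (fun e _ => (hbox e).2)
  have expand : ∀ (S : Finset E) (c d : E → ℤ),
      ∑ e ∈ S, ((c e : ℝ) * r + 2*(d e : ℝ))
        = ((∑ e ∈ S, c e : ℤ) : ℝ) * r + ((∑ e ∈ S, 2 * d e : ℤ) : ℝ) := by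
    intro S c d
    push_cast
    rw [Finset.sum_add_distrib, Finset.sum_mul]
  rw [expand] at hlow hup
  rw [kU, sU, Int.cast_sub, Int.cast_sub, sub_mul]
  linarith [hlow, hup, hcut]

/-! ### The candidate minimum -/

lemma blF_bounds (σ : E → Bool) (β : E → Fin 3) (e : E) :
    0 ≤ blF σ β e ∧ blF σ β e ≤ 1 := by
  unfold blF; split_ifs <;> omega

lemma buF_bounds (σ : E → Bool) (β : E → Fin 3) (e : E) :
    -1 ≤ buF σ β e ∧ buF σ β e ≤ 0 := by
  unfold buF; split_ifs <;> omega

lemma alF_bounds (σ : E → Bool) (β : E → Fin 3) (e : E) :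
    |alF σ β e| ≤ 2 := by
  unfold alF; split_ifs <;> norm_num

lemma auF_bounds (σ : E → Bool) (β : E → Fin 3) (e : E) :
    |auF σ β e| ≤ 2 := by
  unfold auF; split_ifs <;> norm_num

lemma inout_card (G : Multigraph V E) (U : Finset V) :
    (univ.filter (fun e => hd G e ∈ U ∧ tl G e ∉ U)).card
      + (univ.filter (fun e => tl G e ∈ U ∧ hd G e ∉ U)).card ≤ Fintype.card E := by
  rw [← Finset.card_union_of_disjoint]
  · exact le_trans (Finset.card_le_card (Finset.subset_univ _)) (le_of_eq rfl)
  · rw [Finset.disjoint_left]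
    intro e he he'
    rw [Finset.mem_filter] at he he'
    exact he.2.2 he'.2.1

lemma kU_bounds (G : Multigraph V E) (σ : E → Bool) (β : E → Fin 3) (U : Finset V) :
    0 ≤ kU G σ β U ∧ kU G σ β U ≤ 2 * Fintype.card E := by
  have hin : ∀ S : Finset E, (∑ e ∈ S, 2 * blF σ β e) ≤ 2 * S.card ∧
      0 ≤ ∑ e ∈ S, 2 * blF σ β e := by
    intro S
    constructor
    · calc (∑ e ∈ S, 2 * blF σ β e) ≤ ∑ _e ∈ S, 2 :=
        Finset.sum_le_sum (fun e _ => by have := (blF_bounds σ β e).2; omega)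
      _ = 2 * S.card := by rw [Finset.sum_const]; push_cast; ring
    · exact Finset.sum_nonneg (fun e _ => by have := (blF_bounds σ β e).1; omega)
  have hout : ∀ S : Finset E, (-(2 * S.card) ≤ ∑ e ∈ S, 2 * buF σ β e) ∧
      (∑ e ∈ S, 2 * buF σ β e) ≤ 0 := by
    intro S
    constructor
    · calc (-(2 * (S.card:ℤ))) = ∑ _e ∈ S, (-2 : ℤ) := by rw [Finset.sum_const]; push_cast; ring
      _ ≤ ∑ e ∈ S, 2 * buF σ β e :=
        Finset.sum_le_sum (fun e _ => by have := (buF_bounds σ β e).1; omega)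
    · exact Finset.sum_nonpos (fun e _ => by have := (buF_bounds σ β e).2; omega)
  have hcard := inout_card G U
  obtain ⟨h1, h2⟩ := hin (univ.filter (fun e => hd G e ∈ U ∧ tl G e ∉ U))
  obtain ⟨h3, h4⟩ := hout (univ.filter (fun e => tl G e ∈ U ∧ hd G e ∉ U))
  constructor
  · rw [kU]; omega
  · rw [kU]
    have : ((univ.filter (fun e => hd G e ∈ U ∧ tl G e ∉ U)).card : ℤ)
        + ((univ.filter (fun e => tl G e ∈ U ∧ hd G e ∉ U)).card : ℤ) ≤ Fintype.card E := by
      exact_mod_cast hcard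
    omega

lemma sU_bounds (G : Multigraph V E) (σ : E → Bool) (β : E → Fin 3) (U : Finset V) :
    |sU G σ β U| ≤ 2 * Fintype.card E := by
  have habs : ∀ (S : Finset E) (c : E → ℤ), (∀ e, |c e| ≤ 2) → |∑ e ∈ S, c e| ≤ 2 * S.card := by
    intro S c hc
    calc |∑ e ∈ S, c e| ≤ ∑ e ∈ S, |c e| := Finset.abs_sum_le_sum_abs c S
    _ ≤ ∑ _e ∈ S, 2 := Finset.sum_le_sum (fun e _ => hc e)
    _ = 2 * S.card := by rw [Finset.sum_const]; push_cast; ring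
  have h1 := habs (univ.filter (fun e => tl G e ∈ U ∧ hd G e ∉ U)) (auF σ β) (auF_bounds σ β)
  have h2 := habs (univ.filter (fun e => hd G e ∈ U ∧ tl G e ∉ U)) (alF σ β) (alF_bounds σ β)
  have hcard := inout_card G U
  have hcard' : ((univ.filter (fun e => hd G e ∈ U ∧ tl G e ∉ U)).card : ℤ)
      + ((univ.filter (fun e => tl G e ∈ U ∧ hd G e ∉ U)).card : ℤ) ≤ Fintype.card E := by
    exact_mod_cast hcard
  rw [abs_le] at h1 h2 ⊢
  rw [sU]
  omega

/-- candidate values of a branch -/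
noncomputable def Xset (G : Multigraph V E) (σ : E → Bool) (β : E → Fin 3) : Set ℝ :=
  insert (2:ℝ) {x | ∃ U : Finset V, 1 ≤ sU G σ β U ∧
    x = (kU G σ β U : ℝ) / (sU G σ β U : ℝ)}

lemma Xset_finite (G : Multigraph V E) (σ : E → Bool) (β : E → Fin 3) :
    (Xset G σ β).Finite := by
  apply Set.Finite.insert
  have hsub : {x : ℝ | ∃ U : Finset V, 1 ≤ sU G σ β U ∧
      x = (kU G σ β U : ℝ) / (sU G σ β U : ℝ)}
      ⊆ (fun pr : ℤ × ℤ => (pr.1 : ℝ) / (pr.2 : ℝ)) ''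
        (Set.Icc (0:ℤ) (2 * Fintype.card E) ×ˢ Set.Icc (1:ℤ) (2 * Fintype.card E)) := by
    rintro x ⟨U, hsU, rfl⟩
    refine ⟨(kU G σ β U, sU G σ β U), ?_, rfl⟩
    have hk := kU_bounds G σ β U
    have hs := sU_bounds G σ β U
    rw [abs_le] at hs
    exact ⟨Set.mem_Icc.2 ⟨hk.1, hk.2⟩, Set.mem_Icc.2 ⟨hsU, hs.2⟩⟩
  exact Set.Finite.subset (Set.Finite.image _ (Set.Finite.prod (Set.finite_Icc _ _)
    (Set.finite_Icc _ _))) hsub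

lemma Xset_nonempty (G : Multigraph V E) (σ : E → Bool) (β : E → Fin 3) :
    (Xset G σ β).Nonempty := ⟨2, Set.mem_insert 2 _⟩

/-- lower value of a branch -/
noncomputable def lb (G : Multigraph V E) (σ : E → Bool) (β : E → Fin 3) : ℝ :=
  sSup (Xset G σ β)

lemma lb_mem (G : Multigraph V E) (σ : E → Bool) (β : E → Fin 3) :
    lb G σ β ∈ Xset G σ β :=
  Set.Nonempty.csSup_mem (Xset_nonempty G σ β) (Xset_finite G σ β)

lemma two_le_lb (G : Multigraph V E) (σ : E → Bool) (β : E → Fin 3) :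
    2 ≤ lb G σ β :=
  le_csSup (Set.Finite.bddAbove (Xset_finite G σ β)) (Set.mem_insert 2 _)

lemma lb_le (G : Multigraph V E) (σ : E → Bool) (β : E → Fin 3) (r : ℝ)
    (hr : 2 ≤ r) (hcc : CutConds G σ β r) : lb G σ β ≤ r := by
  apply csSup_le (Xset_nonempty G σ β)
  rintro x (rfl | ⟨U, hsU, rfl⟩)
  · exact hr
  · have hs0 : (0:ℝ) < (sU G σ β U : ℝ) := by exact_mod_cast hsU
    rw [div_le_iff₀ hs0]
    have := hcc U
    linarith
lemma cutConds_lb (G : Multigraph V E) (σ : E → Bool) (β : E → Fin 3)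
    (r' : ℝ) (hr' : 2 ≤ r') (hcc' : CutConds G σ β r') :
    CutConds G σ β (lb G σ β) := by
  intro U
  by_cases hs : 1 ≤ sU G σ β U
  · have hmem : (kU G σ β U : ℝ) / (sU G σ β U : ℝ) ∈ Xset G σ β :=
      Set.mem_insert_of_mem _ ⟨U, hs, rfl⟩
    have hle : (kU G σ β U : ℝ) / (sU G σ β U : ℝ) ≤ lb G σ β :=
      le_csSup (Set.Finite.bddAbove (Xset_finite G σ β)) hmem
    have hs0 : (0:ℝ) < (sU G σ β U : ℝ) := by exact_mod_cast hs
    rw [div_le_iff₀ hs0] at hle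
    linarith
  · push_neg at hs
    have hs0 : (sU G σ β U : ℝ) ≤ 0 := by exact_mod_cast (by omega : sU G σ β U ≤ 0)
    have hlb : lb G σ β ≤ r' := lb_le G σ β r' hr' hcc'
    have := hcc' U
    nlinarith

/-- admissibility of a branch -/
def Adm (G : Multigraph V E) (σ : E → Bool) (β : E → Fin 3) : Prop :=
  ∃ r : ℝ, 2 ≤ r ∧ CutConds G σ β r

/-- the candidate circular flow index -/
noncomputable def cbar (G : Multigraph V E) (σ : E → Bool) : ℝ :=
  sInf {x : ℝ | ∃ β : E → Fin 3, Adm G σ β ∧ x = lb G σ β}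

lemma cbar_set_finite (G : Multigraph V E) (σ : E → Bool) :
    {x : ℝ | ∃ β : E → Fin 3, Adm G σ β ∧ x = lb G σ β}.Finite := by
  have : {x : ℝ | ∃ β : E → Fin 3, Adm G σ β ∧ x = lb G σ β}
      ⊆ Set.range (fun β : E → Fin 3 => lb G σ β) := by
    rintro x ⟨β, _, rfl⟩
    exact ⟨β, rfl⟩
  exact Set.Finite.subset (Set.finite_range _) this

lemma cbar_mem (G : Multigraph V E) (σ : E → Bool)
    (hne : ∃ β : E → Fin 3, Adm G σ β) :
    ∃ β : E → Fin 3, Adm G σ β ∧ cbar G σ = lb G σ β := by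
  have hne' : {x : ℝ | ∃ β : E → Fin 3, Adm G σ β ∧ x = lb G σ β}.Nonempty := by
    obtain ⟨β, hβ⟩ := hne
    exact ⟨lb G σ β, β, hβ, rfl⟩
  have := Set.Nonempty.csInf_mem hne' (cbar_set_finite G σ)
  obtain ⟨β, hβ, heq⟩ := this
  exact ⟨β, hβ, heq⟩

lemma cbar_le (G : Multigraph V E) (σ : E → Bool) (β : E → Fin 3)
    (hβ : Adm G σ β) : cbar G σ ≤ lb G σ β := by
  apply csInf_le (Set.Finite.bddBelow (cbar_set_finite G σ))
  exact ⟨β, hβ, rfl⟩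

/-! ### Helpers for the final construction -/

lemma fin3_cases (b : Fin 3) : b = 0 ∨ b = 1 ∨ b = 2 := by
  rcases b with ⟨v, hv⟩
  rcases (show v = 0 ∨ v = 1 ∨ v = 2 by omega) with rfl | rfl | rfl
  · exact Or.inl rfl
  · exact Or.inr (Or.inl rfl)
  · exact Or.inr (Or.inr rfl)

lemma dvd_window (M a b : ℤ) (hM : 0 < M) (hdvd : M ∣ (b - a)) (ha : |a| ≤ M)
    (hb : |b| ≤ M - 1) : b = a ∨ b = a - M ∨ b = a + M := by
  obtain ⟨t, ht⟩ := hdvd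
  have habs : |b - a| ≤ 2*M - 1 := by
    calc |b - a| ≤ |b| + |a| := abs_sub _ _
    _ ≤ 2*M - 1 := by omega
  have htabs : |b - a| = M * |t| := by
    rw [ht, abs_mul, abs_of_pos hM]
  have htle : |t| ≤ 1 := by
    by_contra hc
    push_neg at hc
    have h2 : 2 ≤ |t| := hc
    have : 2*M ≤ M * |t| := by nlinarith
    omega
  have hts : t = -1 ∨ t = 0 ∨ t = 1 := by
    rw [abs_le] at htle
    omega
  rcases hts with rfl | rfl | rfl
  · right; left; omega
  · left; omega
  · right; right; omega

lemma bd_smulR (G : Multigraph V E) (c : ℝ) (g : E → ℝ) (v : V) :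
    bd G (fun e => c * g e) v = c * bd G g v := by
  simp only [bd, mul_sub, Finset.mul_sum]

/-- main construction: a strict flow at `cbar` -/
lemma exists_good_flow [Nonempty E] (σ : E → Bool)
    (hne : ∃ β : E → Fin 3, Adm G σ β) :
    ∃ P Q : ℤ, 1 ≤ Q ∧ 2*Q ≤ P ∧ P ≤ 2*(Fintype.card E : ℤ) ∧
      cbar G σ = (P:ℝ)/(Q:ℝ) ∧
      ∃ f : E → ℝ, (∀ v, bd G f v = 0) ∧ (∀ e, |f e| < (P:ℝ)/(Q:ℝ)) ∧
        (∀ e, σ e = true → 1 ≤ |f e| ∧ |f e| ≤ (P:ℝ)/(Q:ℝ) - 1) ∧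
        (∀ e, σ e = false →
          |f e| ≤ (P:ℝ)/(Q:ℝ)/2 - 1 ∨ (P:ℝ)/(Q:ℝ)/2 + 1 ≤ |f e|) := by
  obtain ⟨β, hadm, hc⟩ := cbar_mem G σ hne
  obtain ⟨r', hr', hcc'⟩ := hadm
  have hcclb : CutConds G σ β (lb G σ β) := cutConds_lb G σ β r' hr' hcc'
  have hlb2 : 2 ≤ lb G σ β := two_le_lb G σ β
  have hm1 : 1 ≤ (Fintype.card E : ℤ) := by
    have := Fintype.card_pos (α := E)
    omega
  -- extract the rational form of lb
  obtain ⟨P, Q, hQ1, hPm, hlbPQ⟩ : ∃ P Q : ℤ, 1 ≤ Q ∧ P ≤ 2*(Fintype.card E : ℤ) ∧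
      lb G σ β = (P:ℝ)/(Q:ℝ) := by
    rcases Set.mem_insert_iff.1 (lb_mem G σ β) with h2 | ⟨U0, hs0, hr0⟩
    · exact ⟨2, 1, le_refl 1, by omega, by rw [h2]; norm_num⟩
    · exact ⟨kU G σ β U0, sU G σ β U0, hs0, (kU_bounds G σ β U0).2, hr0⟩
  have hQR : (0:ℝ) < (Q:ℝ) := by exact_mod_cast hQ1
  have hPQ : 2*Q ≤ P := by
    have h2 : (2:ℝ) ≤ (P:ℝ)/(Q:ℝ) := hlbPQ ▸ hlb2
    rw [le_div_iff₀ hQR] at h2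
    exact_mod_cast (by linarith : (2*Q:ℝ) ≤ (P:ℝ))
  have hP0 : 0 < P := by omega
  have hccP : CutConds G σ β ((P:ℝ)/(Q:ℝ)) := hlbPQ ▸ hcclb
  -- integer boxes
  set L : E → ℤ := fun e => alF σ β e * P + 2 * blF σ β e * Q with hL
  set Uu : E → ℤ := fun e => auF σ β e * P + 2 * buF σ β e * Q with hUu
  have hcases : ∀ e, (σ e = true ∧
        ((L e = 0*P + 2*Q ∧ Uu e = 2*P - 2*Q) ∨ (L e = -2*P + 2*Q ∧ Uu e = 0*P - 2*Q))) ∨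
      (σ e = false ∧
        ((L e = -P + 2*Q ∧ Uu e = P - 2*Q) ∨ (L e = P + 2*Q ∧ Uu e = 2*P) ∨
          (L e = -2*P ∧ Uu e = -P - 2*Q))) := by
    intro e
    cases hσ : σ e
    · refine Or.inr ⟨rfl, ?_⟩
      rcases fin3_cases (β e) with hb | hb | hb
      · refine Or.inl ⟨?_, ?_⟩
        · simp [hL, alF, blF, hσ, hb]; try ring
        · simp [hUu, auF, buF, hσ, hb]; try ring
      · refine Or.inr (Or.inl ⟨?_, ?_⟩)
        · simp [hL, alF, blF, hσ, hb]; try ring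
        · simp [hUu, auF, buF, hσ, hb]; try ring
      · refine Or.inr (Or.inr ⟨?_, ?_⟩)
        · simp [hL, alF, blF, hσ, hb]; try ring
        · simp [hUu, auF, buF, hσ, hb]; try ring
    · refine Or.inl ⟨rfl, ?_⟩
      by_cases hb : β e = 0
      · refine Or.inl ⟨?_, ?_⟩
        · simp [hL, alF, blF, hσ, hb]; try ring
        · simp [hUu, auF, buF, hσ, hb]; try ring
      · refine Or.inr ⟨?_, ?_⟩
        · simp [hL, alF, blF, hσ, hb]; try ring
        · simp [hUu, auF, buF, hσ, hb]; try ring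
  have hLU : ∀ e, L e ≤ Uu e := by
    intro e
    rcases hcases e with ⟨_, hcc⟩ | ⟨_, hcc⟩
    · rcases hcc with ⟨h1, h2⟩ | ⟨h1, h2⟩ <;> omega
    · rcases hcc with ⟨h1, h2⟩ | ⟨h1, h2⟩ | ⟨h1, h2⟩ <;> omega
  -- integer cut conditions
  have hicut : ∀ U : Finset V,
      (∑ e ∈ univ.filter (fun e => hd G e ∈ U ∧ tl G e ∉ U), L e)
        ≤ ∑ e ∈ univ.filter (fun e => tl G e ∈ U ∧ hd G e ∉ U), Uu e := by
    intro U
    have hrQ := hccP U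
    have hZr : (kU G σ β U * Q : ℝ) ≤ (sU G σ β U * P : ℝ) := by
      have := mul_le_mul_of_nonneg_right hrQ (le_of_lt hQR)
      push_cast
      calc (kU G σ β U : ℝ) * Q ≤ (sU G σ β U : ℝ) * ((P:ℝ)/(Q:ℝ)) * Q := this
      _ = (sU G σ β U : ℝ) * P := by field_simp
    have hZ : kU G σ β U * Q ≤ sU G σ β U * P := by exact_mod_cast hZr
    have hexp1 : (∑ e ∈ univ.filter (fun e => hd G e ∈ U ∧ tl G e ∉ U), L e)
        = (∑ e ∈ univ.filter (fun e => hd G e ∈ U ∧ tl G e ∉ U), alF σ β e) * P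
          + (∑ e ∈ univ.filter (fun e => hd G e ∈ U ∧ tl G e ∉ U), 2 * blF σ β e) * Q := by
      rw [Finset.sum_mul, Finset.sum_mul, ← Finset.sum_add_distrib]
    have hexp2 : (∑ e ∈ univ.filter (fun e => tl G e ∈ U ∧ hd G e ∉ U), Uu e)
        = (∑ e ∈ univ.filter (fun e => tl G e ∈ U ∧ hd G e ∉ U), auF σ β e) * P
          + (∑ e ∈ univ.filter (fun e => tl G e ∈ U ∧ hd G e ∉ U), 2 * buF σ β e) * Q := by
      rw [Finset.sum_mul, Finset.sum_mul, ← Finset.sum_add_distrib]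
    rw [hexp1, hexp2]
    rw [kU, sU, sub_mul, sub_mul] at hZ
    linarith
  obtain ⟨h, hcirc, hbox⟩ := int_hoffman G L Uu hLU hicut
  have hbound : ∀ e, |h e| ≤ 2*P := by
    intro e
    have hb := hbox e
    rw [abs_le]
    rcases hcases e with ⟨_, hcc⟩ | ⟨_, hcc⟩
    · rcases hcc with ⟨h1, h2⟩ | ⟨h1, h2⟩ <;> omega
    · rcases hcc with ⟨h1, h2⟩ | ⟨h1, h2⟩ | ⟨h1, h2⟩ <;> omega
  obtain ⟨h', hcirc', hb', hdvd'⟩ := descent G P hP0 h hcirc hbound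
  -- final integer facts
  have hfin : ∀ e,
      (σ e = true → (2*Q ≤ h' e ∧ h' e ≤ 2*P - 2*Q) ∨
        (-(2*P - 2*Q) ≤ h' e ∧ h' e ≤ -(2*Q))) ∧
      (σ e = false → (-(P - 2*Q) ≤ h' e ∧ h' e ≤ P - 2*Q) ∨
        (P + 2*Q ≤ h' e ∧ h' e ≤ 2*P - 1) ∨ (-(2*P - 1) ≤ h' e ∧ h' e ≤ -(P + 2*Q))) := by
    intro e
    have hw := dvd_window (2*P) (h e) (h' e) (by omega) (hdvd' e) (hbound e) (hb' e)
    have hbx := hbox e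
    have hb'e := hb' e
    rw [abs_le] at hb'e
    constructor
    · intro hσ
      rcases hcases e with ⟨_, hcc⟩ | ⟨hσ2, _⟩
      · rcases hcc with ⟨h1, h2⟩ | ⟨h1, h2⟩ <;> rcases hw with hw | hw | hw <;> omega
      · rw [hσ] at hσ2; exact absurd hσ2 (by simp)
    · intro hσ
      rcases hcases e with ⟨hσ2, _⟩ | ⟨_, hcc⟩
      · rw [hσ] at hσ2; exact absurd hσ2 (by simp)
      · rcases hcc with ⟨h1, h2⟩ | ⟨h1, h2⟩ | ⟨h1, h2⟩ <;> rcases hw with hw | hw | hw <;> omega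
  -- build the real flow
  have hc2 : (0:ℝ) < 2*(Q:ℝ) := by linarith
  have hc2ne : (Q:ℝ) ≠ 0 := ne_of_gt hQR
  have hdivle : ∀ a b : ℤ, a ≤ b → (a:ℝ)/(2*(Q:ℝ)) ≤ (b:ℝ)/(2*(Q:ℝ)) := by
    intro a b hab
    have hab' : (a:ℝ) ≤ b := by exact_mod_cast hab
    gcongr
  have hdivlt : ∀ a b : ℤ, a < b → (a:ℝ)/(2*(Q:ℝ)) < (b:ℝ)/(2*(Q:ℝ)) := by
    intro a b hab
    rw [div_lt_div_iff₀ hc2 hc2]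
    have hab' : (a:ℝ) < b := by exact_mod_cast hab
    nlinarith
  have eq1 : (P:ℝ)/(Q:ℝ) = ((2*P : ℤ):ℝ)/(2*(Q:ℝ)) := by push_cast; field_simp; try ring
  have eq2 : (P:ℝ)/(Q:ℝ) - 1 = ((2*P - 2*Q : ℤ):ℝ)/(2*(Q:ℝ)) := by
    push_cast; field_simp; try ring
  have eq3 : (P:ℝ)/(Q:ℝ)/2 - 1 = ((P - 2*Q : ℤ):ℝ)/(2*(Q:ℝ)) := by
    push_cast; field_simp; try ring
  have eq4 : (P:ℝ)/(Q:ℝ)/2 + 1 = ((P + 2*Q : ℤ):ℝ)/(2*(Q:ℝ)) := by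
    push_cast; field_simp
  have eq5 : (1:ℝ) = ((2*Q : ℤ):ℝ)/(2*(Q:ℝ)) := by push_cast; field_simp
  have habsf : ∀ e, |(h' e : ℝ) / (2*(Q:ℝ))| = ((|h' e| : ℤ):ℝ)/(2*(Q:ℝ)) := by
    intro e
    rw [abs_div, abs_of_pos hc2, Int.cast_abs]
  refine ⟨P, Q, hQ1, hPQ, hPm, hc.trans hlbPQ, fun e => (h' e : ℝ) / (2*(Q:ℝ)), ?_, ?_, ?_, ?_⟩
  · intro v
    have heq : (fun e => (h' e : ℝ) / (2*(Q:ℝ))) = fun e => (1/(2*(Q:ℝ))) * ((h' e : ℝ)) := by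
      funext e; ring
    rw [heq, bd_smulR, bd_cast, hcirc' v]
    norm_num
  · intro e
    rw [habsf e, eq1]
    apply hdivlt
    have := hb' e
    omega
  · intro e hσ
    rcases (hfin e).1 hσ with ⟨h1, h2⟩ | ⟨h1, h2⟩
    · have habsZ : |h' e| = h' e := abs_of_nonneg (by omega)
      constructor
      · rw [habsf e, eq5]
        apply hdivle
        omega
      · rw [habsf e, eq2]
        apply hdivle
        omega
    · have habsZ : |h' e| = -(h' e) := abs_of_nonpos (by omega)
      constructor
      · rw [habsf e, eq5]
        apply hdivle
        omega
      · rw [habsf e, eq2]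
        apply hdivle
        omega
  · intro e hσ
    rcases (hfin e).2 hσ with ⟨h1, h2⟩ | ⟨h1, h2⟩ | ⟨h1, h2⟩
    · left
      rw [habsf e, eq3]
      apply hdivle
      rcases abs_cases (h' e) with ⟨ha, _⟩ | ⟨ha, _⟩ <;> omega
    · right
      rw [habsf e, eq4]
      apply hdivle
      rcases abs_cases (h' e) with ⟨ha, _⟩ | ⟨ha, _⟩ <;> omega
    · right
      rw [habsf e, eq4]
      apply hdivle
      rcases abs_cases (h' e) with ⟨ha, _⟩ | ⟨ha, _⟩ <;> omega

/-! ### Interface with `IsCircularFlow` -/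

lemma sym2_cases (G : Multigraph V E) (e : E) (u v : V) (h : G.ends e = s(u, v)) :
    (tl G e = u ∧ hd G e = v) ∨ (tl G e = v ∧ hd G e = u) := by
  have h2 : s(tl G e, hd G e) = s(u, v) := (ends_eq G e).trans h
  rw [Sym2.eq_iff] at h2
  exact h2

lemma normalize (G : Multigraph V E) (D : E → V × V) (f : E → ℝ)
    (hor : IsOrientation G D)
    (hcons : ∀ v, outSum D f v = inSum D f v) :
    ∃ g : E → ℝ, (∀ v, bd G g v = 0) ∧ ∀ e, |g e| = |f e| := by
  have hdi : ∀ e, ((D e).1 = tl G e ∧ (D e).2 = hd G e) ∨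
      ((D e).1 = hd G e ∧ (D e).2 = tl G e) := by
    intro e
    have h := hor e
    rw [← ends_eq G e, Sym2.eq_iff] at h
    tauto
  refine ⟨fun e => if (D e).1 = tl G e then f e else -f e, ?_, ?_⟩
  · intro v
    set g : E → ℝ := fun e => if (D e).1 = tl G e then f e else -f e with hg
    have key : ∀ e, (if hd G e = v then g e else 0) - (if tl G e = v then g e else 0)
        = (if (D e).2 = v then f e else 0) - (if (D e).1 = v then f e else 0) := by
      intro e
      rcases hdi e with ⟨h1, h2⟩ | ⟨h1, h2⟩
      · have hge : g e = f e := by rw [hg]; exact if_pos h1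
        rw [hge, h1, h2]
      · have hne : ¬ ((D e).1 = tl G e) := by
          rw [h1]
          exact fun hc => (tl_ne_hd G e) hc.symm
        have hge : g e = -f e := by rw [hg]; exact if_neg hne
        rw [hge, h1, h2]
        by_cases hh : hd G e = v <;> by_cases ht : tl G e = v <;>
          simp [hh, ht] <;> ring
    have hsum : bd G g v
        = ∑ e : E, ((if hd G e = v then g e else 0) - (if tl G e = v then g e else 0)) := by
      rw [bd, Finset.sum_filter, Finset.sum_filter, ← Finset.sum_sub_distrib]
    rw [hsum, Finset.sum_congr rfl (fun e _ => key e), Finset.sum_sub_distrib]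
    have hi : inSum D f v = ∑ e : E, (if (D e).2 = v then f e else 0) := by
      rw [inSum, Finset.sum_filter]
    have ho : outSum D f v = ∑ e : E, (if (D e).1 = v then f e else 0) := by
      rw [outSum, Finset.sum_filter]
    rw [← hi, ← ho, hcons v]
    ring
  · intro e
    by_cases hc : (D e).1 = tl G e <;> simp [hc]

lemma isCircularFlow_of_bd (G : Multigraph V E) [Fintype E] (σ : E → Bool) (r : ℝ)
    (f : E → ℝ) (hcirc : ∀ v, bd G f v = 0)
    (h1 : ∀ e, |f e| < r)
    (h2 : ∀ e, σ e = true → 1 ≤ |f e| ∧ |f e| ≤ r - 1)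
    (h3 : ∀ e, σ e = false → |f e| ≤ r / 2 - 1 ∨ r / 2 + 1 ≤ |f e|) :
    IsCircularFlow G σ r (fun e => (tl G e, hd G e)) f := by
  refine ⟨fun e => ends_eq G e, h1, h2, h3, ?_⟩
  intro v
  have hb := hcirc v
  rw [bd] at hb
  have ho : outSum (fun e => (tl G e, hd G e)) f v
      = ∑ e ∈ univ.filter (fun e => tl G e = v), f e := by
    rw [outSum]
  have hi : inSum (fun e => (tl G e, hd G e)) f v
      = ∑ e ∈ univ.filter (fun e => hd G e = v), f e := by
    rw [inSum]
  rw [ho, hi]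
  linarith

lemma bd_sum {R : Type} [AddCommGroup R] (G : Multigraph V E) {ι : Type} (s : Finset ι)
    (g : ι → E → R) (v : V) :
    bd G (fun x => ∑ i ∈ s, g i x) v = ∑ i ∈ s, bd G (g i) v := by
  simp only [bd]
  rw [Finset.sum_comm (s := univ.filter (fun e => hd G e = v)),
    Finset.sum_comm (s := univ.filter (fun e => tl G e = v)), ← Finset.sum_sub_distrib]

lemma digits_ne_zero {ι : Type} (s : Finset ι) (idx : ι → ℕ)
    (hinj : ∀ i ∈ s, ∀ j ∈ s, idx i = idx j → i = j)
    (ε : ι → ℤ) (hb : ∀ i, |ε i| ≤ 1) (j : ι) (hj : j ∈ s) (hjnz : ε j ≠ 0) :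
    (∑ i ∈ s, 2^(idx i) * ε i) ≠ 0 := by
  set T := s.filter (fun i => ε i ≠ 0) with hT
  have hsum : ∑ i ∈ s, 2^(idx i) * ε i = ∑ i ∈ T, 2^(idx i) * ε i := by
    rw [hT]
    symm
    apply Finset.sum_filter_of_ne
    intro x _ hx
    intro hc
    exact hx (by rw [hc, mul_zero])
  have hjT : j ∈ T := Finset.mem_filter.2 ⟨hj, hjnz⟩
  have hTne : (T.image idx).Nonempty := ⟨idx j, Finset.mem_image_of_mem idx hjT⟩
  set k := (T.image idx).min' hTne with hk
  obtain ⟨i₀, hi₀T, hi₀⟩ := Finset.mem_image.1 ((T.image idx).min'_mem hTne)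
  have hmin : ∀ i ∈ T, k ≤ idx i := by
    intro i hi
    exact Finset.min'_le _ _ (Finset.mem_image_of_mem idx hi)
  have hgt : ∀ i ∈ T.erase i₀, k + 1 ≤ idx i := by
    intro i hi
    rw [Finset.mem_erase] at hi
    have h1 := hmin i hi.2
    have h2 : idx i ≠ k := by
      intro hc
      apply hi.1
      exact hinj i (Finset.mem_filter.1 hi.2).1 i₀ (Finset.mem_filter.1 hi₀T).1
        (hc.trans hi₀.symm)
    omega
  have hdvd : (2:ℤ)^(k+1) ∣ ∑ i ∈ T.erase i₀, 2^(idx i) * ε i := by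
    apply Finset.dvd_sum
    intro i hi
    exact Dvd.dvd.mul_right (pow_dvd_pow 2 (hgt i hi)) _
  rw [hsum, ← Finset.add_sum_erase _ _ hi₀T]
  intro hc
  obtain ⟨c, hcc⟩ := hdvd
  rw [hi₀] at hc
  rw [hcc] at hc
  have heq : (2:ℤ)^k * ε i₀ = - (2^(k+1) * c) := by linarith
  have heq2 : (2:ℤ)^(k+1) = 2^k * 2 := by ring
  rw [heq2] at heq
  have heq3 : (2:ℤ)^k * ε i₀ = 2^k * (-(2*c)) := by linarith
  have hcan : ε i₀ = -(2*c) := by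
    exact mul_left_cancel₀ (pow_ne_zero k (by norm_num : (2:ℤ) ≠ 0)) heq3
  have hnz : ε i₀ ≠ 0 := (Finset.mem_filter.1 hi₀T).2
  have := hb i₀
  rw [abs_le] at this
  omega

/-! ### Initial flow -/

lemma exists_cycle_through (G : Multigraph V E) [Fintype E] (e : E)
    (hnb : ¬ IsBridge G e) :
    ∃ c : E → ℤ, (∀ v, bd G c v = 0) ∧ (c e = 1 ∨ c e = -1) ∧ ∀ e', |c e'| ≤ 1 := by
  rw [IsBridge] at hnb
  push_neg at hnb
  obtain ⟨u, v, hends, hreach⟩ := hnb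
  have hmono : ∀ a b : V, (∃ e', e' ≠ e ∧ G.ends e' = s(a, b)) →
      adj G (fun e' => e' ≠ e) (fun e' => e' ≠ e) Finset.univ a b := by
    rintro a b ⟨e', hne, hab⟩
    rcases sym2_cases G e' a b hab with ⟨h1, h2⟩ | ⟨h1, h2⟩
    · exact ⟨e', Finset.mem_univ _, Or.inl ⟨hne, h1, h2⟩⟩
    · exact ⟨e', Finset.mem_univ _, Or.inr ⟨hne, h2, h1⟩⟩
  have hreach' := Relation.ReflTransGen.mono hmono _ _ hreach
  obtain ⟨χ, hχ1, hχ2⟩ := exists_path_flow G (fun e' => e' ≠ e) (fun e' => e' ≠ e)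
    Finset.univ u v hreach'
  have hz : χ e = 0 := by
    rcases hχ1 e with h0 | ⟨_, hne, _⟩ | ⟨_, hne, _⟩
    · exact h0
    · exact absurd rfl hne
    · exact absurd rfl hne
  have habs : ∀ e', |χ e'| ≤ 1 := by
    intro e'
    rcases hχ1 e' with h0 | ⟨h1, _, _⟩ | ⟨h1, _, _⟩
    · rw [h0]; norm_num
    · rw [h1]; norm_num
    · rw [h1]; norm_num
  rcases sym2_cases G e u v hends with ⟨h1, h2⟩ | ⟨h1, h2⟩
  · -- tl = u, hd = v : take χ - unit e
    refine ⟨χ - unit e, ?_, ?_, ?_⟩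
    · intro w
      rw [bd_sub, hχ2 w, bd_unit, h1, h2]
      ring
    · right
      simp only [Pi.sub_apply, hz, unit, if_pos rfl]
      norm_num
    · intro e'
      by_cases he' : e' = e
      · subst he'
        simp only [Pi.sub_apply, hz, unit, if_pos rfl]
        norm_num
      · have : unit e e' = 0 := by simp [unit, he']
        simp only [Pi.sub_apply, this, sub_zero]
        exact habs e'
  · -- tl = v, hd = u : take χ + unit e
    refine ⟨χ + unit e, ?_, ?_, ?_⟩
    · intro w
      rw [bd_add, hχ2 w, bd_unit, h1, h2]
      ring
    · left
      simp only [Pi.add_apply, hz, unit, if_pos rfl]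
      norm_num
    · intro e'
      by_cases he' : e' = e
      · subst he'
        simp only [Pi.add_apply, hz, unit, if_pos rfl]
        norm_num
      · have : unit e e' = 0 := by simp [unit, he']
        simp only [Pi.add_apply, this, add_zero]
        exact habs e'

lemma exists_initial_flow (G : Multigraph V E) [Fintype E] (σ : E → Bool)
    (hbridge : ∀ e, σ e = true → ¬ IsBridge G e) :
    ∃ r : ℝ, 2 ≤ r ∧ ∃ f : E → ℝ, (∀ v, bd G f v = 0) ∧ (∀ e, |f e| < r) ∧
      (∀ e, σ e = true → 1 ≤ |f e| ∧ |f e| ≤ r - 1) ∧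
      (∀ e, σ e = false → |f e| ≤ r / 2 - 1 ∨ r / 2 + 1 ≤ |f e|) := by
  classical
  have hcyc : ∀ e : E, ∃ c : E → ℤ, (∀ v, bd G c v = 0) ∧
      (σ e = true → (c e = 1 ∨ c e = -1)) ∧ ∀ e', |c e'| ≤ 1 := by
    intro e
    by_cases hσ : σ e = true
    · obtain ⟨c, h1, h2, h3⟩ := exists_cycle_through G e (hbridge e hσ)
      exact ⟨c, h1, fun _ => h2, h3⟩
    · exact ⟨0, fun v => by simp [bd], fun hc => absurd hc hσ, fun e' => by simp⟩
  choose cyc hcyc1 hcyc2 hcyc3 using hcyc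
  set idx : E → ℕ := fun e => (Fintype.equivFin E e : ℕ) with hidx
  have hinj : ∀ i ∈ (univ : Finset E), ∀ j ∈ (univ : Finset E), idx i = idx j → i = j := by
    intro i _ j _ hij
    have := Fin.val_injective hij
    exact (Fintype.equivFin E).injective this
  set f1 : E → ℤ := fun x => ∑ e ∈ univ.filter (fun e => σ e = true),
    2^(idx e) * cyc e x with hf1
  have hf1circ : ∀ v, bd G f1 v = 0 := by
    intro v
    rw [hf1, bd_sum]
    apply Finset.sum_eq_zero
    intro e _
    have : (fun x => 2^(idx e) * cyc e x) = fun x => (2^(idx e) : ℤ) * cyc e x := rfl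
    rw [bd_smul, hcyc1 e v]
    ring
  have hf1nz : ∀ e, σ e = true → f1 e ≠ 0 := by
    intro e hσ
    rw [hf1]
    apply digits_ne_zero (univ.filter (fun e => σ e = true)) idx
      (fun i _ j _ h => hinj i (Finset.mem_univ i) j (Finset.mem_univ j) h)
      (fun e' => cyc e' e) (fun i => hcyc3 i e) e
      (Finset.mem_filter.2 ⟨Finset.mem_univ e, hσ⟩)
    rcases hcyc2 e hσ with h | h <;> rw [h] <;> norm_num
  set B : ℤ := ∑ e : E, |f1 e| with hB
  have hBnn : 0 ≤ B := Finset.sum_nonneg (fun e _ => abs_nonneg _)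
  have hfB : ∀ e, |f1 e| ≤ B := by
    intro e
    exact Finset.single_le_sum (fun e' _ => abs_nonneg (f1 e')) (Finset.mem_univ e)
  refine ⟨2*(B:ℝ) + 4, by push_cast; linarith [(show (0:ℝ) ≤ (B:ℝ) by exact_mod_cast hBnn)],
    fun e => (f1 e : ℝ), ?_, ?_, ?_, ?_⟩
  · intro v
    rw [bd_cast, hf1circ v]
    norm_num
  · intro e
    have h1 := hfB e
    have h1' : (|f1 e| : ℝ) ≤ (B:ℝ) := by exact_mod_cast h1
    rw [← Int.cast_abs] at h1' ⊢
    have : (0:ℝ) ≤ (B:ℝ) := by exact_mod_cast hBnn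
    push_cast at h1' ⊢
    linarith
  · intro e hσ
    have h1 := hfB e
    have hnz := hf1nz e hσ
    have h2 : 1 ≤ |f1 e| := by
      rcases abs_cases (f1 e) with ⟨ha, _⟩ | ⟨ha, _⟩ <;> omega
    have h1' : (|f1 e| : ℝ) ≤ (B:ℝ) := by exact_mod_cast h1
    have h2' : (1:ℝ) ≤ (|f1 e| : ℝ) := by exact_mod_cast h2
    have hB' : (0:ℝ) ≤ (B:ℝ) := by exact_mod_cast hBnn
    rw [← Int.cast_abs]
    constructor <;> push_cast at h1' h2' ⊢ <;> linarith
  · intro e _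
    left
    have h1 := hfB e
    have h1' : (|f1 e| : ℝ) ≤ (B:ℝ) := by exact_mod_cast h1
    rw [← Int.cast_abs]
    push_cast at h1' ⊢
    linarith

end CFI

/-- For a finite signed graph with no positive bridge, the circular flow index
is attained by (and is the minimum of) a rational `p/q` with
`1 ≤ 2q ≤ p ≤ 2|E(G)|`; in particular it is rational. -/
theorem circFlowIndex_is_rational_min [Fintype E] [Nonempty E]
    (G : Multigraph V E) (σ : E → Bool)
    (hbridge : ∀ e, σ e = true → ¬ IsBridge G e) :
    ∃ p q : ℕ, 1 ≤ 2 * q ∧ 2 * q ≤ p ∧ p ≤ 2 * Fintype.card E ∧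
      (∃ (D : E → V × V) (f : E → ℝ), IsCircularFlow G σ ((p : ℝ) / (q : ℝ)) D f) ∧
      circFlowIndex G σ = (p : ℝ) / (q : ℝ) := by
  classical
  obtain ⟨r₀, hr₀2, f₀, hf₀circ, hf₀b, hf₀pos, hf₀neg⟩ := CFI.exists_initial_flow G σ hbridge
  obtain ⟨β₀, hbox₀⟩ := CFI.exists_branch σ r₀ hr₀2 f₀ hf₀b hf₀pos hf₀neg
  have hne : ∃ β : E → Fin 3, CFI.Adm G σ β :=
    ⟨β₀, r₀, hr₀2, CFI.cutConds_of_boxed G σ β₀ r₀ f₀ hf₀circ hbox₀⟩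
  obtain ⟨P, Q, hQ1, hPQ, hPm, hcQ, f, hfc, hf1, hf2, hf3⟩ := CFI.exists_good_flow G σ hne
  have hQR : (0:ℝ) < (Q:ℝ) := by exact_mod_cast hQ1
  have hr2 : (2:ℝ) ≤ (P:ℝ)/(Q:ℝ) := by
    rw [le_div_iff₀ hQR]
    exact_mod_cast (by linarith : (2*Q:ℤ) ≤ P)
  have hflow : IsCircularFlow G σ ((P:ℝ)/(Q:ℝ)) (fun e => (CFI.tl G e, CFI.hd G e)) f :=
    CFI.isCircularFlow_of_bd G σ ((P:ℝ)/(Q:ℝ)) f hfc hf1 hf2 hf3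
  have hmem : (P:ℝ)/(Q:ℝ) ∈ {r : ℝ | 2 ≤ r ∧ ∃ (D : E → V × V) (g : E → ℝ),
      IsCircularFlow G σ r D g} := ⟨hr2, _, f, hflow⟩
  have hlbnd : ∀ r ∈ {r : ℝ | 2 ≤ r ∧ ∃ (D : E → V × V) (g : E → ℝ),
      IsCircularFlow G σ r D g}, (P:ℝ)/(Q:ℝ) ≤ r := by
    rintro r ⟨hr2', D, g, hg⟩
    obtain ⟨g', hg'c, hg'abs⟩ := CFI.normalize G D g hg.1 hg.2.2.2.2
    have hb' : ∀ e, |g' e| < r := fun e => by rw [hg'abs e]; exact hg.2.1 e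
    have hp' : ∀ e, σ e = true → 1 ≤ |g' e| ∧ |g' e| ≤ r - 1 := fun e he => by
      rw [hg'abs e]; exact hg.2.2.1 e he
    have hn' : ∀ e, σ e = false → |g' e| ≤ r/2 - 1 ∨ r/2 + 1 ≤ |g' e| := fun e he => by
      rw [hg'abs e]; exact hg.2.2.2.1 e he
    obtain ⟨β, hbox⟩ := CFI.exists_branch σ r hr2' g' hb' hp' hn'
    have hcc := CFI.cutConds_of_boxed G σ β r g' hg'c hbox
    have h1 : CFI.cbar G σ ≤ CFI.lb G σ β := CFI.cbar_le G σ β ⟨r, hr2', hcc⟩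
    have h2 : CFI.lb G σ β ≤ r := CFI.lb_le G σ β r hr2' hcc
    calc (P:ℝ)/(Q:ℝ) = CFI.cbar G σ := hcQ.symm
    _ ≤ CFI.lb G σ β := h1
    _ ≤ r := h2
  have hIndex : circFlowIndex G σ = (P:ℝ)/(Q:ℝ) := by
    rw [circFlowIndex]
    exact IsLeast.csInf_eq ⟨hmem, hlbnd⟩
  have hPt : ((P.toNat : ℤ)) = P := Int.toNat_of_nonneg (by omega)
  have hQt : ((Q.toNat : ℤ)) = Q := Int.toNat_of_nonneg (by omega)
  have hPr : ((P.toNat : ℕ) : ℝ) = (P:ℝ) := by exact_mod_cast hPt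
  have hQr : ((Q.toNat : ℕ) : ℝ) = (Q:ℝ) := by exact_mod_cast hQt
  refine ⟨P.toNat, Q.toNat, by omega, by omega, by omega, ?_, ?_⟩
  · rw [hPr, hQr]
    exact ⟨_, f, hflow⟩
  · rw [hPr, hQr]
    exact hIndex
end

section
/- A signed Eulerian graph (G, σ) admits a modulo 2k-orientation if and only if it admits an orientation D such that for each vertex v, the out-degree minus the in-degree of v is congruent to 2k times the positive degree of v, modulo 4k. -/
open Finset

attribute [local instance] Classical.propDecidable

variable {V E : Type}

/-- Out-degree minus in-degree of `v` under orientation `D`, counted over the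
edge set `F`. -/
noncomputable def netDeg [Fintype E] (D : E → V × V) (F : Finset E) (v : V) : ℤ :=
  ((F.filter (fun e => (D e).1 = v)).card : ℤ) -
    ((F.filter (fun e => (D e).2 = v)).card : ℤ)

/-- `(G, σ)` admits a modulo `ℓ`-orientation: there is an inversing-equivalent
signature `σ'` and an orientation `D` such that at each vertex,
`(ℓ-1) · (out minus in degree over σ'-positive edges)` equals the
`(out minus in degree over σ'-negative edges)`. -/
def HasModuloOrientation [Fintype E] (G : Multigraph V E) (σ : E → Bool)
    (ℓ : ℤ) : Prop :=
  ∃ σ' : E → Bool, InversingEquiv G σ σ' ∧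
    ∃ D : E → V × V, IsOrientation G D ∧
      ∀ v, (ℓ - 1) * netDeg D (posEdges E σ') v = netDeg D (negEdges E σ') v

section Aux
set_option linter.unusedSectionVars false
variable {V E : Type} [Fintype E]

noncomputable def chi (D : E → V × V) (e : E) (v : V) : ℤ :=
  (if (D e).1 = v then 1 else 0) - (if (D e).2 = v then 1 else 0)

lemma netDeg_eq_sum (D : E → V × V) (F : Finset E) (v : V) :
    netDeg D F v = ∑ e ∈ F, chi D e v := by
  unfold netDeg chi
  rw [Finset.sum_sub_distrib]
  congr 1 <;> rw [Finset.sum_boole]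

/-- `StepE D P e a b`: edge `e` provides an augmenting step from `a` to `b`
with respect to the current set `P`. -/
def StepE (D : E → V × V) (P : Finset E) (e : E) (a b : V) : Prop :=
  (e ∉ P ∧ D e = (a, b)) ∨ (e ∈ P ∧ D e = (b, a))

def Step (D : E → V × V) (P : Finset E) (a b : V) : Prop := ∃ e, StepE D P e a b

def IsWalk (D : E → V × V) (P : Finset E) : V → List E → V → Prop
  | a, [], b => a = b
  | a, e :: l, b => ∃ c, StepE D P e a c ∧ IsWalk D P c l b

lemma stepE_unique {D : E → V × V} {P : Finset E} {e : E} {a b a' b' : V}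
    (h : StepE D P e a b) (h' : StepE D P e a' b') : a = a' ∧ b = b' := by
  rcases h with ⟨he, hd⟩ | ⟨he, hd⟩ <;> rcases h' with ⟨he', hd'⟩ | ⟨he', hd'⟩ <;>
    first
      | (exact absurd he' he)
      | (exact absurd he he')
      | (rw [hd] at hd'
         exact ⟨congrArg Prod.fst hd', congrArg Prod.snd hd'⟩)
      | (rw [hd] at hd'
         exact ⟨congrArg Prod.snd hd', congrArg Prod.fst hd'⟩)

lemma isWalk_append {D : E → V × V} {P : Finset E} :
    ∀ (l₁ l₂ : List E) (a b : V),
      IsWalk D P a (l₁ ++ l₂) b ↔ ∃ c, IsWalk D P a l₁ c ∧ IsWalk D P c l₂ b := by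
  intro l₁
  induction l₁ with
  | nil => intro l₂ a b; constructor
           · intro h; exact ⟨a, rfl, h⟩
           · rintro ⟨c, rfl, h⟩; exact h
  | cons e l ih =>
      intro l₂ a b
      constructor
      · rintro ⟨c, hs, hw⟩
        obtain ⟨d, h1, h2⟩ := (ih l₂ c b).1 hw
        exact ⟨d, ⟨c, hs, h1⟩, h2⟩
      · rintro ⟨d, ⟨c, hs, h1⟩, h2⟩
        exact ⟨c, hs, (ih l₂ c b).2 ⟨d, h1, h2⟩⟩

lemma isWalk_congr {D : E → V × V} {P P' : Finset E} :
    ∀ (l : List E) (a b : V), (∀ e ∈ l, (e ∈ P ↔ e ∈ P')) →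
      IsWalk D P a l b → IsWalk D P' a l b := by
  intro l
  induction l with
  | nil => intro a b _ h; exact h
  | cons e l ih =>
      rintro a b hmem ⟨c, hs, hw⟩
      refine ⟨c, ?_, ih c b (fun e' he' => hmem e' (List.mem_cons_of_mem _ he')) hw⟩
      rcases hs with ⟨he, hd⟩ | ⟨he, hd⟩
      · exact Or.inl ⟨fun h => he ((hmem e List.mem_cons_self).2 h), hd⟩
      · exact Or.inr ⟨(hmem e List.mem_cons_self).1 he, hd⟩

lemma reach_walk {D : E → V × V} {P : Finset E} {a b : V}
    (h : Relation.ReflTransGen (Step D P) a b) : ∃ l, IsWalk D P a l b := by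
  induction h using Relation.ReflTransGen.head_induction_on with
  | refl => exact ⟨[], rfl⟩
  | head hs _ ih =>
      obtain ⟨e, he⟩ := hs
      obtain ⟨l, hl⟩ := ih
      exact ⟨e :: l, _, he, hl⟩
/-- Flip the membership of `e` in `P`. -/
noncomputable def flipE (P : Finset E) (e : E) : Finset E :=
  if e ∈ P then P.erase e else insert e P

lemma mem_flipE {P : Finset E} {e e' : E} (hne : e' ≠ e) :
    (e' ∈ flipE P e ↔ e' ∈ P) := by
  unfold flipE
  split <;> simp [hne]

lemma netDeg_flipE {D : E → V × V} {P : Finset E} {e : E} {c w : V}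
    (hs : StepE D P e c w) (v : V) :
    netDeg D (flipE P e) v =
      netDeg D P v + (if c = v then 1 else 0) - (if w = v then 1 else 0) := by
  rcases hs with ⟨he, hd⟩ | ⟨he, hd⟩
  · rw [netDeg_eq_sum, netDeg_eq_sum, flipE, if_neg he, Finset.sum_insert he]
    have : chi D e v = (if c = v then 1 else 0) - (if w = v then 1 else 0) := by
      unfold chi; rw [hd]
    rw [this]; ring
  · rw [netDeg_eq_sum, netDeg_eq_sum, flipE, if_pos he,
      ← Finset.add_sum_erase _ _ he]
    have : chi D e v = (if w = v then 1 else 0) - (if c = v then 1 else 0) := by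
      unfold chi; rw [hd]
    rw [this]; ring
lemma degIn_eq (G : Multigraph V E) (D : E → V × V) (hD : IsOrientation G D)
    (F : Finset E) (v : V) :
    (degIn G F v : ℤ) = ((F.filter (fun e => (D e).1 = v)).card : ℤ)
      + ((F.filter (fun e => (D e).2 = v)).card : ℤ) := by
  unfold degIn
  rw [← Nat.cast_add, ← Finset.card_union_of_disjoint]
  · congr 2
    ext e
    simp only [Finset.mem_union, Finset.mem_filter]
    constructor
    · rintro ⟨hF, hv⟩
      rw [← hD e, Sym2.mem_iff] at hv
      rcases hv with h | h
      · exact Or.inl ⟨hF, h.symm⟩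
      · exact Or.inr ⟨hF, h.symm⟩
    · rintro (⟨hF, h⟩ | ⟨hF, h⟩) <;> refine ⟨hF, ?_⟩ <;> rw [← hD e, Sym2.mem_iff]
      · exact Or.inl h.symm
      · exact Or.inr h.symm
  · rw [Finset.disjoint_filter]
    intro e _ h1 h2
    exact G.noLoop e (by rw [← hD e, h1, h2]; exact Sym2.mk_isDiag_iff.mpr rfl)

lemma netDeg_parity (G : Multigraph V E) (D : E → V × V) (hD : IsOrientation G D)
    (F : Finset E) (v : V) :
    (2:ℤ) ∣ ((degIn G F v : ℤ) - netDeg D F v) := by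
  rw [degIn_eq G D hD F v]
  unfold netDeg
  exact ⟨(F.filter (fun e => (D e).2 = v)).card, by ring⟩

lemma degIn_sdiff_add (G : Multigraph V E) (A B : Finset E) (v : V) :
    degIn G A v = degIn G (A \ B) v + degIn G (A ∩ B) v := by
  unfold degIn
  conv_lhs => rw [← Finset.sdiff_union_inter A B]
  rw [Finset.filter_union, Finset.card_union_of_disjoint]
  exact Finset.disjoint_filter_filter
    (Finset.disjoint_of_subset_right Finset.inter_subset_right Finset.sdiff_disjoint)

lemma degIn_symmDiff (G : Multigraph V E) (A B : Finset E) (v : V) :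
    (2:ℤ) ∣ ((degIn G (symmDiff A B) v : ℤ) - degIn G A v - degIn G B v) := by
  have h1 : degIn G (symmDiff A B) v = degIn G (A \ B) v + degIn G (B \ A) v := by
    unfold degIn
    rw [symmDiff_def]
    have : A \ B ⊔ B \ A = (A \ B) ∪ (B \ A) := rfl
    rw [this, Finset.filter_union, Finset.card_union_of_disjoint]
    exact Finset.disjoint_filter_filter
      (Finset.disjoint_of_subset_right Finset.sdiff_subset Finset.sdiff_disjoint)
  have h2 := degIn_sdiff_add G A B v
  have h3 := degIn_sdiff_add G B A v
  have h4 : A ∩ B = B ∩ A := Finset.inter_comm A B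
  rw [h4] at h2
  exact ⟨-(degIn G (B ∩ A) v : ℤ), by
    rw [h1]; push_cast; rw [h2, h3]; push_cast; ring⟩

lemma neg_symmDiff_eq_pos (σ σ' : E → Bool) :
    symmDiff (negEdges E σ) (negEdges E σ') = symmDiff (posEdges E σ) (posEdges E σ') := by
  ext e
  simp only [symmDiff_def, Finset.sup_eq_union, Finset.mem_union, Finset.mem_sdiff,
    negEdges, posEdges, Finset.mem_filter, Finset.mem_univ, true_and]
  cases h : σ e <;> cases h' : σ' e <;> simp

lemma netDeg_univ_split (D : E → V × V) (F : Finset E) (v : V) :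
    netDeg D Finset.univ v = netDeg D F v + netDeg D (Finset.univ \ F) v := by
  rw [netDeg_eq_sum, netDeg_eq_sum, netDeg_eq_sum,
    ← Finset.sum_union Finset.disjoint_sdiff,
    Finset.union_sdiff_of_subset (Finset.subset_univ F)]

lemma negEdges_eq (σ : E → Bool) : negEdges E σ = Finset.univ \ posEdges E σ := by
  ext e
  simp [negEdges, posEdges]
lemma key (D : E → V × V) (hnl : ∀ e, (D e).1 ≠ (D e).2)
    (k : ℤ) (hk : 1 ≤ k) (m : V → ℤ)
    (hm : ∀ v, 2 * k * m v = netDeg D Finset.univ v) :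
    ∃ P : Finset E, ∀ v, netDeg D P v = m v := by
  classical
  set T : Finset V :=
    (Finset.univ.image fun e => (D e).1) ∪ (Finset.univ.image fun e => (D e).2) with hTdef
  have hT1 : ∀ e, (D e).1 ∈ T := fun e =>
    Finset.mem_union_left _ (Finset.mem_image_of_mem _ (Finset.mem_univ e))
  have hT2 : ∀ e, (D e).2 ∈ T := fun e =>
    Finset.mem_union_right _ (Finset.mem_image_of_mem _ (Finset.mem_univ e))
  have hchi0 : ∀ e, ∀ v ∉ T, chi D e v = 0 := by
    intro e v hv
    unfold chi
    rw [if_neg, if_neg]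
    · simp
    · rintro rfl; exact hv (hT2 e)
    · rintro rfl; exact hv (hT1 e)
  have hout : ∀ v ∉ T, ∀ F : Finset E, netDeg D F v = 0 := by
    intro v hv F
    rw [netDeg_eq_sum]
    exact Finset.sum_eq_zero fun e _ => hchi0 e v hv
  have hmout : ∀ v ∉ T, m v = 0 := by
    intro v hv
    have h := hm v
    rw [hout v hv] at h
    have h2k : (2*k) ≠ 0 := by intro h'; omega
    exact (mul_eq_zero.mp h).elim (fun h'' => absurd h'' h2k) id
  have hchiT : ∀ e, ∑ v ∈ T, chi D e v = 0 := by
    intro e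
    unfold chi
    rw [Finset.sum_sub_distrib, Finset.sum_ite_eq, Finset.sum_ite_eq,
      if_pos (hT1 e), if_pos (hT2 e), sub_self]
  have hsumNet : ∀ F : Finset E, ∑ v ∈ T, netDeg D F v = 0 := by
    intro F
    rw [Finset.sum_congr rfl (fun v _ => netDeg_eq_sum D F v), Finset.sum_comm]
    exact Finset.sum_eq_zero fun e _ => hchiT e
  have hsumm : ∑ v ∈ T, m v = 0 := by
    have h : (2*k) * ∑ v ∈ T, m v = 0 := by
      rw [Finset.mul_sum, Finset.sum_congr rfl fun v _ => hm v]
      exact hsumNet Finset.univ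
    have h2k : (2*k) ≠ 0 := by intro h'; omega
    exact (mul_eq_zero.mp h).elim (fun h'' => absurd h'' h2k) id
  set Ψ : Finset E → ℤ := fun P => ∑ v ∈ T, |netDeg D P v - m v| with hΨdef
  have hΨnonneg : ∀ P, 0 ≤ Ψ P := fun P => Finset.sum_nonneg fun v _ => abs_nonneg _
  have hΨ0 : ∀ P, Ψ P = 0 → ∀ v, netDeg D P v = m v := by
    intro P h v
    by_cases hv : v ∈ T
    · have h1 := (Finset.sum_eq_zero_iff_of_nonneg (fun v _ => abs_nonneg _)).1 h v hv
      have h2 := abs_eq_zero.mp h1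
      linarith
    · rw [hout v hv, hmout v hv]
  by_contra hno
  push_neg at hno
  have hΨpos : ∀ P, 0 < Ψ P := by
    intro P
    rcases lt_or_eq_of_le (hΨnonneg P) with h | h
    · exact h
    · obtain ⟨v, hv⟩ := hno P; exact absurd (hΨ0 P h.symm v) hv
  have hdef : ∀ P : Finset E, ∃ u ∈ T, netDeg D P u < m u := by
    intro P
    by_contra hcon
    push_neg at hcon
    have hsum : ∑ v ∈ T, (netDeg D P v - m v) = 0 := by
      rw [Finset.sum_sub_distrib, hsumNet P, hsumm, sub_zero]
    have hzero : ∀ v ∈ T, netDeg D P v - m v = 0 :=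
      fun v hv => (Finset.sum_eq_zero_iff_of_nonneg
        (fun u hu => sub_nonneg.mpr (hcon u hu))).1 hsum v hv
    have hΨz : Ψ P = 0 := Finset.sum_eq_zero fun v hv => by rw [hzero v hv, abs_zero]
    exact absurd hΨz (ne_of_gt (hΨpos P))
  -- existence of an augmenting walk
  have haug : ∀ P : Finset E, ∃ u w l, netDeg D P u < m u ∧ m w < netDeg D P w ∧
      IsWalk D P u l w := by
    intro P
    obtain ⟨u, huT, hu⟩ := hdef P
    set R : Finset V := T.filter (fun v => Relation.ReflTransGen (Step D P) u v) with hRdef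
    have huR : u ∈ R := Finset.mem_filter.mpr ⟨huT, Relation.ReflTransGen.refl⟩
    have hclosed : ∀ a b, a ∈ R → Step D P a b → b ∈ R := by
      intro a b ha hs
      obtain ⟨-, hreach⟩ := Finset.mem_filter.mp ha
      have hbT : b ∈ T := by
        obtain ⟨e, he⟩ := hs
        rcases he with ⟨-, hd⟩ | ⟨-, hd⟩
        · have h2 := hT2 e; rw [hd] at h2; exact h2
        · have h1 := hT1 e; rw [hd] at h1; exact h1
      exact Finset.mem_filter.mpr ⟨hbT, hreach.tail hs⟩
    have hcount : 0 ≤ ∑ v ∈ R, (2 * k * (netDeg D P v - m v)) := by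
      have h1 : ∀ v, 2 * k * (netDeg D P v - m v)
          = 2*k*netDeg D P v - netDeg D Finset.univ v := by
        intro v; rw [← hm v]; ring
      have h2 : ∀ F : Finset E, ∑ v ∈ R, netDeg D F v =
          ∑ e ∈ F, ((if (D e).1 ∈ R then (1:ℤ) else 0) - (if (D e).2 ∈ R then 1 else 0)) := by
        intro F
        rw [Finset.sum_congr rfl (fun v _ => netDeg_eq_sum D F v), Finset.sum_comm]
        refine Finset.sum_congr rfl fun e _ => ?_
        unfold chi
        rw [Finset.sum_sub_distrib, Finset.sum_ite_eq, Finset.sum_ite_eq]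
      have h3 : ∀ F : Finset E, ∑ e ∈ F,
          ((if (D e).1 ∈ R then (1:ℤ) else 0) - (if (D e).2 ∈ R then 1 else 0)) =
          ∑ e ∈ Finset.univ, (if e ∈ F then
            ((if (D e).1 ∈ R then (1:ℤ) else 0) - (if (D e).2 ∈ R then 1 else 0)) else 0) := by
        intro F
        rw [Finset.sum_ite_mem, Finset.univ_inter]
      calc (0:ℤ) ≤ ∑ e ∈ Finset.univ,
            (2*k*(if e ∈ P then
              ((if (D e).1 ∈ R then (1:ℤ) else 0) - (if (D e).2 ∈ R then 1 else 0)) else 0)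
             - ((if (D e).1 ∈ R then (1:ℤ) else 0) - (if (D e).2 ∈ R then 1 else 0))) := by
              refine Finset.sum_nonneg fun e _ => ?_
              by_cases h1R : (D e).1 ∈ R <;> by_cases h2R : (D e).2 ∈ R <;>
                by_cases heP : e ∈ P <;> simp only [if_pos, if_neg, h1R, h2R, heP,
                  if_true, if_false] <;>
                first
                  | linarith
                  | exact absurd (hclosed _ _ h1R ⟨e, Or.inl ⟨heP, rfl⟩⟩) h2R
                  | exact absurd (hclosed _ _ h2R ⟨e, Or.inr ⟨heP, rfl⟩⟩) h1R
        _ = 2*k*(∑ v ∈ R, netDeg D P v) - ∑ v ∈ R, netDeg D Finset.univ v := by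
              rw [Finset.sum_sub_distrib, ← Finset.mul_sum, h2, h2, h3 P]
        _ = ∑ v ∈ R, (2 * k * (netDeg D P v - m v)) := by
              rw [Finset.sum_congr rfl fun v (_ : v ∈ R) => h1 v, Finset.sum_sub_distrib,
                ← Finset.mul_sum]
    by_cases hex : ∃ w ∈ R, m w < netDeg D P w
    · obtain ⟨w, hwR, hw⟩ := hex
      obtain ⟨-, hreach⟩ := Finset.mem_filter.mp hwR
      obtain ⟨l, hl⟩ := reach_walk hreach
      exact ⟨u, w, l, hu, hw, hl⟩
    · exfalso
      push_neg at hex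
      have hlt : ∑ v ∈ R, (2 * k * (netDeg D P v - m v)) < ∑ v ∈ R, (0:ℤ) := by
        refine Finset.sum_lt_sum (fun v hv => ?_) ⟨u, huR, ?_⟩
        · have := hex v hv
          have h0 : netDeg D P v - m v ≤ 0 := by linarith
          nlinarith
        · have h0 : netDeg D P u - m u ≤ -1 := by linarith
          nlinarith
      rw [Finset.sum_const_zero] at hlt
      linarith
  -- choose a minimal counterexample
  obtain ⟨Pm, -, hPm⟩ := Finset.exists_min_image (Finset.univ : Finset (Finset E)) Ψ
    ⟨∅, Finset.mem_univ ∅⟩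
  set AugLen : Finset E → Set ℕ := fun P =>
    {n | ∃ u w l, netDeg D P u < m u ∧ m w < netDeg D P w ∧ IsWalk D P u l w ∧
      l.length = n} with hALdef
  have hAne : ∀ P, (AugLen P).Nonempty := by
    intro P
    obtain ⟨u, w, l, h1, h2, h3⟩ := haug P
    exact ⟨l.length, u, w, l, h1, h2, h3, rfl⟩
  set dd : Finset E → ℕ := fun P => sInf (AugLen P) with hdddef
  set S : Finset (Finset E) := Finset.univ.filter (fun Q => Ψ Q = Ψ Pm) with hSdef
  obtain ⟨P0, hP0S, hP0min⟩ := Finset.exists_min_image S dd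
    ⟨Pm, Finset.mem_filter.mpr ⟨Finset.mem_univ _, rfl⟩⟩
  have hΨP0 : Ψ P0 = Ψ Pm := (Finset.mem_filter.mp hP0S).2
  have hsinf : ∃ u w l, netDeg D P0 u < m u ∧ m w < netDeg D P0 w ∧
      IsWalk D P0 u l w ∧ l.length = dd P0 := Nat.sInf_mem (hAne P0)
  obtain ⟨u, w, l, hu, hw, hwalk, hlen⟩ := hsinf
  have hlne : l ≠ [] := by
    intro h
    rw [h] at hwalk
    have : u = w := hwalk
    rw [this] at hu; linarith
  obtain ⟨l₁, e, rfl⟩ : ∃ l₁ e, l = l₁ ++ [e] := by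
    rcases List.eq_nil_or_concat l with h | ⟨L, b, h⟩
    · exact absurd h hlne
    · exact ⟨L, b, by simpa [List.concat_eq_append] using h⟩
  obtain ⟨c, hwl₁, hwe⟩ := (isWalk_append l₁ [e] u w).1 hwalk
  obtain ⟨c', hse, hc'⟩ := hwe
  have hc'w : c' = w := hc'
  rw [hc'w] at hse
  -- the last edge does not occur earlier in the walk
  have henl : e ∉ l₁ := by
    intro hmem'
    obtain ⟨l₂, l₃, rfl⟩ := List.append_of_mem hmem'
    obtain ⟨x, hwl₂, hwl₃⟩ := (isWalk_append l₂ (e :: l₃) u c).1 hwl₁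
    obtain ⟨y, hsex, hwl₃'⟩ := hwl₃
    obtain ⟨hxc, hyw⟩ := stepE_unique hsex hse
    have hnew : IsWalk D P0 u (l₂ ++ [e]) w :=
      (isWalk_append l₂ [e] u w).2 ⟨x, hwl₂, y, hsex, hyw⟩
    have hmemA : (l₂ ++ [e]).length ∈ AugLen P0 := ⟨u, w, _, hu, hw, hnew, rfl⟩
    have hle : dd P0 ≤ (l₂ ++ [e]).length := Nat.sInf_le hmemA
    have : ((l₂ ++ e :: l₃) ++ [e]).length = dd P0 := hlen
    simp only [List.length_append, List.length_cons, List.length_singleton] at hle this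
    omega
  have hcw : c ≠ w := by
    rcases hse with ⟨-, hd⟩ | ⟨-, hd⟩
    · have := hnl e; rw [hd] at this; exact this
    · have := hnl e; rw [hd] at this; exact fun h => this h.symm
  have hcT : c ∈ T := by
    rcases hse with ⟨-, hd⟩ | ⟨-, hd⟩
    · have h1 := hT1 e; rw [hd] at h1; exact h1
    · have h2 := hT2 e; rw [hd] at h2; exact h2
  have hwT : w ∈ T := by
    rcases hse with ⟨-, hd⟩ | ⟨-, hd⟩
    · have h2 := hT2 e; rw [hd] at h2; exact h2
    · have h1 := hT1 e; rw [hd] at h1; exact h1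
  set P' : Finset E := flipE P0 e with hP'def
  have hnd' : ∀ v, netDeg D P' v =
      netDeg D P0 v + (if c = v then 1 else 0) - (if w = v then 1 else 0) :=
    netDeg_flipE hse
  have hdiff : Ψ P' - Ψ P0 =
      (|netDeg D P0 c - m c + 1| - |netDeg D P0 c - m c|)
      + (|netDeg D P0 w - m w - 1| - |netDeg D P0 w - m w|) := by
    have hstep1 : Ψ P' - Ψ P0 =
        ∑ v ∈ T, (|netDeg D P' v - m v| - |netDeg D P0 v - m v|) := by
      rw [Finset.sum_sub_distrib]
    have hsub : ({c, w} : Finset V) ⊆ T := by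
      intro x hx
      rcases Finset.mem_insert.mp hx with rfl | hx
      · exact hcT
      · rw [Finset.mem_singleton.mp hx]; exact hwT
    have hzero : ∀ v ∈ T, v ∉ ({c, w} : Finset V) →
        |netDeg D P' v - m v| - |netDeg D P0 v - m v| = 0 := by
      intro v _ hv
      rw [Finset.mem_insert, Finset.mem_singleton] at hv
      push_neg at hv
      rw [hnd' v, if_neg (fun h => hv.1 h.symm), if_neg (fun h => hv.2 h.symm)]
      ring_nf
    rw [hstep1, ← Finset.sum_subset hsub hzero, Finset.sum_pair hcw,
      hnd' c, hnd' w, if_pos rfl, if_pos rfl, if_neg hcw, if_neg (fun h => hcw h.symm)]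
    ring_nf
  have hxw : 1 ≤ netDeg D P0 w - m w := by linarith
  have habsw : |netDeg D P0 w - m w - 1| - |netDeg D P0 w - m w| = -1 := by
    rw [abs_of_nonneg (by linarith), abs_of_nonneg (by linarith)]
    ring
  by_cases hxc : netDeg D P0 c - m c < 0
  · -- Ψ strictly decreases, contradiction with minimality of Ψ Pm
    have habsc : |netDeg D P0 c - m c + 1| - |netDeg D P0 c - m c| = -1 := by
      rw [abs_of_nonpos (by linarith), abs_of_nonpos (by linarith)]
      ring
    have hΨ2 : Ψ P' = Ψ P0 - 2 := by linarith [hdiff]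
    have hge := hPm P' (Finset.mem_univ P')
    linarith [hΨP0, hΨpos P0]
  · push_neg at hxc
    have habsc : |netDeg D P0 c - m c + 1| - |netDeg D P0 c - m c| = 1 := by
      rw [abs_of_nonneg (by linarith), abs_of_nonneg (by linarith)]
      ring
    have hΨeq : Ψ P' = Ψ P0 := by linarith [hdiff]
    have hP'S : P' ∈ S := Finset.mem_filter.mpr ⟨Finset.mem_univ _, by rw [hΨeq, hΨP0]⟩
    -- u is still deficient, c is now in excess, and l₁ is a valid walk in P'
    have huc : u ≠ c := by intro h; rw [h] at hu; linarith
    have huw : u ≠ w := by intro h; rw [h] at hu; linarith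
    have hu' : netDeg D P' u < m u := by
      rw [hnd' u, if_neg (fun h => huc h.symm), if_neg (fun h => huw h.symm)]
      linarith
    have hc' : m c < netDeg D P' c := by
      rw [hnd' c, if_pos rfl, if_neg (fun h => hcw h.symm)]
      linarith
    have hwalk' : IsWalk D P' u l₁ c := by
      refine isWalk_congr l₁ u c (fun e' he' => ?_) hwl₁
      have hne : e' ≠ e := fun h => henl (by rw [← h]; exact he')
      exact (mem_flipE hne).symm
    have hmemA : l₁.length ∈ AugLen P' := ⟨u, c, l₁, hu', hc', hwalk', rfl⟩
    have hle : dd P' ≤ l₁.length := Nat.sInf_le hmemA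
    have hge : dd P0 ≤ dd P' := hP0min P' hP'S
    have hlenl : (l₁ ++ [e]).length = dd P0 := hlen
    simp only [List.length_append, List.length_singleton] at hlenl
    omega
end Aux
/-- A signed Eulerian graph admits a modulo `2k`-orientation iff it admits an
orientation whose out-degree minus in-degree at each vertex `v` is congruent to
`2k · d⁺(v)` modulo `4k`. -/
theorem eulerian_mod2k_orientation_iff [Fintype E] (G : Multigraph V E)
    (σ : E → Bool) (k : ℕ) (hk : 1 ≤ k)
    (hEuler : ∀ v, Even (degIn G univ v)) :
    HasModuloOrientation G σ (2 * (k : ℤ)) ↔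
      ∃ D : E → V × V, IsOrientation G D ∧
        ∀ v, netDeg D univ v ≡
          2 * (k : ℤ) * (degIn G (posEdges E σ) v : ℤ) [ZMOD (4 * (k : ℤ))] := by
  classical
  constructor
  · rintro ⟨σ', hequiv, D, hD, heq⟩
    refine ⟨D, hD, fun v => ?_⟩
    rw [Int.modEq_iff_dvd]
    have hsplit := netDeg_univ_split D (posEdges E σ') v
    rw [← negEdges_eq σ'] at hsplit
    have hN : netDeg D Finset.univ v = 2*(k:ℤ) * netDeg D (posEdges E σ') v := by
      rw [hsplit, ← heq v]; ring
    obtain ⟨a, ha⟩ := netDeg_parity G D hD (posEdges E σ') v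
    have hpar := hequiv v
    rw [neg_symmDiff_eq_pos] at hpar
    rw [← Int.even_coe_nat] at hpar
    obtain ⟨b, hb⟩ := hpar
    obtain ⟨cc, hc⟩ := degIn_symmDiff G (posEdges E σ) (posEdges E σ') v
    have h2 : (2:ℤ) ∣ (netDeg D (posEdges E σ') v - (degIn G (posEdges E σ) v : ℤ)) :=
      ⟨b - cc - (degIn G (posEdges E σ) v : ℤ) - a, by omega⟩
    obtain ⟨t, ht⟩ := h2
    exact ⟨-t, by rw [hN]; linear_combination (-2*(k:ℤ)) * ht⟩
  · rintro ⟨D, hD, hcong⟩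
    have hnl : ∀ e, (D e).1 ≠ (D e).2 := by
      intro e h
      exact G.noLoop e (by rw [← hD e, h]; exact Sym2.mk_isDiag_iff.mpr rfl)
    have hdvd : ∀ v, (2*(k:ℤ)) ∣ netDeg D Finset.univ v := by
      intro v
      obtain ⟨t, ht⟩ := Int.modEq_iff_dvd.mp (hcong v)
      exact ⟨(degIn G (posEdges E σ) v : ℤ) - 2*t, by linear_combination -ht⟩
    set m : V → ℤ := fun v => netDeg D Finset.univ v / (2*(k:ℤ)) with hmdef
    have hm : ∀ v, 2*(k:ℤ) * m v = netDeg D Finset.univ v :=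
      fun v => Int.mul_ediv_cancel' (hdvd v)
    have hk1 : (1:ℤ) ≤ (k:ℤ) := by exact_mod_cast hk
    obtain ⟨P, hP⟩ := key D hnl (k:ℤ) hk1 m hm
    have hpos : posEdges E (fun e => decide (e ∈ P)) = P := by
      ext e; simp [posEdges]
    have hneg : negEdges E (fun e => decide (e ∈ P)) = Finset.univ \ P := by
      ext e; simp [negEdges]
    refine ⟨fun e => decide (e ∈ P), fun v => ?_, D, hD, fun v => ?_⟩
    · rw [neg_symmDiff_eq_pos, hpos, ← Int.even_coe_nat]
      obtain ⟨cc, hc⟩ := degIn_symmDiff G (posEdges E σ) P v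
      obtain ⟨a, ha⟩ := netDeg_parity G D hD P v
      have hP' := hP v
      obtain ⟨t, ht⟩ := Int.modEq_iff_dvd.mp (hcong v)
      have hm' := hm v
      have h2 : (degIn G (posEdges E σ) v : ℤ) - m v = 2*t := by
        have hcancel : 2*(k:ℤ) * ((degIn G (posEdges E σ) v : ℤ) - m v)
            = 2*(k:ℤ) * (2*t) := by linear_combination ht - hm'
        have hk0 : (2*(k:ℤ)) ≠ 0 := by intro h; omega
        exact mul_left_cancel₀ hk0 hcancel
      exact ⟨m v + t + a + cc, by omega⟩
    · rw [hpos, hneg, hP v]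
      have hsplit := netDeg_univ_split D P v
      rw [hP v] at hsplit
      linear_combination hm v + hsplit
end

section
/- A signed Eulerian graph (G, σ) admits a circular (4k/(2k-1))-flow if and only if it admits a modulo 2k-orientation. -/
open Finset

attribute [local instance] Classical.propDecidable

variable {V E : Type}

section Infra
variable {V E : Type} [Fintype E]

/-- Divergence of `g` at `v` under orientation `D`, written edgewise. -/
noncomputable def dvg {R : Type} [AddCommGroup R] (D : E → V × V) (g : E → R) (v : V) : R :=
  ∑ e, ((if (D e).1 = v then g e else 0) - (if (D e).2 = v then g e else 0))

lemma outSum_sub_inSum {R : Type} [AddCommGroup R] (D : E → V × V) (g : E → R) (v : V) :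
    outSum D g v - inSum D g v = dvg D g v := by
  unfold outSum inSum dvg
  rw [sum_filter, sum_filter, ← Finset.sum_sub_distrib]

lemma dvg_add {R : Type} [AddCommGroup R] (D : E → V × V) (g h : E → R) (v : V) :
    dvg D (fun e => g e + h e) v = dvg D g v + dvg D h v := by
  unfold dvg
  rw [← Finset.sum_add_distrib]
  exact Finset.sum_congr rfl fun e _ => by split_ifs <;> module

lemma dvg_sub {R : Type} [AddCommGroup R] (D : E → V × V) (g h : E → R) (v : V) :
    dvg D (fun e => g e - h e) v = dvg D g v - dvg D h v := by
  unfold dvg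
  rw [← Finset.sum_sub_distrib]
  exact Finset.sum_congr rfl fun e _ => by split_ifs <;> module

lemma dvg_mul {R : Type} [CommRing R] (D : E → V × V) (c : R) (g : E → R) (v : V) :
    dvg D (fun e => c * g e) v = c * dvg D g v := by
  unfold dvg
  rw [Finset.mul_sum]
  exact Finset.sum_congr rfl fun e _ => by split_ifs <;> ring

lemma dvg_intCast (D : E → V × V) (g : E → ℤ) (v : V) :
    dvg D (fun e => ((g e : ℤ) : ℝ)) v = ((dvg D g v : ℤ) : ℝ) := by
  unfold dvg
  push_cast
  rfl

lemma dvg_reorient {R : Type} [AddCommGroup R] (D D' : E → V × V) (g g' : E → R)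
    (h : ∀ e, (D' e = D e ∧ g' e = g e) ∨ (D' e = ((D e).2, (D e).1) ∧ g' e = -g e)) (v : V) :
    dvg D' g' v = dvg D g v := by
  unfold dvg
  refine Finset.sum_congr rfl fun e _ => ?_
  rcases h e with ⟨h1, h2⟩ | ⟨h1, h2⟩ <;> rw [h1, h2] <;> simp <;> split_ifs <;> abel

lemma netDeg_eq_dvg (D : E → V × V) (F : Finset E) (v : V) :
    netDeg D F v = dvg D (fun e => if e ∈ F then (1 : ℤ) else 0) v := by
  unfold netDeg dvg
  rw [Finset.sum_sub_distrib]
  congr 1 <;>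
  · rw [← Finset.sum_filter, Finset.sum_boole]
    norm_cast
    congr 1
    ext e
    simp [Finset.mem_filter, and_comm]

end Infra
section Infra2
variable {V E : Type} [Fintype E]

/-- degree of `v` in edge set `F`, phrased via an orientation `D`. -/
noncomputable def degD (D : E → V × V) (F : Finset E) (v : V) : ℕ :=
  (F.filter (fun e => (D e).1 = v ∨ (D e).2 = v)).card

lemma degIn_eq_degD (G : Multigraph V E) (D : E → V × V) (hD : IsOrientation G D)
    (F : Finset E) (v : V) : degIn G F v = degD D F v := by
  unfold degIn degD
  congr 1
  apply Finset.filter_congr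
  intro e _
  rw [← hD e, Sym2.mem_iff]
  constructor
  · rintro (h | h) <;> simp [h.symm]
  · rintro (h | h) <;> simp [h]

lemma isOrientation_of_flip (G : Multigraph V E) (D D' : E → V × V)
    (hD : IsOrientation G D)
    (h : ∀ e, D' e = D e ∨ D' e = ((D e).2, (D e).1)) : IsOrientation G D' := by
  intro e
  rcases h e with h1 | h1 <;> rw [h1]
  · exact hD e
  · rw [← hD e]; exact Sym2.eq_swap

lemma ne_of_isOrientation (G : Multigraph V E) (D : E → V × V) (hD : IsOrientation G D)
    (e : E) : (D e).1 ≠ (D e).2 := by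
  intro h
  apply G.noLoop e
  rw [← hD e]
  rw [Sym2.isDiag_iff_proj_eq]
  exact h

lemma degD_flip_eq (D D' : E → V × V)
    (h : ∀ e, D' e = D e ∨ D' e = ((D e).2, (D e).1)) (F : Finset E) (v : V) :
    degD D' F v = degD D F v := by
  unfold degD
  congr 1
  apply Finset.filter_congr
  intro e _
  rcases h e with h1 | h1 <;> rw [h1] <;> simp [or_comm]

lemma degD_split (D : E → V × V) (hne : ∀ e, (D e).1 ≠ (D e).2) (F : Finset E) (v : V) :
    degD D F v = (F.filter (fun e => (D e).1 = v)).card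
      + (F.filter (fun e => (D e).2 = v)).card := by
  unfold degD
  rw [Finset.filter_or]
  rw [Finset.card_union_of_disjoint]
  rw [Finset.disjoint_filter]
  intro e _ h1 h2
  exact hne e (h1.trans h2.symm)

lemma even_degD_sub_netDeg (D : E → V × V) (hne : ∀ e, (D e).1 ≠ (D e).2)
    (F : Finset E) (v : V) : Even ((degD D F v : ℤ) - netDeg D F v) := by
  rw [degD_split D hne, netDeg]
  push_cast
  exact ⟨((F.filter (fun e => (D e).2 = v)).card : ℤ), by ring⟩

lemma degD_partition (D : E → V × V) (p : E → Prop) (F : Finset E) (v : V) :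
    degD D (F.filter p) v + degD D (F.filter (fun e => ¬ p e)) v = degD D F v := by
  unfold degD
  rw [Finset.filter_comm, Finset.filter_comm (p := fun e => ¬ p e)]
  exact Finset.card_filter_add_card_filter_not _

lemma degD_symmDiff_parity (D : E → V × V) (A B : Finset E) (v : V) :
    Even (degD D (symmDiff A B) v) ↔ Even (degD D A v + degD D B v) := by
  unfold degD
  have hfil : (symmDiff A B).filter (fun e => (D e).1 = v ∨ (D e).2 = v)
      = symmDiff (A.filter (fun e => (D e).1 = v ∨ (D e).2 = v))
                 (B.filter (fun e => (D e).1 = v ∨ (D e).2 = v)) := by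
    ext e
    simp only [Finset.mem_symmDiff, Finset.mem_filter]
    tauto
  rw [hfil]
  set X := A.filter (fun e => (D e).1 = v ∨ (D e).2 = v)
  set Y := B.filter (fun e => (D e).1 = v ∨ (D e).2 = v)
  have hXY : symmDiff X Y = (X ∪ Y) \ (X ∩ Y) := by rw [symmDiff_eq_sup_sdiff_inf]; rfl
  have h1 : (symmDiff X Y).card = (X ∪ Y).card - (X ∩ Y).card := by
    rw [hXY]; exact Finset.card_sdiff_of_subset Finset.inter_subset_union
  have h15 : (X ∩ Y).card ≤ (X ∪ Y).card := Finset.card_le_card Finset.inter_subset_union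
  have h2 : (X ∪ Y).card + (X ∩ Y).card = X.card + Y.card :=
    Finset.card_union_add_card_inter X Y
  rw [Nat.even_iff, Nat.even_iff]
  omega

end Infra2
section Infra3
variable {V E : Type} [Fintype E]
lemma degD_union (D : E → V × V) (F1 F2 : Finset E) (hdis : Disjoint F1 F2) (v : V) :
    degD D (F1 ∪ F2) v = degD D F1 v + degD D F2 v := by
  unfold degD
  rw [Finset.filter_union]
  exact Finset.card_union_of_disjoint (Finset.disjoint_filter_filter hdis)
end Infra3
section Dim
variable {V E : Type} [Fintype E]

lemma exists_real_circulation (D : E → V × V) (hne : ∀ e, (D e).1 ≠ (D e).2)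
    (S : Finset E) (hS : S.Nonempty) (hdeg : ∀ v, degD D S v ≠ 1) :
    ∃ ρ : E → ℝ, (∀ e, e ∉ S → ρ e = 0) ∧ (∃ e, ρ e ≠ 0) ∧ (∀ v, dvg D ρ v = 0) := by
  classical
  set V' : Finset V := S.biUnion (fun e => {(D e).1, (D e).2}) with hV'def
  have hmemV' : ∀ e ∈ S, (D e).1 ∈ V' ∧ (D e).2 ∈ V' := by
    intro e he
    constructor <;> (rw [hV'def, Finset.mem_biUnion]; exact ⟨e, he, by simp⟩)
  have hdeg2 : ∀ v ∈ V', 2 ≤ degD D S v := by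
    intro v hv
    rw [hV'def, Finset.mem_biUnion] at hv
    obtain ⟨e, he, hev⟩ := hv
    have h1 : 1 ≤ degD D S v := by
      rw [Nat.one_le_iff_ne_zero]
      intro h0
      have hmem : e ∈ S.filter (fun e => (D e).1 = v ∨ (D e).2 = v) := by
        simp only [Finset.mem_filter]
        refine ⟨he, ?_⟩
        simp only [Finset.mem_insert, Finset.mem_singleton] at hev
        rcases hev with h | h
        · exact Or.inl h.symm
        · exact Or.inr h.symm
      rw [degD, Finset.card_eq_zero] at h0
      rw [h0] at hmem
      exact absurd hmem (Finset.notMem_empty e)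
    have := hdeg v
    omega
  have hhand : ∑ v ∈ V', degD D S v = 2 * S.card := by
    unfold degD
    calc ∑ v ∈ V', (S.filter (fun e => (D e).1 = v ∨ (D e).2 = v)).card
        = ∑ v ∈ V', ∑ e ∈ S, (if (D e).1 = v ∨ (D e).2 = v then 1 else 0) := by
          exact Finset.sum_congr rfl fun v _ => Finset.card_filter _ _
      _ = ∑ e ∈ S, ∑ v ∈ V', (if (D e).1 = v ∨ (D e).2 = v then 1 else 0) :=
          Finset.sum_comm
      _ = ∑ e ∈ S, 2 := by
          refine Finset.sum_congr rfl fun e he => ?_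
          have : V'.filter (fun v => (D e).1 = v ∨ (D e).2 = v) = {(D e).1, (D e).2} := by
            ext v
            simp only [Finset.mem_filter, Finset.mem_insert, Finset.mem_singleton]
            constructor
            · rintro ⟨_, h | h⟩
              · exact Or.inl h.symm
              · exact Or.inr h.symm
            · rintro (h | h)
              · exact ⟨h ▸ (hmemV' e he).1, Or.inl h.symm⟩
              · exact ⟨h ▸ (hmemV' e he).2, Or.inr h.symm⟩
          rw [← Finset.card_filter, this, Finset.card_insert_of_notMem (by
            simp only [Finset.mem_singleton]; exact hne e), Finset.card_singleton]
      _ = 2 * S.card := by rw [Finset.sum_const, smul_eq_mul, mul_comm]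
  have hVS : V'.card ≤ S.card := by
    have h1 : 2 * V'.card ≤ ∑ v ∈ V', degD D S v := by
      calc 2 * V'.card = ∑ _v ∈ V', 2 := by rw [Finset.sum_const, smul_eq_mul, mul_comm]
        _ ≤ ∑ v ∈ V', degD D S v := Finset.sum_le_sum hdeg2
    omega
  have hV'ne : V'.Nonempty := by
    obtain ⟨e, he⟩ := hS
    exact ⟨(D e).1, (hmemV' e he).1⟩
  -- linear algebra
  let A : Matrix {x // x ∈ V'} {x // x ∈ S} ℝ := fun v e =>
    (if (D e.1).1 = v.1 then 1 else 0) - (if (D e.1).2 = v.1 then 1 else 0)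
  have hsumA : ∀ e : {x // x ∈ S}, ∑ v : {x // x ∈ V'}, A v e = 0 := by
    intro e
    have h1 : ∑ v : {x // x ∈ V'}, (if (D e.1).1 = v.1 then (1:ℝ) else 0) = 1 := by
      rw [Finset.univ_eq_attach, Finset.sum_attach V' (fun v => if (D e.1).1 = v then (1:ℝ) else 0),
        Finset.sum_ite_eq]
      simp [(hmemV' e.1 e.2).1]
    have h2 : ∑ v : {x // x ∈ V'}, (if (D e.1).2 = v.1 then (1:ℝ) else 0) = 1 := by
      rw [Finset.univ_eq_attach, Finset.sum_attach V' (fun v => if (D e.1).2 = v then (1:ℝ) else 0),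
        Finset.sum_ite_eq]
      simp [(hmemV' e.1 e.2).2]
    rw [Finset.sum_sub_distrib, h1, h2, sub_self]
  let Φ := A.mulVecLin
  -- the sum functional
  let ℓ : ({x // x ∈ V'} → ℝ) →ₗ[ℝ] ℝ :=
    { toFun := fun y => ∑ v, y v
      map_add' := fun a b => Finset.sum_add_distrib
      map_smul' := fun c a => by simp [Finset.mul_sum] }
  have hrange : ∀ g, Φ g ∈ LinearMap.ker ℓ := by
    intro g
    simp only [LinearMap.mem_ker]
    show ∑ v, (A.mulVec g) v = 0
    unfold Matrix.mulVec dotProduct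
    rw [Finset.sum_comm]
    rw [show (0:ℝ) = ∑ e : {x // x ∈ S}, 0 by simp]
    refine Finset.sum_congr rfl fun e _ => ?_
    rw [← Finset.sum_mul, hsumA, zero_mul]
  have hker : LinearMap.ker Φ ≠ ⊥ := by
    intro hbot
    have hinj : Function.Injective Φ := LinearMap.ker_eq_bot.mp hbot
    have hℓsurj : LinearMap.range ℓ = ⊤ := by
      rw [LinearMap.range_eq_top]
      intro r
      refine ⟨fun _ => r / V'.card, ?_⟩
      show ∑ _v : {x // x ∈ V'}, r / V'.card = r
      rw [Finset.sum_const, Finset.card_univ, Fintype.card_coe, nsmul_eq_mul]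
      field_simp
    have hkerdim : Module.finrank ℝ (LinearMap.ker ℓ) = V'.card - 1 := by
      have := LinearMap.finrank_range_add_finrank_ker ℓ
      rw [hℓsurj, Module.finrank_fintype_fun_eq_card, Fintype.card_coe] at this
      have h1 : Module.finrank ℝ (⊤ : Submodule ℝ ℝ) = 1 := by
        rw [finrank_top]; exact Module.finrank_self ℝ
      rw [h1] at this
      omega
    let Φ' : ({x // x ∈ S} → ℝ) →ₗ[ℝ] (LinearMap.ker ℓ) := Φ.codRestrict _ hrange
    have hinj' : Function.Injective Φ' := by
      intro a b hab
      apply hinj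
      have := congrArg (Subtype.val) hab
      exact this
    have hle := LinearMap.finrank_le_finrank_of_injective hinj'
    rw [Module.finrank_fintype_fun_eq_card, Fintype.card_coe, hkerdim] at hle
    have h1 : 1 ≤ S.card := Finset.card_pos.mpr hS
    omega
  obtain ⟨g, hgker, hgne⟩ := (Submodule.ne_bot_iff _).mp hker
  have hΦg : ∀ v : {x // x ∈ V'}, ∑ e : {x // x ∈ S}, A v e * g e = 0 := by
    intro v
    have : Φ g = 0 := hgker
    have := congrFun (congrArg (fun (h : {x // x ∈ V'} → ℝ) => h) this) v
    simpa [Φ, Matrix.mulVecLin, Matrix.mulVec, dotProduct] using this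
  refine ⟨fun e => if h : e ∈ S then g ⟨e, h⟩ else 0, ?_, ?_, ?_⟩
  · intro e he; simp only [dif_neg he]
  · rw [Function.ne_iff] at hgne
    obtain ⟨e, hge⟩ := hgne
    refine ⟨e.1, ?_⟩
    simp only [dif_pos e.2]
    simpa using hge
  · intro v
    set ρ : E → ℝ := fun e => if h : e ∈ S then g ⟨e, h⟩ else 0 with hρdef
    show dvg D ρ v = 0
    have hsupp : ∀ e, e ∉ S → ρ e = 0 := fun e he => dif_neg he
    unfold dvg
    have hzero : ∀ e ∈ (univ : Finset E), e ∉ S →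
        ((if (D e).1 = v then ρ e else 0) - (if (D e).2 = v then ρ e else 0)) = 0 := by
      intro e _ he
      rw [hsupp e he]
      split_ifs <;> ring
    rw [← Finset.sum_subset (Finset.subset_univ S) hzero]
    by_cases hv : v ∈ V'
    · calc ∑ e ∈ S, ((if (D e).1 = v then ρ e else 0) - (if (D e).2 = v then ρ e else 0))
          = ∑ e ∈ S.attach,
            ((if (D e.1).1 = v then ρ e.1 else 0) - (if (D e.1).2 = v then ρ e.1 else 0)) :=
            (Finset.sum_attach S _).symm
        _ = ∑ e ∈ S.attach, A ⟨v, hv⟩ e * g e := by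
            refine Finset.sum_congr rfl fun e _ => ?_
            have hρe : ρ e.1 = g e := dif_pos e.2
            have hA : A ⟨v, hv⟩ e
                = (if (D e.1).1 = v then (1:ℝ) else 0) - (if (D e.1).2 = v then 1 else 0) := rfl
            rw [hρe, hA]
            split_ifs <;> ring
        _ = 0 := by rw [← Finset.univ_eq_attach]; exact hΦg ⟨v, hv⟩
    · apply Finset.sum_eq_zero
      intro e he
      have h1 : (D e).1 ≠ v := fun h => hv (h ▸ (hmemV' e he).1)
      have h2 : (D e).2 ≠ v := fun h => hv (h ▸ (hmemV' e he).2)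
      simp [h1, h2]
end Dim
section IntFlow
variable {V E : Type} [Fintype E]

lemma exists_int_sum {α : Type} (F : Finset α) (f : α → ℝ)
    (h : ∀ e ∈ F, ∃ m : ℤ, f e = (m : ℝ)) : ∃ M : ℤ, ∑ e ∈ F, f e = (M : ℝ) := by
  classical
  induction F using Finset.induction_on with
  | empty => exact ⟨0, by simp⟩
  | @insert a s ha ih =>
    obtain ⟨M, hM⟩ := ih (fun e he => h e (Finset.mem_insert_of_mem he))
    obtain ⟨m, hm⟩ := h a (Finset.mem_insert_self a s)
    refine ⟨m + M, ?_⟩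
    rw [Finset.sum_insert ha, hm, hM]
    push_cast
    ring

lemma exists_int_flow (D : E → V × V) (hne : ∀ e, (D e).1 ≠ (D e).2) (l u : E → ℤ)
    (x : E → ℝ) (hl : ∀ e, (l e : ℝ) ≤ x e) (hu : ∀ e, x e ≤ (u e : ℝ))
    (hdiv : ∀ v, ∃ m : ℤ, dvg D x v = (m : ℝ)) :
    ∃ z : E → ℤ, (∀ e, l e ≤ z e ∧ z e ≤ u e) ∧
      (∀ v, dvg D (fun e => (z e : ℝ)) v = dvg D x v) := by
  classical
  suffices main : ∀ n : ℕ, ∀ x : E → ℝ,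
      (univ.filter (fun e => ¬ ∃ m : ℤ, x e = (m : ℝ))).card ≤ n →
      (∀ e, (l e : ℝ) ≤ x e) → (∀ e, x e ≤ (u e : ℝ)) →
      (∀ v, ∃ m : ℤ, dvg D x v = (m : ℝ)) →
      ∃ z : E → ℤ, (∀ e, l e ≤ z e ∧ z e ≤ u e) ∧
        (∀ v, dvg D (fun e => (z e : ℝ)) v = dvg D x v) by
    exact main _ x le_rfl hl hu hdiv
  intro n
  induction n with
  | zero =>
    intro x hcard hl hu _hdiv
    have hall : ∀ e, ∃ m : ℤ, x e = (m : ℝ) := by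
      intro e
      by_contra hc
      have hmem : e ∈ univ.filter (fun e => ¬ ∃ m : ℤ, x e = (m : ℝ)) := by
        simp only [Finset.mem_filter, Finset.mem_univ, true_and]; exact hc
      have := Finset.card_pos.mpr ⟨e, hmem⟩
      omega
    choose z hz using hall
    refine ⟨z, fun e => ⟨?_, ?_⟩, fun v => ?_⟩
    · have := hl e; rw [hz e] at this; exact_mod_cast this
    · have := hu e; rw [hz e] at this; exact_mod_cast this
    · congr 1; funext e; exact (hz e).symm
  | succ n ih =>
    intro x hcard hl hu hdiv
    by_cases hle : (univ.filter (fun e => ¬ ∃ m : ℤ, x e = (m : ℝ))).card ≤ n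
    · exact ih x hle hl hu hdiv
    set S := univ.filter (fun e => ¬ ∃ m : ℤ, x e = (m : ℝ)) with hSdef
    have hSpos : 0 < S.card := by omega
    have hSne : S.Nonempty := Finset.card_pos.mp hSpos
    have hfrac : ∀ e ∈ S, ¬ ∃ m : ℤ, x e = (m : ℝ) := by
      intro e he; exact (Finset.mem_filter.mp he).2
    have hnotS : ∀ e, e ∉ S → ∃ m : ℤ, x e = (m : ℝ) := by
      intro e he
      by_contra hc
      exact he (by simp only [hSdef, Finset.mem_filter, Finset.mem_univ, true_and]; exact hc)
    -- no vertex is incident with exactly one fractional edge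
    have hdegS : ∀ v, degD D S v ≠ 1 := by
      intro v hv1
      obtain ⟨m, hm⟩ := hdiv v
      rw [degD] at hv1
      obtain ⟨e₁, he₁⟩ := Finset.card_eq_one.mp hv1
      have he₁m : e₁ ∈ S ∧ ((D e₁).1 = v ∨ (D e₁).2 = v) := by
        have : e₁ ∈ S.filter (fun e => (D e).1 = v ∨ (D e).2 = v) := by
          rw [he₁]; exact Finset.mem_singleton_self e₁
        exact Finset.mem_filter.mp this
      set c : E → ℝ := fun e => (if (D e).1 = v then x e else 0) - (if (D e).2 = v then x e else 0)
        with hcdef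
      have hsplit : ∑ e ∈ univ.filter (· ∈ S), c e + ∑ e ∈ univ.filter (¬ · ∈ S), c e
          = dvg D x v := by
        rw [dvg]; exact Finset.sum_filter_add_sum_filter_not univ _ c
      have hSfil : univ.filter (· ∈ S) = S := by
        ext e; simp
      obtain ⟨M₂, hM₂⟩ := exists_int_sum (univ.filter (¬ · ∈ S)) c (by
        intro e he
        obtain ⟨me, hme⟩ := hnotS e (Finset.mem_filter.mp he).2
        simp only [hcdef]
        split_ifs with h1 h2 h3
        · exact ⟨0, by rw [hme]; push_cast; ring⟩
        · exact ⟨me, by rw [hme]; push_cast; ring⟩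
        · exact ⟨-me, by rw [hme]; push_cast; ring⟩
        · exact ⟨0, by norm_num⟩)
      have hfirst : ∑ e ∈ univ.filter (· ∈ S), c e = c e₁ := by
        rw [hSfil]
        rw [← Finset.sum_filter_of_ne (p := fun e => (D e).1 = v ∨ (D e).2 = v) (by
          intro e _ hce
          by_contra hcont
          push_neg at hcont
          apply hce
          simp only [hcdef]
          rw [if_neg hcont.1, if_neg hcont.2, sub_zero])]
        rw [he₁, Finset.sum_singleton]
      have hdveq : dvg D x v = c e₁ + (M₂ : ℝ) := by
        rw [← hsplit, hfirst, hM₂]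
      have : ∃ mm : ℤ, x e₁ = (mm : ℝ) := by
        rcases he₁m.2 with h1 | h1
        · have h2 : (D e₁).2 ≠ v := by
            intro h2; exact hne e₁ (h1.trans h2.symm)
          have hc1 : c e₁ = x e₁ := by
            simp only [hcdef]; rw [if_pos h1, if_neg h2, sub_zero]
          refine ⟨m - M₂, ?_⟩
          have := hm
          rw [hdveq, hc1] at this
          push_cast
          linarith
        · have h2 : (D e₁).1 ≠ v := by
            intro h2; exact hne e₁ (h2.trans h1.symm)
          have hc1 : c e₁ = -x e₁ := by
            simp only [hcdef]; rw [if_neg h2, if_pos h1, zero_sub]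
          refine ⟨M₂ - m, ?_⟩
          have := hm
          rw [hdveq, hc1] at this
          push_cast
          linarith
      exact hfrac e₁ he₁m.1 this
    obtain ⟨ρ, hρsupp, ⟨e₁, hρe₁⟩, hρdiv⟩ := exists_real_circulation D hne S hSne hdegS
    set P := univ.filter (fun e => ρ e ≠ 0) with hPdef
    have hPne : P.Nonempty := ⟨e₁, by simp [hPdef, hρe₁]⟩
    have hPS : ∀ e ∈ P, e ∈ S := by
      intro e he
      by_contra hc
      exact (Finset.mem_filter.mp he).2 (hρsupp e hc)
    set te : E → ℝ := fun e =>
      if 0 < ρ e then ((⌈x e⌉ : ℝ) - x e) / ρ e else ((⌊x e⌋ : ℝ) - x e) / ρ e with htedef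
    have hte : ∀ e ∈ P, 0 < te e := by
      intro e he
      have hρne : ρ e ≠ 0 := (Finset.mem_filter.mp he).2
      have hfr := hfrac e (hPS e he)
      simp only [htedef]
      split_ifs with hρ
      · apply div_pos _ hρ
        have h1 : x e ≤ (⌈x e⌉ : ℝ) := Int.le_ceil _
        have h2 : x e ≠ (⌈x e⌉ : ℝ) := fun h => hfr ⟨⌈x e⌉, h⟩
        have := lt_of_le_of_ne h1 h2
        linarith
      · have hρ2 : ρ e < 0 := lt_of_le_of_ne (le_of_not_gt hρ) hρne
        have h1 : (⌊x e⌋ : ℝ) ≤ x e := Int.floor_le _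
        have h2 : x e ≠ (⌊x e⌋ : ℝ) := fun h => hfr ⟨⌊x e⌋, h⟩
        have h3 : (⌊x e⌋ : ℝ) - x e < 0 := by
          have := lt_of_le_of_ne h1 (fun h => h2 h.symm)
          linarith
        exact div_pos_of_neg_of_neg h3 hρ2
    obtain ⟨e₀, he₀P, hmin⟩ := Finset.exists_min_image P te hPne
    set t := te e₀ with htdef
    have ht0 : 0 < t := hte e₀ he₀P
    set x' : E → ℝ := fun e => x e + t * ρ e with hx'def
    have hx'nP : ∀ e, e ∉ P → x' e = x e := by
      intro e he
      have : ρ e = 0 := by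
        by_contra hc
        exact he (by simp [hPdef, hc])
      simp [hx'def, this]
    have hbnd : ∀ e ∈ P, (⌊x e⌋ : ℝ) ≤ x' e ∧ x' e ≤ (⌈x e⌉ : ℝ) := by
      intro e he
      have hρne : ρ e ≠ 0 := (Finset.mem_filter.mp he).2
      have htle : t ≤ te e := hmin e he
      constructor
      · by_cases hρ : 0 < ρ e
        · have : 0 ≤ t * ρ e := le_of_lt (mul_pos ht0 hρ)
          have := Int.floor_le (x e)
          simp only [hx'def]
          linarith
        · have hρ2 : ρ e < 0 := lt_of_le_of_ne (le_of_not_gt hρ) hρne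
          have h1 : te e * ρ e ≤ t * ρ e := by
            exact mul_le_mul_of_nonpos_right htle (le_of_lt hρ2)
          have h2 : te e * ρ e = (⌊x e⌋ : ℝ) - x e := by
            simp only [htedef]
            rw [if_neg hρ]
            field_simp
          simp only [hx'def]
          linarith
      · by_cases hρ : 0 < ρ e
        · have h1 : t * ρ e ≤ te e * ρ e := mul_le_mul_of_nonneg_right htle (le_of_lt hρ)
          have h2 : te e * ρ e = (⌈x e⌉ : ℝ) - x e := by
            simp only [htedef]
            rw [if_pos hρ]
            field_simp
          simp only [hx'def]
          linarith
        · have hρ2 : ρ e < 0 := lt_of_le_of_ne (le_of_not_gt hρ) hρne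
          have : t * ρ e ≤ 0 := le_of_lt (mul_neg_of_pos_of_neg ht0 hρ2)
          have := Int.le_ceil (x e)
          simp only [hx'def]
          linarith
    have hx'e₀ : ∃ m : ℤ, x' e₀ = (m : ℝ) := by
      have hρne : ρ e₀ ≠ 0 := (Finset.mem_filter.mp he₀P).2
      simp only [hx'def, htdef, htedef]
      split_ifs with hρ
      · refine ⟨⌈x e₀⌉, ?_⟩
        field_simp
        ring
      · refine ⟨⌊x e₀⌋, ?_⟩
        field_simp
        ring
    have hl' : ∀ e, (l e : ℝ) ≤ x' e := by
      intro e
      by_cases he : e ∈ P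
      · have h1 : l e ≤ ⌊x e⌋ := Int.le_floor.mpr (hl e)
        have : (l e : ℝ) ≤ (⌊x e⌋ : ℝ) := by exact_mod_cast h1
        linarith [(hbnd e he).1]
      · rw [hx'nP e he]; exact hl e
    have hu' : ∀ e, x' e ≤ (u e : ℝ) := by
      intro e
      by_cases he : e ∈ P
      · have h1 : ⌈x e⌉ ≤ u e := Int.ceil_le.mpr (hu e)
        have : (⌈x e⌉ : ℝ) ≤ (u e : ℝ) := by exact_mod_cast h1
        linarith [(hbnd e he).2]
      · rw [hx'nP e he]; exact hu e
    have hdvg' : ∀ v, dvg D x' v = dvg D x v := by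
      intro v
      have : dvg D x' v = dvg D x v + dvg D (fun e => t * ρ e) v := by
        rw [← dvg_add]
      rw [this, dvg_mul, hρdiv v, mul_zero, add_zero]
    have hdiv' : ∀ v, ∃ m : ℤ, dvg D x' v = (m : ℝ) := by
      intro v; rw [hdvg' v]; exact hdiv v
    have hsub : (univ.filter (fun e => ¬ ∃ m : ℤ, x' e = (m : ℝ))) ⊆ S.erase e₀ := by
      intro e he
      have hfe : ¬ ∃ m : ℤ, x' e = (m : ℝ) := (Finset.mem_filter.mp he).2
      rw [Finset.mem_erase]
      constructor
      · intro heq; rw [heq] at hfe; exact hfe hx'e₀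
      · by_cases hP : e ∈ P
        · exact hPS e hP
        · rw [hx'nP e hP] at hfe
          simp only [hSdef, Finset.mem_filter, Finset.mem_univ, true_and]
          exact hfe
    have hcard' : (univ.filter (fun e => ¬ ∃ m : ℤ, x' e = (m : ℝ))).card ≤ n := by
      have h1 := Finset.card_le_card hsub
      have h2 : (S.erase e₀).card = S.card - 1 :=
        Finset.card_erase_of_mem (hPS e₀ he₀P)
      have h3 : S.card ≤ n + 1 := hcard
      omega
    obtain ⟨z, hzb, hzd⟩ := ih x' hcard' hl' hu' hdiv'
    exact ⟨z, hzb, fun v => (hzd v).trans (hdvg' v)⟩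
end IntFlow
section Bal
variable {V E : Type} [Fintype E]

lemma exists_pm_circulation (D : E → V × V) (hne : ∀ e, (D e).1 ≠ (D e).2)
    (S : Finset E) (heven : ∀ v, Even (degD D S v)) :
    ∃ ν : E → ℤ, (∀ e ∈ S, ν e = 1 ∨ ν e = -1) ∧ (∀ e, e ∉ S → ν e = 0) ∧
      (∀ v, dvg D ν v = 0) := by
  classical
  have hnet : ∀ v, Even (netDeg D S v) := by
    intro v
    have h1 := even_degD_sub_netDeg D hne S v
    have h3 : Even ((degD D S v : ℤ)) := by
      obtain ⟨a, ha⟩ := heven v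
      exact ⟨(a : ℤ), by exact_mod_cast ha⟩
    obtain ⟨a, ha⟩ := h1
    obtain ⟨b, hb⟩ := h3
    exact ⟨b - a, by omega⟩
  set M : V → ℤ := fun v => netDeg D S v / 2 with hMdef
  have hM2 : ∀ v, 2 * M v = netDeg D S v := by
    intro v
    obtain ⟨a, ha⟩ := hnet v
    simp only [hMdef]
    omega
  set x : E → ℝ := fun e => if e ∈ S then (1/2 : ℝ) else 0 with hxdef
  have hdx : ∀ v, dvg D x v = ((M v : ℤ) : ℝ) := by
    intro v
    have h1 : dvg D x v
        = (1/2 : ℝ) * dvg D (fun e => ((if e ∈ S then (1:ℤ) else 0 : ℤ) : ℝ)) v := by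
      rw [← dvg_mul]
      apply Finset.sum_congr rfl
      intro e _
      simp only [hxdef]
      split_ifs <;> norm_num
    rw [h1, dvg_intCast, ← netDeg_eq_dvg, ← hM2 v]
    push_cast
    ring
  obtain ⟨τ, hτb, hτd⟩ := exists_int_flow D hne (fun _ => 0)
      (fun e => if e ∈ S then 1 else 0) x
      (by intro e; simp only [hxdef]; split_ifs <;> norm_num)
      (by intro e; simp only [hxdef]; split_ifs <;> norm_num)
      (fun v => ⟨M v, hdx v⟩)
  have hτM : ∀ v, dvg D τ v = M v := by
    intro v
    have h1 := (hτd v).trans (hdx v)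
    rw [dvg_intCast] at h1
    exact_mod_cast h1
  refine ⟨fun e => 2 * τ e - (if e ∈ S then 1 else 0), ?_, ?_, ?_⟩
  · intro e he
    have h1 := (hτb e).1
    have h2 := (hτb e).2
    rw [if_pos he] at h2
    simp only [if_pos he]
    omega
  · intro e he
    have h1 := (hτb e).1
    have h2 := (hτb e).2
    rw [if_neg he] at h2
    simp only [if_neg he]
    omega
  · intro v
    have h1 : dvg D (fun e => 2 * τ e - (if e ∈ S then 1 else 0)) v
        = dvg D (fun e => 2 * τ e) v - dvg D (fun e => if e ∈ S then (1:ℤ) else 0) v :=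
      dvg_sub D _ _ v
    rw [h1, dvg_mul, ← netDeg_eq_dvg, hτM v, ← hM2 v]
    ring
end Bal
section Dir1
variable {V E : Type} [Fintype E]

lemma mod_to_flow (G : Multigraph V E) (σ : E → Bool) (k : ℕ) (hk : 1 ≤ k)
    (h : HasModuloOrientation G σ (2 * (k : ℤ))) :
    ∃ (D : E → V × V) (f : E → ℝ),
      IsCircularFlow G σ ((4 * k : ℝ) / (2 * k - 1)) D f := by
  classical
  obtain ⟨σ', hinv, D, hD, heq⟩ := h
  have hne : ∀ e, (D e).1 ≠ (D e).2 := ne_of_isOrientation G D hD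
  set kR : ℝ := (k : ℝ) with hkRdef
  have hk1 : (1 : ℝ) ≤ kR := by simp only [hkRdef]; exact_mod_cast hk
  set K : ℝ := 2 * kR - 1 with hKdef
  have hK1 : (1 : ℝ) ≤ K := by simp only [hKdef]; linarith
  have hK0 : (0 : ℝ) < K := by linarith
  set r : ℝ := (4 * k : ℝ) / (2 * k - 1) with hrdef
  have hKne : K ≠ 0 := ne_of_gt hK0
  have hKne2 : (2 * kR - 1 : ℝ) ≠ 0 := by linarith
  have hrK : r = 4 * kR / K := by rw [hrdef, hKdef, hkRdef]
  have hr1 : r - 1 = (2 * kR + 1) / K := by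
    rw [hrK]; field_simp; ring
  have hr2 : r / 2 - 1 = 1 / K := by
    rw [hrK]; field_simp; ring
  have hr3 : r / 2 + 1 = (4 * kR - 1) / K := by
    rw [hrK]; field_simp; ring
  set T : Finset E := symmDiff (negEdges E σ) (negEdges E σ') with hTdef
  have hTeven : ∀ v, Even (degD D T v) := by
    intro v; rw [← degIn_eq_degD G D hD]; exact hinv v
  obtain ⟨ν, hν1, hν0, hνd⟩ := exists_pm_circulation D hne T hTeven
  have hTmem : ∀ e, e ∈ T ↔ ¬ (σ e = σ' e) := by
    intro e
    rw [hTdef, Finset.mem_symmDiff]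
    simp only [negEdges, Finset.mem_filter, Finset.mem_univ, true_and]
    cases hσ : σ e <;> cases hσ' : σ' e <;> simp
  set f : E → ℝ := fun e => (if e ∈ posEdges E σ' then (1:ℝ) else 0)
      - (1/K) * (if e ∈ negEdges E σ' then 1 else 0) + (2 * kR / K) * (ν e : ℝ) with hfdef
  -- explicit values
  have hfval : ∀ e,
      (σ e = true ∧ (f e = 1 ∨ f e = -((2*kR+1)/K))) ∨
      (σ e = false ∧ (f e = -(1/K) ∨ f e = (4*kR-1)/K)) := by
    intro e
    have hpm : e ∈ posEdges E σ' ↔ σ' e = true := by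
      simp [posEdges]
    have hnm : e ∈ negEdges E σ' ↔ σ' e = false := by
      simp [negEdges]
    by_cases hσ : σ e = true
    · left
      refine ⟨hσ, ?_⟩
      by_cases hσ' : σ' e = true
      · have hnT : e ∉ T := by rw [hTmem]; simp [hσ, hσ']
        have hν : ν e = 0 := hν0 e hnT
        left
        simp only [hfdef]
        rw [if_pos (hpm.mpr hσ'), if_neg (by rw [hnm]; simp [hσ']), hν]
        norm_num
      · have hσ'f : σ' e = false := by simp at hσ'; exact hσ'
        have hT : e ∈ T := by rw [hTmem]; simp [hσ, hσ'f]
        rcases hν1 e hT with hν | hν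
        · left
          simp only [hfdef]
          rw [if_neg (by rw [hpm]; simp [hσ'f]), if_pos (hnm.mpr hσ'f), hν]
          push_cast
          simp only [hKdef]
          field_simp
          try ring
        · right
          simp only [hfdef]
          rw [if_neg (by rw [hpm]; simp [hσ'f]), if_pos (hnm.mpr hσ'f), hν]
          push_cast
          simp only [hKdef]
          field_simp
          try ring
    · right
      have hσf : σ e = false := by simp at hσ; exact hσ
      refine ⟨hσf, ?_⟩
      by_cases hσ' : σ' e = true
      · have hT : e ∈ T := by rw [hTmem]; simp [hσf, hσ']
        rcases hν1 e hT with hν | hν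
        · right
          simp only [hfdef]
          rw [if_pos (hpm.mpr hσ'), if_neg (by rw [hnm]; simp [hσ']), hν]
          push_cast
          simp only [hKdef]
          field_simp
          try ring
        · left
          simp only [hfdef]
          rw [if_pos (hpm.mpr hσ'), if_neg (by rw [hnm]; simp [hσ']), hν]
          push_cast
          simp only [hKdef]
          field_simp
          try ring
      · have hσ'f : σ' e = false := by simp at hσ'; exact hσ'
        have hnT : e ∉ T := by rw [hTmem]; simp [hσf, hσ'f]
        have hν : ν e = 0 := hν0 e hnT
        left
        simp only [hfdef]
        rw [if_neg (by rw [hpm]; simp [hσ'f]), if_pos (hnm.mpr hσ'f), hν]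
        norm_num
  -- numeric facts
  have habs1 : |(1:ℝ)| = 1 := abs_one
  have habs2 : |(-((2*kR+1)/K))| = (2*kR+1)/K := by
    rw [abs_neg, abs_of_pos (div_pos (by linarith) hK0)]
  have habs3 : |(-(1/K))| = 1/K := by
    rw [abs_neg, abs_of_pos (div_pos one_pos hK0)]
  have habs4 : |((4*kR-1)/K)| = (4*kR-1)/K := abs_of_pos (div_pos (by linarith) hK0)
  have hn1 : (1:ℝ) ≤ 1 ∧ (1:ℝ) ≤ r - 1 ∧ (1:ℝ) < r := by
    refine ⟨le_refl 1, ?_, ?_⟩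
    · rw [hr1, le_div_iff₀ hK0]; linarith
    · rw [hrK, lt_div_iff₀ hK0]; linarith
  have hn2 : (1:ℝ) ≤ (2*kR+1)/K ∧ (2*kR+1)/K ≤ r - 1 ∧ (2*kR+1)/K < r := by
    refine ⟨?_, ?_, ?_⟩
    · rw [le_div_iff₀ hK0]; linarith
    · rw [hr1]
    · rw [hrK, div_lt_div_iff₀ hK0 hK0]; nlinarith
  have hn3 : (1:ℝ)/K ≤ r/2 - 1 ∧ (1:ℝ)/K < r := by
    refine ⟨?_, ?_⟩
    · rw [hr2]
    · rw [hrK, div_lt_div_iff₀ hK0 hK0]; nlinarith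
  have hn4 : r/2 + 1 ≤ (4*kR-1)/K ∧ (4*kR-1)/K < r := by
    refine ⟨?_, ?_⟩
    · rw [hr3]
    · rw [hrK, div_lt_div_iff₀ hK0 hK0]; nlinarith
  refine ⟨D, f, hD, ?_, ?_, ?_, ?_⟩
  · -- |f e| < r
    intro e
    rcases hfval e with ⟨_, hf | hf⟩ | ⟨_, hf | hf⟩ <;> rw [hf]
    · rw [habs1]; exact hn1.2.2
    · rw [habs2]; exact hn2.2.2
    · rw [habs3]; exact hn3.2
    · rw [habs4]; exact hn4.2
  · -- positive edges
    intro e hσe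
    rcases hfval e with ⟨_, hf | hf⟩ | ⟨hσf, _⟩
    · rw [hf, habs1]; exact ⟨hn1.1, hn1.2.1⟩
    · rw [hf, habs2]; exact ⟨hn2.1, hn2.2.1⟩
    · rw [hσe] at hσf; exact absurd hσf (by simp)
  · -- negative edges
    intro e hσe
    rcases hfval e with ⟨hσt, _⟩ | ⟨_, hf | hf⟩
    · rw [hσe] at hσt; exact absurd hσt (by simp)
    · left; rw [hf, habs3]; exact hn3.1
    · right; rw [hf, habs4]; exact hn4.1
  · -- conservation
    intro v
    rw [← sub_eq_zero, outSum_sub_inSum]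
    have hsplit : dvg D f v
        = dvg D (fun e => (if e ∈ posEdges E σ' then (1:ℝ) else 0)
            - (1/K) * (if e ∈ negEdges E σ' then 1 else 0)) v
          + dvg D (fun e => (2 * kR / K) * (ν e : ℝ)) v := by
      rw [← dvg_add]
    have hcastpos : (fun e => (if e ∈ posEdges E σ' then (1:ℝ) else 0))
        = (fun e => (((if e ∈ posEdges E σ' then (1:ℤ) else 0) : ℤ) : ℝ)) := by
      funext e; split_ifs <;> norm_num
    have hcastneg : (fun e => (if e ∈ negEdges E σ' then (1:ℝ) else 0))
        = (fun e => (((if e ∈ negEdges E σ' then (1:ℤ) else 0) : ℤ) : ℝ)) := by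
      funext e; split_ifs <;> norm_num
    have hP : dvg D (fun e => (if e ∈ posEdges E σ' then (1:ℝ) else 0)) v
        = ((netDeg D (posEdges E σ') v : ℤ) : ℝ) := by
      rw [hcastpos, dvg_intCast, ← netDeg_eq_dvg]
    have hN : dvg D (fun e => (if e ∈ negEdges E σ' then (1:ℝ) else 0)) v
        = ((netDeg D (negEdges E σ') v : ℤ) : ℝ) := by
      rw [hcastneg, dvg_intCast, ← netDeg_eq_dvg]
    have h1 : dvg D (fun e => (if e ∈ posEdges E σ' then (1:ℝ) else 0)
            - (1/K) * (if e ∈ negEdges E σ' then 1 else 0)) v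
        = ((netDeg D (posEdges E σ') v : ℤ) : ℝ)
          - (1/K) * ((netDeg D (negEdges E σ') v : ℤ) : ℝ) := by
      rw [dvg_sub, hP, dvg_mul, hN]
    have h2 : dvg D (fun e => (2 * kR / K) * (ν e : ℝ)) v = 0 := by
      rw [dvg_mul]
      have : dvg D (fun e => ((ν e : ℤ) : ℝ)) v = ((dvg D ν v : ℤ) : ℝ) := dvg_intCast D ν v
      rw [this, hνd v]
      norm_num
    have hNP : ((netDeg D (negEdges E σ') v : ℤ) : ℝ)
        = K * ((netDeg D (posEdges E σ') v : ℤ) : ℝ) := by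
      have := heq v
      have hcast := congrArg (fun z : ℤ => (z : ℝ)) this.symm
      push_cast at hcast
      rw [hKdef, hkRdef]
      linarith
    rw [hsplit, h1, h2, hNP]
    field_simp
    ring
end Dir1
section Dir2
variable {V E : Type} [Fintype E]

lemma flow_to_mod (G : Multigraph V E) (σ : E → Bool) (k : ℕ) (hk : 1 ≤ k)
    (hEuler : ∀ v, Even (degIn G univ v))
    (h : ∃ (D : E → V × V) (f : E → ℝ),
        IsCircularFlow G σ ((4 * k : ℝ) / (2 * k - 1)) D f) :
    HasModuloOrientation G σ (2 * (k : ℤ)) := by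
  classical
  obtain ⟨D, f, hor, hlt, hpos, hneg, hcons⟩ := h
  set kR : ℝ := (k : ℝ) with hkRdef
  have hk1 : (1 : ℝ) ≤ kR := by simp only [hkRdef]; exact_mod_cast hk
  set K : ℝ := 2 * kR - 1 with hKdef
  have hK1 : (1 : ℝ) ≤ K := by simp only [hKdef]; linarith
  have hK0 : (0 : ℝ) < K := by linarith
  have hKne : K ≠ 0 := ne_of_gt hK0
  set r : ℝ := (4 * k : ℝ) / (2 * k - 1) with hrdef
  have hrK : r = 4 * kR / K := by rw [hrdef, hKdef, hkRdef]
  have hr1 : r - 1 = (2 * kR + 1) / K := by rw [hrK]; field_simp; ring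
  have hr2 : r / 2 - 1 = 1 / K := by rw [hrK]; field_simp; ring
  have hr3 : r / 2 + 1 = (4 * kR - 1) / K := by rw [hrK]; field_simp; ring
  -- Step 0 : reorient so that the flow is nonnegative
  set D₀ : E → V × V := fun e => if 0 ≤ f e then D e else ((D e).2, (D e).1) with hD₀def
  have hflip : ∀ e, D₀ e = D e ∨ D₀ e = ((D e).2, (D e).1) := by
    intro e
    by_cases hfe : 0 ≤ f e
    · left; simp [hD₀def, hfe]
    · right; simp [hD₀def, hfe]
  have hD₀ : IsOrientation G D₀ := isOrientation_of_flip G D D₀ hor hflip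
  have hne₀ : ∀ e, (D₀ e).1 ≠ (D₀ e).2 := ne_of_isOrientation G D₀ hD₀
  set f₀ : E → ℝ := fun e => |f e| with hf₀def
  have hre : ∀ e, (D₀ e = D e ∧ f₀ e = f e) ∨ (D₀ e = ((D e).2, (D e).1) ∧ f₀ e = -(f e)) := by
    intro e
    by_cases hfe : 0 ≤ f e
    · left; exact ⟨by simp [hD₀def, hfe], by simp [hf₀def, abs_of_nonneg hfe]⟩
    · right
      refine ⟨by simp [hD₀def, hfe], ?_⟩
      simp only [hf₀def]
      exact abs_of_neg (lt_of_not_ge hfe)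
  have hdvg₀ : ∀ v, dvg D₀ f₀ v = 0 := by
    intro v
    rw [dvg_reorient D D₀ f f₀ hre v, ← outSum_sub_inSum, hcons v, sub_self]
  have hf₀0 : ∀ e, 0 ≤ f₀ e := fun e => abs_nonneg (f e)
  -- Step A : integral flow in boxes
  set x : E → ℝ := fun e => K * f₀ e with hxdef
  have hdvgx : ∀ v, dvg D₀ x v = 0 := by
    intro v
    rw [hxdef, dvg_mul, hdvg₀ v, mul_zero]
  set l : E → ℤ := fun e => if σ e = true then 2*(k:ℤ)-1 else if x e ≤ 1 then 0 else 4*k-1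
    with hldef
  set u : E → ℤ := fun e => if σ e = true then 2*(k:ℤ)+1 else if x e ≤ 1 then 1 else 4*k
    with hudef
  have hcast1 : ((2*(k:ℤ)-1 : ℤ) : ℝ) = K := by rw [hKdef, hkRdef]; push_cast; ring
  have hcast2 : ((2*(k:ℤ)+1 : ℤ) : ℝ) = 2*kR+1 := by rw [hkRdef]; push_cast; ring
  have hcast3 : ((4*(k:ℤ)-1 : ℤ) : ℝ) = 4*kR-1 := by rw [hkRdef]; push_cast; ring
  have hcast4 : ((4*(k:ℤ) : ℤ) : ℝ) = 4*kR := by rw [hkRdef]; push_cast; ring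
  have hlb : ∀ e, (l e : ℝ) ≤ x e := by
    intro e
    by_cases hσ : σ e = true
    · simp only [hldef, if_pos hσ]
      rw [hcast1]
      have h1 : 1 ≤ f₀ e := (hpos e hσ).1
      have : K * 1 ≤ K * f₀ e := mul_le_mul_of_nonneg_left h1 (le_of_lt hK0)
      simp only [hxdef]
      linarith
    · simp only [hldef, if_neg hσ]
      by_cases hsm : x e ≤ 1
      · rw [if_pos hsm]
        simp only [hxdef]
        push_cast
        exact mul_nonneg (le_of_lt hK0) (hf₀0 e)
      · rw [if_neg hsm, hcast3]
        have hσf : σ e = false := by simp at hσ; exact hσ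
        rcases hneg e hσf with hc | hc
        · exfalso
          apply hsm
          rw [hr2] at hc
          have hle : K * f₀ e ≤ K * (1/K) := mul_le_mul_of_nonneg_left hc (le_of_lt hK0)
          have h2 : K * (1/K) = 1 := by field_simp
          rw [h2] at hle
          simp only [hxdef]
          exact hle
        · rw [hr3] at hc
          have hle : K * ((4*kR-1)/K) ≤ K * f₀ e := mul_le_mul_of_nonneg_left hc (le_of_lt hK0)
          have h2 : K * ((4*kR-1)/K) = 4*kR-1 := by field_simp
          rw [h2] at hle
          simp only [hxdef]
          exact hle
  have hub : ∀ e, x e ≤ (u e : ℝ) := by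
    intro e
    by_cases hσ : σ e = true
    · simp only [hudef, if_pos hσ]
      rw [hcast2]
      have h1 : f₀ e ≤ r - 1 := (hpos e hσ).2
      rw [hr1] at h1
      have hle : K * f₀ e ≤ K * ((2*kR+1)/K) := mul_le_mul_of_nonneg_left h1 (le_of_lt hK0)
      have h2 : K * ((2*kR+1)/K) = 2*kR+1 := by field_simp
      rw [h2] at hle
      simp only [hxdef]
      exact hle
    · simp only [hudef, if_neg hσ]
      by_cases hsm : x e ≤ 1
      · rw [if_pos hsm]; push_cast; exact hsm
      · rw [if_neg hsm, hcast4]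
        have h1 : f₀ e < r := hlt e
        rw [hrK] at h1
        have hle : K * f₀ e ≤ K * (4*kR/K) := mul_le_mul_of_nonneg_left (le_of_lt h1) (le_of_lt hK0)
        have h2 : K * (4*kR/K) = 4*kR := by field_simp
        rw [h2] at hle
        simp only [hxdef]
        exact hle
  obtain ⟨z, hzb, hzd⟩ := exists_int_flow D₀ hne₀ l u x hlb hub
    (fun v => ⟨0, by rw [hdvgx v]; norm_num⟩)
  have hz0 : ∀ v, dvg D₀ z v = 0 := by
    intro v
    have h1 := (hzd v).trans (hdvgx v)
    rw [dvg_intCast] at h1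
    exact_mod_cast h1
  -- Step 4 : subtract 4k from the big negative edges
  set L : Finset E := univ.filter (fun e => σ e = false ∧ ¬ (x e ≤ 1)) with hLdef
  set y : E → ℤ := fun e => z e - 4*(k:ℤ) * (if e ∈ L then 1 else 0) with hydef
  set sV : V → ℤ := fun v => - netDeg D₀ L v with hsVdef
  have hyd : ∀ v, dvg D₀ y v = 4*(k:ℤ) * sV v := by
    intro v
    rw [hydef]
    have h1 : dvg D₀ (fun e => z e - 4*(k:ℤ) * (if e ∈ L then 1 else 0)) v
        = dvg D₀ z v - dvg D₀ (fun e => 4*(k:ℤ) * (if e ∈ L then 1 else 0)) v :=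
      dvg_sub D₀ _ _ v
    rw [h1, hz0, dvg_mul, ← netDeg_eq_dvg, hsVdef]
    ring
  have hyb : ∀ e, (σ e = true → 2*(k:ℤ)-1 ≤ y e ∧ y e ≤ 2*k+1)
      ∧ (σ e = false → -1 ≤ y e ∧ y e ≤ 1) := by
    intro e
    have hb1 := (hzb e).1
    have hb2 := (hzb e).2
    constructor
    · intro hσ
      have hnL : e ∉ L := by simp [hLdef, hσ]
      simp only [hydef, if_neg hnL]
      simp only [hldef, if_pos hσ] at hb1
      simp only [hudef, if_pos hσ] at hb2
      omega
    · intro hσf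
      have hσ : ¬ (σ e = true) := by simp [hσf]
      by_cases hsm : x e ≤ 1
      · have hnL : e ∉ L := by simp [hLdef, hsm]
        simp only [hydef, if_neg hnL]
        simp only [hldef, if_neg hσ, if_pos hsm] at hb1
        simp only [hudef, if_neg hσ, if_pos hsm] at hb2
        omega
      · have hL : e ∈ L := by
          simp only [hLdef, Finset.mem_filter, Finset.mem_univ, true_and]
          exact ⟨hσf, hsm⟩
        simp only [hydef, if_pos hL]
        simp only [hldef, if_neg hσ, if_neg hsm] at hb1
        simp only [hudef, if_neg hσ, if_neg hsm] at hb2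
        omega
  -- Step B : make all values odd
  set W : Finset E := univ.filter (fun e => Even (y e)) with hWdef
  have hWeven : ∀ v, Even (degD D₀ W v) := by
    intro v
    have htot : Even (degD D₀ univ v) := by
      rw [← degIn_eq_degD G D₀ hD₀]; exact hEuler v
    set A := univ.filter (fun e => (D₀ e).1 = v) with hAdef
    set B := univ.filter (fun e => (D₀ e).2 = v) with hBdef
    have hAB : Disjoint A B := by
      rw [Finset.disjoint_filter]
      intro e _ h1 h2
      exact hne₀ e (h1.trans h2.symm)
    have hdy : dvg D₀ y v = ∑ e ∈ A, y e - ∑ e ∈ B, y e := by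
      unfold dvg
      rw [Finset.sum_sub_distrib]
      congr 1 <;> rw [Finset.sum_filter]
    have heven1 : Even (∑ e ∈ A, y e - ∑ e ∈ B, y e) := by
      rw [← hdy, hyd v]
      exact ⟨2*(k:ℤ)*sV v, by ring⟩
    have heven2 : Even (∑ e ∈ A, y e + ∑ e ∈ B, y e) := by
      obtain ⟨m, hm⟩ := heven1
      exact ⟨m + ∑ e ∈ B, y e, by omega⟩
    have hunion : ∑ e ∈ A ∪ B, y e = ∑ e ∈ A, y e + ∑ e ∈ B, y e :=
      Finset.sum_union hAB
    set I := univ.filter (fun e => (D₀ e).1 = v ∨ (D₀ e).2 = v) with hIdef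
    have hIAB : A ∪ B = I := by
      rw [hAdef, hBdef, hIdef, ← Finset.filter_or]
    have hevenI : Even (∑ e ∈ I, y e) := by
      rw [← hIAB, hunion]; exact heven2
    have hIsplit : ∑ e ∈ I.filter (fun e => Even (y e)), y e
        + ∑ e ∈ I.filter (fun e => ¬ Even (y e)), y e = ∑ e ∈ I, y e :=
      Finset.sum_filter_add_sum_filter_not I _ y
    have hevenpart : Even (∑ e ∈ I.filter (fun e => Even (y e)), y e) := by
      apply Finset.even_sum
      intro e he
      exact (Finset.mem_filter.mp he).2
    have hoddpart : Even (∑ e ∈ I.filter (fun e => ¬ Even (y e)), y e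
        - ((I.filter (fun e => ¬ Even (y e))).card : ℤ)) := by
      have hcard : ((I.filter (fun e => ¬ Even (y e))).card : ℤ)
          = ∑ _e ∈ I.filter (fun e => ¬ Even (y e)), (1:ℤ) := by
        rw [Finset.card_eq_sum_ones]
        push_cast
        rfl
      have hsum : ∑ e ∈ I.filter (fun e => ¬ Even (y e)), y e
          - ((I.filter (fun e => ¬ Even (y e))).card : ℤ)
          = ∑ e ∈ I.filter (fun e => ¬ Even (y e)), (y e - 1) := by
        rw [hcard, ← Finset.sum_sub_distrib]
      rw [hsum]
      apply Finset.even_sum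
      intro e he
      have hodd := (Finset.mem_filter.mp he).2
      rw [Int.not_even_iff] at hodd
      refine ⟨(y e - 1)/2, ?_⟩
      omega
    -- card of the odd part is even
    have hoddcard : Even ((I.filter (fun e => ¬ Even (y e))).card) := by
      obtain ⟨m1, hm1⟩ := hevenI
      obtain ⟨m2, hm2⟩ := hevenpart
      obtain ⟨m3, hm3⟩ := hoddpart
      rw [Nat.even_iff]
      omega
    have hWI : degD D₀ W v = (I.filter (fun e => Even (y e))).card := by
      unfold degD
      rw [hWdef, hIdef, Finset.filter_comm]
    have hIcard : (I.filter (fun e => Even (y e))).card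
        + (I.filter (fun e => ¬ Even (y e))).card = I.card :=
      Finset.card_filter_add_card_filter_not _
    have htotI : degD D₀ univ v = I.card := rfl
    rw [hWI]
    rw [Nat.even_iff] at *
    omega
  obtain ⟨ν, hν1, hν0, hνd⟩ := exists_pm_circulation D₀ hne₀ W hWeven
  set y' : E → ℤ := fun e => y e + ν e with hy'def
  have hy'd : ∀ v, dvg D₀ y' v = 4*(k:ℤ) * sV v := by
    intro v
    rw [hy'def]
    have h1 : dvg D₀ (fun e => y e + ν e) v = dvg D₀ y v + dvg D₀ ν v := dvg_add D₀ _ _ v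
    rw [h1, hyd v, hνd v, add_zero]
  set η : E → ℤ := fun e => y' e - 2*(k:ℤ) * (if σ e = true then 1 else 0) with hηdef
  have hη : ∀ e, η e = 1 ∨ η e = -1 := by
    intro e
    have hWm : e ∈ W ↔ Even (y e) := by simp [hWdef]
    have hνval : ν e = 1 ∨ ν e = -1 ∨ ν e = 0 := by
      by_cases hw : e ∈ W
      · rcases hν1 e hw with h1 | h1
        · exact Or.inl h1
        · exact Or.inr (Or.inl h1)
      · exact Or.inr (Or.inr (hν0 e hw))
    have hν0' : e ∉ W → ν e = 0 := hν0 e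
    by_cases hσ : σ e = true
    · have hb := (hyb e).1 hσ
      simp only [hηdef, hy'def, if_pos hσ]
      by_cases hw : e ∈ W
      · have hevy : Even (y e) := hWm.mp hw
        rw [Int.even_iff] at hevy
        rcases hν1 e hw with h1 | h1 <;> rw [h1] <;> omega
      · have hodd : ¬ Even (y e) := fun hc => hw (hWm.mpr hc)
        rw [Int.not_even_iff] at hodd
        rw [hν0' hw]
        omega
    · have hσf : σ e = false := by simp at hσ; exact hσ
      have hb := (hyb e).2 hσf
      simp only [hηdef, hy'def, if_neg hσ]
      by_cases hw : e ∈ W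
      · have hevy : Even (y e) := hWm.mp hw
        rw [Int.even_iff] at hevy
        rcases hν1 e hw with h1 | h1 <;> rw [h1] <;> omega
      · have hodd : ¬ Even (y e) := fun hc => hw (hWm.mpr hc)
        rw [Int.not_even_iff] at hodd
        rw [hν0' hw]
        omega
  -- Step 5/6 : the new orientation
  set D' : E → V × V := fun e => if η e = 1 then D₀ e else ((D₀ e).2, (D₀ e).1) with hD'def
  have hflip' : ∀ e, D' e = D₀ e ∨ D' e = ((D₀ e).2, (D₀ e).1) := by
    intro e
    by_cases hηe : η e = 1
    · left; simp [hD'def, hηe]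
    · right; simp [hD'def, hηe]
  have hD' : IsOrientation G D' := isOrientation_of_flip G D₀ D' hD₀ hflip'
  have hne' : ∀ e, (D' e).1 ≠ (D' e).2 := ne_of_isOrientation G D' hD'
  set M : V → ℤ := fun v => 2 * sV v - netDeg D₀ (posEdges E σ) v with hMdef
  have hone : (fun e => if e ∈ (univ : Finset E) then (1:ℤ) else 0) = (fun _ => (1:ℤ)) := by
    funext e; rw [if_pos (Finset.mem_univ e)]
  have hA : ∀ v, netDeg D' univ v = 2*(k:ℤ) * M v := by
    intro v
    rw [netDeg_eq_dvg, hone]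
    have h1 : dvg D' (fun _ => (1:ℤ)) v = dvg D₀ η v := by
      apply dvg_reorient
      intro e
      by_cases hηe : η e = 1
      · left; exact ⟨by simp [hD'def, hηe], hηe.symm⟩
      · right
        have hηe2 : η e = -1 := by rcases hη e with h1 | h1; exact absurd h1 hηe; exact h1
        exact ⟨by simp [hD'def, hηe], by rw [hηe2]; ring⟩
    rw [h1]
    have h2 : dvg D₀ η v = dvg D₀ y' v - dvg D₀ (fun e => 2*(k:ℤ) * (if σ e = true then 1 else 0)) v := by
      rw [hηdef, ← dvg_sub]
    have h3 : (fun e => if σ e = true then (1:ℤ) else 0)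
        = (fun e => if e ∈ posEdges E σ then (1:ℤ) else 0) := by
      funext e
      congr 1
      simp [posEdges]
    rw [h2, hy'd v, dvg_mul, h3, ← netDeg_eq_dvg, hMdef]
    ring
  -- Step 7 : find the subset B
  have hkR0 : (0:ℝ) < 2 * kR := by linarith
  obtain ⟨b, hb01, hbd⟩ := exists_int_flow D' hne' (fun _ => 0) (fun _ => 1)
    (fun _ => 1/(2*kR))
    (by intro e; push_cast; positivity)
    (by intro e; push_cast; rw [div_le_one hkR0]; linarith)
    (by
      intro v
      refine ⟨M v, ?_⟩
      have h1 : dvg D' (fun _ => (1/(2*kR) : ℝ)) v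
          = (1/(2*kR)) * dvg D' (fun e => (((fun _ => (1:ℤ)) e : ℤ) : ℝ)) v := by
        rw [← dvg_mul]
        apply Finset.sum_congr rfl
        intro e _
        norm_num
      rw [h1, dvg_intCast]
      have h2 : dvg D' (fun _ => (1:ℤ)) v = 2*(k:ℤ) * M v := by
        rw [← hone, ← netDeg_eq_dvg]
        exact hA v
      rw [h2]
      push_cast
      rw [← hkRdef]
      field_simp
      try ring)
  have hbM : ∀ v, dvg D' b v = M v := by
    intro v
    have h1 := hbd v
    have h2 : dvg D' (fun _ => (1/(2*kR) : ℝ)) v = ((M v : ℤ) : ℝ) := by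
      have h3 : dvg D' (fun _ => (1/(2*kR) : ℝ)) v
          = (1/(2*kR)) * dvg D' (fun e => (((fun _ => (1:ℤ)) e : ℤ) : ℝ)) v := by
        rw [← dvg_mul]
        apply Finset.sum_congr rfl
        intro e _
        norm_num
      rw [h3, dvg_intCast]
      have h4 : dvg D' (fun _ => (1:ℤ)) v = 2*(k:ℤ) * M v := by
        rw [← hone, ← netDeg_eq_dvg]
        exact hA v
      rw [h4]
      push_cast
      rw [← hkRdef]
      field_simp
      try ring
    rw [h2] at h1
    rw [dvg_intCast] at h1
    exact_mod_cast h1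
  set σ' : E → Bool := fun e => decide (b e = 1) with hσ'def
  have hposmem : ∀ e, e ∈ posEdges E σ' ↔ b e = 1 := by
    intro e
    simp [posEdges, hσ'def]
  have hnegmem : ∀ e, e ∈ negEdges E σ' ↔ b e = 0 := by
    intro e
    simp only [negEdges, Finset.mem_filter, Finset.mem_univ, true_and, hσ'def]
    have := hb01 e
    constructor
    · intro h1
      simp at h1
      omega
    · intro h1
      simp [h1]
  have hindpos : (fun e => if e ∈ posEdges E σ' then (1:ℤ) else 0) = b := by
    funext e
    have := hb01 e
    by_cases hbe : b e = 1
    · rw [if_pos ((hposmem e).mpr hbe), hbe]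
    · have hb0 : b e = 0 := by omega
      rw [if_neg (fun hc => hbe ((hposmem e).mp hc)), hb0]
  have hMpos : ∀ v, netDeg D' (posEdges E σ') v = M v := by
    intro v
    rw [netDeg_eq_dvg, hindpos]
    exact hbM v
  have hindneg : (fun e => if e ∈ negEdges E σ' then (1:ℤ) else 0) = (fun e => 1 - b e) := by
    funext e
    have := hb01 e
    by_cases hbe : b e = 1
    · rw [if_neg (fun hc => by have h0 := (hnegmem e).mp hc; omega), hbe]
      ring
    · have hb0 : b e = 0 := by omega
      rw [if_pos ((hnegmem e).mpr hb0), hb0]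
      ring
  have hMneg : ∀ v, netDeg D' (negEdges E σ') v = 2*(k:ℤ) * M v - M v := by
    intro v
    rw [netDeg_eq_dvg, hindneg]
    have h1 : dvg D' (fun e => 1 - b e) v = dvg D' (fun _ => (1:ℤ)) v - dvg D' b v :=
      dvg_sub D' _ _ v
    rw [h1, hbM v]
    have h2 : dvg D' (fun _ => (1:ℤ)) v = 2*(k:ℤ) * M v := by
      rw [← hone, ← netDeg_eq_dvg]
      exact hA v
    rw [h2]
  -- assemble
  refine ⟨σ', ?_, D', hD', ?_⟩
  · -- InversingEquiv
    intro v
    rw [degIn_eq_degD G D₀ hD₀]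
    rw [degD_symmDiff_parity]
    have hcover : posEdges E σ ∪ negEdges E σ = univ := by
      ext e
      simp only [Finset.mem_union, posEdges, negEdges, Finset.mem_filter, Finset.mem_univ,
        true_and, iff_true]
      cases σ e <;> simp
    have hdisj : Disjoint (posEdges E σ) (negEdges E σ) := by
      rw [Finset.disjoint_left]
      intro e he1 he2
      simp only [posEdges, Finset.mem_filter, Finset.mem_univ, true_and] at he1
      simp only [negEdges, Finset.mem_filter, Finset.mem_univ, true_and] at he2
      rw [he1] at he2
      exact Bool.noConfusion he2
    have ht1 : degD D₀ (posEdges E σ) v + degD D₀ (negEdges E σ) v = degD D₀ univ v := by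
      rw [← hcover]
      exact (degD_union D₀ _ _ hdisj v).symm
    have hcover' : posEdges E σ' ∪ negEdges E σ' = univ := by
      ext e
      simp only [Finset.mem_union, posEdges, negEdges, Finset.mem_filter, Finset.mem_univ,
        true_and, iff_true]
      cases σ' e <;> simp
    have hdisj' : Disjoint (posEdges E σ') (negEdges E σ') := by
      rw [Finset.disjoint_left]
      intro e he1 he2
      simp only [posEdges, Finset.mem_filter, Finset.mem_univ, true_and] at he1
      simp only [negEdges, Finset.mem_filter, Finset.mem_univ, true_and] at he2
      rw [he1] at he2
      exact Bool.noConfusion he2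
    have ht2 : degD D₀ (posEdges E σ') v + degD D₀ (negEdges E σ') v = degD D₀ univ v := by
      rw [← hcover']
      exact (degD_union D₀ _ _ hdisj' v).symm
    have ht3 : Even (degD D₀ univ v) := by
      rw [← degIn_eq_degD G D₀ hD₀]; exact hEuler v
    have ht4 : degD D' (posEdges E σ') v = degD D₀ (posEdges E σ') v :=
      degD_flip_eq D₀ D' hflip' _ v
    have ht5 := even_degD_sub_netDeg D' hne' (posEdges E σ') v
    have ht6 : netDeg D' (posEdges E σ') v = 2 * sV v - netDeg D₀ (posEdges E σ) v := hMpos v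
    have ht7 := even_degD_sub_netDeg D₀ hne₀ (posEdges E σ) v
    rw [Nat.even_iff]
    rw [Nat.even_iff] at ht3
    rw [Int.even_iff] at ht5 ht7
    omega
  · intro v
    rw [hMpos v, hMneg v]
    ring
end Dir2

/-- A signed Eulerian graph admits a circular `4k/(2k-1)`-flow iff it admits a
modulo `2k`-orientation. -/
theorem eulerian_circular_flow_iff_mod2k_orientation [Fintype E]
    (G : Multigraph V E) (σ : E → Bool) (k : ℕ) (hk : 1 ≤ k)
    (hEuler : ∀ v, Even (degIn G univ v)) :
    (∃ (D : E → V × V) (f : E → ℝ),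
        IsCircularFlow G σ ((4 * k : ℝ) / (2 * k - 1)) D f) ↔
      HasModuloOrientation G σ (2 * (k : ℤ)) := by
  constructor
  · exact flow_to_mod G σ k hk hEuler
  · exact mod_to_flow G σ k hk
end
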